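/- arXiv:2008.13322 — 6 statements merged into one kernel-verified Lean document; each statement's English description precedes it below -/
import Mathlib

section
/- For every positive integer n, the sum of the 7th powers of the divisors of n equals the sum of the 3rd powers of the divisors of n plus 120 times the sum over i from 1 to n-1 of (sum of cubes of divisors of i) times (sum of cubes of divisors of n-i). In symbols: σ₇(n) = σ₃(n) + 120·∑_{i=1}^{n-1} σ₃(i)σ₃(n−i). -/
open Finset

namespace Sigma7Liouville

abbrev Quad := ℕ × ℕ × ℕ × ℕ

/-- The set of quadruples `(a,b,x,y)` of positive integers with `a*x + b*y = n`. -/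
def T (n : ℕ) : Finset Quad :=
  (range (n + 1) ×ˢ range (n + 1) ×ˢ range (n + 1) ×ˢ range (n + 1)).filter
    fun p => 0 < p.1 ∧ 0 < p.2.1 ∧ 0 < p.2.2.1 ∧ 0 < p.2.2.2 ∧
      p.1 * p.2.2.1 + p.2.1 * p.2.2.2 = n

lemma mem_T {n : ℕ} {p : Quad} :
    p ∈ T n ↔ 0 < p.1 ∧ 0 < p.2.1 ∧ 0 < p.2.2.1 ∧ 0 < p.2.2.2 ∧
      p.1 * p.2.2.1 + p.2.1 * p.2.2.2 = n := by
  obtain ⟨a, b, x, y⟩ := p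
  simp only [T, mem_filter, mem_product, mem_range]
  constructor
  · tauto
  · rintro ⟨ha, hb, hx, hy, he⟩
    have h1 : a ≤ a * x := Nat.le_mul_of_pos_right a hx
    have h2 : x ≤ a * x := Nat.le_mul_of_pos_left x ha
    have h3 : b ≤ b * y := Nat.le_mul_of_pos_right b hy
    have h4 : y ≤ b * y := Nat.le_mul_of_pos_left y hb
    refine ⟨⟨?_, ?_, ?_, ?_⟩, ha, hb, hx, hy, he⟩ <;> omega

lemma mem_T' {n a b x y : ℕ} :
    ((a, b, x, y) : Quad) ∈ T n ↔ 0 < a ∧ 0 < b ∧ 0 < x ∧ 0 < y ∧ a * x + b * y = n :=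
  mem_T

/-- Liouville's fundamental bijection: the part of `T n` with `b < a` is in bijection
with the part with `x < y`, via `(a,b,x,y) ↦ (a-b, b, x, x+y)`. -/
lemma engine (n : ℕ) (F : Quad → ℤ) :
    ∑ p ∈ (T n).filter (fun p => p.2.1 < p.1), F p
      = ∑ p ∈ (T n).filter (fun p => p.2.2.1 < p.2.2.2),
          F (p.1 + p.2.1, p.2.1, p.2.2.1, p.2.2.2 - p.2.2.1) := by
  refine Finset.sum_bij'
    (fun p _ => ((p.1 - p.2.1, p.2.1, p.2.2.1, p.2.2.1 + p.2.2.2) : Quad))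
    (fun p _ => ((p.1 + p.2.1, p.2.1, p.2.2.1, p.2.2.2 - p.2.2.1) : Quad))
    ?_ ?_ ?_ ?_ ?_
  · rintro ⟨a, b, x, y⟩ hp
    dsimp only at hp ⊢
    obtain ⟨hT, hba⟩ := mem_filter.mp hp
    obtain ⟨ha, hb, hx, hy, he⟩ := mem_T'.mp hT
    replace hba : b < a := hba
    refine mem_filter.mpr ⟨mem_T'.mpr ⟨by omega, hb, hx, by omega, ?_⟩, by show x < x + y; omega⟩
    show (a - b) * x + b * (x + y) = n
    have h1 : (a - b) * x + b * (x + y) = ((a - b) + b) * x + b * y := by ring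
    rw [h1, Nat.sub_add_cancel hba.le]
    exact he
  · rintro ⟨a, b, x, y⟩ hp
    dsimp only at hp ⊢
    obtain ⟨hT, hxy⟩ := mem_filter.mp hp
    obtain ⟨ha, hb, hx, hy, he⟩ := mem_T'.mp hT
    replace hxy : x < y := hxy
    refine mem_filter.mpr ⟨mem_T'.mpr ⟨by omega, hb, hx, by omega, ?_⟩, by show b < a + b; omega⟩
    show (a + b) * x + b * (y - x) = n
    have h1 : (a + b) * x + b * (y - x) = a * x + b * (x + (y - x)) := by ring
    rw [h1, Nat.add_sub_cancel' hxy.le]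
    exact he
  · rintro ⟨a, b, x, y⟩ hp
    dsimp only at hp ⊢
    obtain ⟨hT, hba⟩ := mem_filter.mp hp
    replace hba : b < a := hba
    show ((a - b + b, b, x, x + y - x) : Quad) = (a, b, x, y)
    simp only [Prod.mk.injEq, true_and, and_true]
    omega
  · rintro ⟨a, b, x, y⟩ hp
    dsimp only at hp ⊢
    obtain ⟨hT, hxy⟩ := mem_filter.mp hp
    replace hxy : x < y := hxy
    show ((a + b - b, b, x, x + (y - x)) : Quad) = (a, b, x, y)
    simp only [Prod.mk.injEq, true_and, and_true]
    omega
  · rintro ⟨a, b, x, y⟩ hp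
    dsimp only at hp ⊢
    obtain ⟨hT, hba⟩ := mem_filter.mp hp
    replace hba : b < a := hba
    show F (a, b, x, y) = F (a - b + b, b, x, x + y - x)
    have h1 : ((a - b + b, b, x, x + y - x) : Quad) = ((a, b, x, y) : Quad) := by
      simp only [Prod.mk.injEq, true_and, and_true]
      omega
    rw [h1]

/-- The swap `(a,b,x,y) ↦ (b,a,y,x)`. -/
def sw (p : Quad) : Quad := (p.2.1, p.1, p.2.2.2, p.2.2.1)

lemma swap_sum (n : ℕ) (F : Quad → ℤ) (P : Quad → Prop) [DecidablePred P] :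
    ∑ p ∈ (T n).filter P, F p = ∑ p ∈ (T n).filter (fun p => P (sw p)), F (sw p) := by
  refine Finset.sum_bij' (fun p _ => sw p) (fun p _ => sw p) ?_ ?_ ?_ ?_ ?_
  · rintro ⟨a, b, x, y⟩ hp
    dsimp only [sw] at hp ⊢
    obtain ⟨hT, hP⟩ := mem_filter.mp hp
    obtain ⟨ha, hb, hx, hy, he⟩ := mem_T'.mp hT
    exact mem_filter.mpr ⟨mem_T'.mpr ⟨hb, ha, hy, hx, by omega⟩, hP⟩
  · rintro ⟨a, b, x, y⟩ hp
    dsimp only [sw] at hp ⊢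
    obtain ⟨hT, hP⟩ := mem_filter.mp hp
    obtain ⟨ha, hb, hx, hy, he⟩ := mem_T'.mp hT
    exact mem_filter.mpr ⟨mem_T'.mpr ⟨hb, ha, hy, hx, by omega⟩, hP⟩
  · rintro ⟨a, b, x, y⟩ _; rfl
  · rintro ⟨a, b, x, y⟩ _; rfl
  · rintro ⟨a, b, x, y⟩ _; rfl

lemma trichotomy (n : ℕ) (F : Quad → ℤ) (k l : Quad → ℕ) :
    ∑ p ∈ T n, F p =
      ∑ p ∈ (T n).filter (fun p => k p < l p), F p
      + ∑ p ∈ (T n).filter (fun p => k p = l p), F p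
      + ∑ p ∈ (T n).filter (fun p => l p < k p), F p := by
  classical
  rw [← Finset.sum_filter_add_sum_filter_not (T n) (fun p => k p < l p) F]
  have h2 := Finset.sum_filter_add_sum_filter_not
    ((T n).filter (fun p => ¬ k p < l p)) (fun p => k p = l p) F
  rw [Finset.filter_filter, Finset.filter_filter] at h2
  have e1 : (T n).filter (fun p => ¬ k p < l p ∧ k p = l p)
      = (T n).filter (fun p => k p = l p) :=
    Finset.filter_congr (fun p _ => by omega)
  have e2 : (T n).filter (fun p => ¬ k p < l p ∧ ¬ k p = l p)
      = (T n).filter (fun p => l p < k p) :=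
    Finset.filter_congr (fun p _ => by omega)
  rw [e1, e2] at h2
  rw [← h2, add_assoc]

/-- Fibering `T n` over `i = a*x` turns the sum into a convolution of divisor sums. -/
lemma conv (n : ℕ) :
    ∑ p ∈ T n, ((p.2.2.1 : ℤ) ^ 3 * (p.2.2.2 : ℤ) ^ 3)
      = ∑ i ∈ Ico 1 n, (∑ d ∈ Nat.divisors i, (d : ℤ) ^ 3)
          * (∑ d ∈ Nat.divisors (n - i), (d : ℤ) ^ 3) := by
  have hmap : ∀ p ∈ T n, p.1 * p.2.2.1 ∈ Ico 1 n := by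
    rintro ⟨a, b, x, y⟩ hp
    dsimp only at hp ⊢
    obtain ⟨ha, hb, hx, hy, he⟩ := mem_T'.mp hp
    have h1 : 0 < a * x := Nat.mul_pos ha hx
    have h2 : 0 < b * y := Nat.mul_pos hb hy
    show a * x ∈ Ico 1 n
    simp only [mem_Ico]
    omega
  rw [← Finset.sum_fiberwise_of_maps_to hmap
    (fun p : Quad => ((p.2.2.1 : ℤ) ^ 3 * (p.2.2.2 : ℤ) ^ 3))]
  refine Finset.sum_congr rfl (fun i hi => ?_)
  obtain ⟨hi1, hi2⟩ := mem_Ico.mp hi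
  rw [← Nat.sum_divisorsAntidiagonal' (fun _ x => (x : ℤ) ^ 3) (n := i),
      ← Nat.sum_divisorsAntidiagonal' (fun _ x => (x : ℤ) ^ 3) (n := n - i),
      Finset.sum_mul_sum, ← Finset.sum_product']
  refine Finset.sum_bij'
    (fun p _ => (((p.1, p.2.2.1), (p.2.1, p.2.2.2)) : (ℕ × ℕ) × (ℕ × ℕ)))
    (fun w _ => ((w.1.1, w.2.1, w.1.2, w.2.2) : Quad)) ?_ ?_ ?_ ?_ ?_
  · rintro ⟨a, b, x, y⟩ hp
    dsimp only at hp ⊢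
    obtain ⟨hT, hax⟩ := mem_filter.mp hp
    obtain ⟨ha, hb, hx, hy, he⟩ := mem_T'.mp hT
    replace hax : a * x = i := hax
    simp only [mem_product, Nat.mem_divisorsAntidiagonal]
    exact ⟨⟨hax, by omega⟩, by omega, by omega⟩
  · rintro ⟨⟨a, x⟩, ⟨b, y⟩⟩ hw
    dsimp only at hw ⊢
    simp only [mem_product, Nat.mem_divisorsAntidiagonal] at hw
    obtain ⟨⟨hax, hi0⟩, hby, hni0⟩ := hw
    have ha : 0 < a := Nat.pos_of_ne_zero (by rintro rfl; simp at hax; omega)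
    have hx : 0 < x := Nat.pos_of_ne_zero (by rintro rfl; simp at hax; omega)
    have hb : 0 < b := Nat.pos_of_ne_zero (by rintro rfl; simp at hby; omega)
    have hy : 0 < y := Nat.pos_of_ne_zero (by rintro rfl; simp at hby; omega)
    refine mem_filter.mpr ⟨mem_T'.mpr ⟨ha, hb, hx, hy, by omega⟩, ?_⟩
    show a * x = i
    exact hax
  · rintro ⟨a, b, x, y⟩ _; rfl
  · rintro ⟨⟨a, x⟩, ⟨b, y⟩⟩ _; rfl
  · rintro ⟨a, b, x, y⟩ _; rfl

/-- The diagonal `a = b` of `T n`, fibered over the divisor `d = a`. -/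
lemma diag_ab (n : ℕ) (hn : 0 < n) (F : Quad → ℤ) :
    ∑ p ∈ (T n).filter (fun p => p.1 = p.2.1), F p
      = ∑ d ∈ n.divisors, ∑ j ∈ Ico 1 (n / d), F (d, d, j, n / d - j) := by
  have hmap : ∀ p ∈ (T n).filter (fun p => p.1 = p.2.1), p.1 ∈ n.divisors := by
    rintro ⟨a, b, x, y⟩ hp
    dsimp only at hp ⊢
    obtain ⟨hT, hab⟩ := mem_filter.mp hp
    obtain ⟨ha, hb, hx, hy, he⟩ := mem_T'.mp hT
    replace hab : a = b := hab
    subst hab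
    show a ∈ n.divisors
    refine Nat.mem_divisors.mpr ⟨⟨x + y, ?_⟩, by omega⟩
    rw [Nat.mul_add]
    omega
  rw [← Finset.sum_fiberwise_of_maps_to hmap F]
  refine Finset.sum_congr rfl (fun d hd => ?_)
  obtain ⟨hdvd, hn0⟩ := Nat.mem_divisors.mp hd
  have hd0 : 0 < d := Nat.pos_of_dvd_of_pos hdvd hn
  have hde : d * (n / d) = n := Nat.mul_div_cancel' hdvd
  refine Finset.sum_bij' (fun p _ => p.2.2.1)
    (fun j _ => ((d, d, j, n / d - j) : Quad)) ?_ ?_ ?_ ?_ ?_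
  · rintro ⟨a, b, x, y⟩ hp
    dsimp only at hp ⊢
    simp only [mem_filter] at hp
    obtain ⟨⟨hT, hab⟩, had⟩ := hp
    obtain ⟨ha, hb, hx, hy, he⟩ := mem_T'.mp hT
    replace hab : a = b := hab
    replace had : a = d := had
    subst had; subst hab
    have hxy : a * (x + y) = n := by rw [Nat.mul_add]; omega
    have hq : n / a = x + y := by
      rw [← hxy]; exact Nat.mul_div_cancel_left _ ha
    show x ∈ Ico 1 (n / a)
    simp only [mem_Ico]
    omega
  · rintro j hj
    obtain ⟨hj1, hj2⟩ := mem_Ico.mp hj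
    refine mem_filter.mpr ⟨mem_filter.mpr ⟨mem_T'.mpr ⟨hd0, hd0, by omega, by omega, ?_⟩,
      rfl⟩, rfl⟩
    have h1 : d * j + d * (n / d - j) = d * (j + (n / d - j)) := (Nat.mul_add _ _ _).symm
    rw [h1]
    have h2 : j + (n / d - j) = n / d := by omega
    rw [h2, hde]
  · rintro ⟨a, b, x, y⟩ hp
    dsimp only at hp ⊢
    simp only [mem_filter] at hp
    obtain ⟨⟨hT, hab⟩, had⟩ := hp
    obtain ⟨ha, hb, hx, hy, he⟩ := mem_T'.mp hT
    replace hab : a = b := hab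
    replace had : a = d := had
    subst had; subst hab
    have hxy : a * (x + y) = n := by rw [Nat.mul_add]; omega
    have hq : n / a = x + y := by
      rw [← hxy]; exact Nat.mul_div_cancel_left _ ha
    show ((a, a, x, n / a - x) : Quad) = (a, a, x, y)
    simp only [Prod.mk.injEq, true_and, and_true]
    omega
  · rintro j hj; rfl
  · rintro ⟨a, b, x, y⟩ hp
    dsimp only at hp ⊢
    simp only [mem_filter] at hp
    obtain ⟨⟨hT, hab⟩, had⟩ := hp
    obtain ⟨ha, hb, hx, hy, he⟩ := mem_T'.mp hT
    replace hab : a = b := hab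
    replace had : a = d := had
    subst had; subst hab
    have hxy : a * (x + y) = n := by rw [Nat.mul_add]; omega
    have hq : n / a = x + y := by
      rw [← hxy]; exact Nat.mul_div_cancel_left _ ha
    show F (a, a, x, y) = F (a, a, x, n / a - x)
    have h1 : ((a, a, x, n / a - x) : Quad) = ((a, a, x, y) : Quad) := by
      simp only [Prod.mk.injEq, true_and, and_true]
      omega
    rw [h1]

/-- The diagonal `x = y` of `T n`, fibered over the divisor `d = x`. -/
lemma diag_xy (n : ℕ) (hn : 0 < n) (F : Quad → ℤ) :
    ∑ p ∈ (T n).filter (fun p => p.2.2.1 = p.2.2.2), F p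
      = ∑ d ∈ n.divisors, ∑ j ∈ Ico 1 (n / d), F (j, n / d - j, d, d) := by
  have hmap : ∀ p ∈ (T n).filter (fun p => p.2.2.1 = p.2.2.2), p.2.2.1 ∈ n.divisors := by
    rintro ⟨a, b, x, y⟩ hp
    dsimp only at hp ⊢
    obtain ⟨hT, hxy⟩ := mem_filter.mp hp
    obtain ⟨ha, hb, hx, hy, he⟩ := mem_T'.mp hT
    replace hxy : x = y := hxy
    subst hxy
    show x ∈ n.divisors
    have he' : x * a + x * b = n := by
      rw [Nat.mul_comm x a, Nat.mul_comm x b]; exact he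
    refine Nat.mem_divisors.mpr ⟨⟨a + b, ?_⟩, by omega⟩
    rw [Nat.mul_add]
    omega
  rw [← Finset.sum_fiberwise_of_maps_to hmap F]
  refine Finset.sum_congr rfl (fun d hd => ?_)
  obtain ⟨hdvd, hn0⟩ := Nat.mem_divisors.mp hd
  have hd0 : 0 < d := Nat.pos_of_dvd_of_pos hdvd hn
  have hde : d * (n / d) = n := Nat.mul_div_cancel' hdvd
  refine Finset.sum_bij' (fun p _ => p.1)
    (fun j _ => ((j, n / d - j, d, d) : Quad)) ?_ ?_ ?_ ?_ ?_
  · rintro ⟨a, b, x, y⟩ hp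
    dsimp only at hp ⊢
    simp only [mem_filter] at hp
    obtain ⟨⟨hT, hxy⟩, hxd⟩ := hp
    obtain ⟨ha, hb, hx, hy, he⟩ := mem_T'.mp hT
    replace hxy : x = y := hxy
    replace hxd : x = d := hxd
    subst hxd; subst hxy
    have he' : x * a + x * b = n := by
      rw [Nat.mul_comm x a, Nat.mul_comm x b]; exact he
    have hab : x * (a + b) = n := by rw [Nat.mul_add]; omega
    have hq : n / x = a + b := by
      rw [← hab]; exact Nat.mul_div_cancel_left _ hx
    show a ∈ Ico 1 (n / x)
    simp only [mem_Ico]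
    omega
  · rintro j hj
    obtain ⟨hj1, hj2⟩ := mem_Ico.mp hj
    refine mem_filter.mpr ⟨mem_filter.mpr ⟨mem_T'.mpr ⟨by omega, by omega, hd0, hd0, ?_⟩,
      rfl⟩, rfl⟩
    have h1 : j * d + (n / d - j) * d = (j + (n / d - j)) * d := (Nat.add_mul _ _ _).symm
    rw [h1]
    have h2 : j + (n / d - j) = n / d := by omega
    rw [h2, Nat.mul_comm, hde]
  · rintro ⟨a, b, x, y⟩ hp
    dsimp only at hp ⊢
    simp only [mem_filter] at hp
    obtain ⟨⟨hT, hxy⟩, hxd⟩ := hp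
    obtain ⟨ha, hb, hx, hy, he⟩ := mem_T'.mp hT
    replace hxy : x = y := hxy
    replace hxd : x = d := hxd
    subst hxd; subst hxy
    have he' : x * a + x * b = n := by
      rw [Nat.mul_comm x a, Nat.mul_comm x b]; exact he
    have hab : x * (a + b) = n := by rw [Nat.mul_add]; omega
    have hq : n / x = a + b := by
      rw [← hab]; exact Nat.mul_div_cancel_left _ hx
    show ((a, n / x - a, x, x) : Quad) = (a, b, x, x)
    simp only [Prod.mk.injEq, true_and, and_true]
    omega
  · rintro j hj; rfl
  · rintro ⟨a, b, x, y⟩ hp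
    dsimp only at hp ⊢
    simp only [mem_filter] at hp
    obtain ⟨⟨hT, hxy⟩, hxd⟩ := hp
    obtain ⟨ha, hb, hx, hy, he⟩ := mem_T'.mp hT
    replace hxy : x = y := hxy
    replace hxd : x = d := hxd
    subst hxd; subst hxy
    have he' : x * a + x * b = n := by
      rw [Nat.mul_comm x a, Nat.mul_comm x b]; exact he
    have hab : x * (a + b) = n := by rw [Nat.mul_add]; omega
    have hq : n / x = a + b := by
      rw [← hab]; exact Nat.mul_div_cancel_left _ hx
    show F (a, b, x, x) = F (a, n / x - a, x, x)
    have h1 : ((a, n / x - a, x, x) : Quad) = ((a, b, x, x) : Quad) := by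
      simp only [Prod.mk.injEq, true_and, and_true]
      omega
    rw [h1]

lemma ps2 (e : ℕ) : 6 * ∑ j ∈ range e, (j : ℤ) ^ 2
    = (e : ℤ) * ((e : ℤ) - 1) * (2 * (e : ℤ) - 1) := by
  induction e with
  | zero => simp
  | succ m ih =>
    rw [Finset.sum_range_succ, mul_add]
    push_cast
    linear_combination ih

lemma ps3 (e : ℕ) : 4 * ∑ j ∈ range e, (j : ℤ) ^ 3
    = (e : ℤ) ^ 2 * ((e : ℤ) - 1) ^ 2 := by
  induction e with
  | zero => simp
  | succ m ih =>
    rw [Finset.sum_range_succ, mul_add]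
    push_cast
    linear_combination ih

lemma ps4 (e : ℕ) : 30 * ∑ j ∈ range e, (j : ℤ) ^ 4
    = (e : ℤ) * ((e : ℤ) - 1) * (2 * (e : ℤ) - 1) * (3 * (e : ℤ) ^ 2 - 3 * (e : ℤ) - 1) := by
  induction e with
  | zero => simp
  | succ m ih =>
    rw [Finset.sum_range_succ, mul_add]
    push_cast
    linear_combination ih

lemma faul (e : ℕ) :
    30 * ∑ j ∈ Ico 1 e, ((j : ℤ) ^ 2 * ((e : ℤ) - (j : ℤ)) ^ 2) = (e : ℤ) ^ 5 - (e : ℤ) := by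
  have hr : ∑ j ∈ Ico 1 e, ((j : ℤ) ^ 2 * ((e : ℤ) - (j : ℤ)) ^ 2)
      = ∑ j ∈ range e, ((j : ℤ) ^ 2 * ((e : ℤ) - (j : ℤ)) ^ 2) := by
    rcases Nat.eq_zero_or_pos e with he | he
    · subst he; simp
    · rw [Finset.range_eq_Ico, Finset.sum_eq_sum_Ico_succ_bot he]
      simp
  rw [hr]
  have expand : ∑ j ∈ range e, ((j : ℤ) ^ 2 * ((e : ℤ) - (j : ℤ)) ^ 2)
      = (e : ℤ) ^ 2 * (∑ j ∈ range e, (j : ℤ) ^ 2)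
        - 2 * (e : ℤ) * (∑ j ∈ range e, (j : ℤ) ^ 3)
        + ∑ j ∈ range e, (j : ℤ) ^ 4 := by
    rw [Finset.mul_sum, Finset.mul_sum, ← Finset.sum_sub_distrib, ← Finset.sum_add_distrib]
    exact Finset.sum_congr rfl (fun j _ => by ring)
  rw [expand]
  linear_combination (5 * (e : ℤ) ^ 2) * ps2 e - (15 * (e : ℤ)) * ps3 e + ps4 e

end Sigma7Liouville

open Sigma7Liouville in
/-- σ₇(n) = σ₃(n) + 120·∑_{i=1}^{n-1} σ₃(i)σ₃(n−i) for every positive integer n. -/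
theorem sigma7_eq_sigma3_add_convolution (n : ℕ) (hn : 0 < n) :
    (∑ d ∈ n.divisors, d ^ 7) =
      (∑ d ∈ n.divisors, d ^ 3) +
        120 * ∑ i ∈ Finset.Ico 1 n,
          (∑ d ∈ i.divisors, d ^ 3) * (∑ d ∈ (n - i).divisors, d ^ 3) := by
  classical
  -- the two weight functions
  set G : Quad → ℤ := fun p =>
    (p.2.2.1 : ℤ) ^ 2 * (p.2.2.2 : ℤ) ^ 2 * ((p.2.2.1 : ℤ) + (p.2.2.2 : ℤ)) ^ 2 with hG
  set C : Quad → ℤ := fun p => (p.2.2.1 : ℤ) ^ 3 * (p.2.2.2 : ℤ) ^ 3 with hC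
  -- trichotomy in (a,b) for G
  have t_ab : ∑ p ∈ T n, G p =
      ∑ p ∈ (T n).filter (fun p => p.1 < p.2.1), G p
      + ∑ p ∈ (T n).filter (fun p => p.1 = p.2.1), G p
      + ∑ p ∈ (T n).filter (fun p => p.2.1 < p.1), G p :=
    trichotomy n G (fun p => p.1) (fun p => p.2.1)
  -- swap symmetry: a<b side equals b<a side for G
  have sw_ab : ∑ p ∈ (T n).filter (fun p => p.1 < p.2.1), G p
      = ∑ p ∈ (T n).filter (fun p => p.2.1 < p.1), G p := by
    rw [swap_sum n G (fun p => p.1 < p.2.1)]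
    refine Finset.sum_congr rfl (fun p _ => ?_)
    simp only [hG, sw]
    ring
  -- trichotomy in (x,y) for G
  have t_xyG : ∑ p ∈ T n, G p =
      ∑ p ∈ (T n).filter (fun p => p.2.2.1 < p.2.2.2), G p
      + ∑ p ∈ (T n).filter (fun p => p.2.2.1 = p.2.2.2), G p
      + ∑ p ∈ (T n).filter (fun p => p.2.2.2 < p.2.2.1), G p :=
    trichotomy n G (fun p => p.2.2.1) (fun p => p.2.2.2)
  have sw_xyG : ∑ p ∈ (T n).filter (fun p => p.2.2.2 < p.2.2.1), G p
      = ∑ p ∈ (T n).filter (fun p => p.2.2.1 < p.2.2.2), G p := by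
    rw [swap_sum n G (fun p => p.2.2.2 < p.2.2.1)]
    refine Finset.sum_congr rfl (fun p _ => ?_)
    simp only [hG, sw]
    ring
  -- trichotomy in (x,y) for C
  have t_xyC : ∑ p ∈ T n, C p =
      ∑ p ∈ (T n).filter (fun p => p.2.2.1 < p.2.2.2), C p
      + ∑ p ∈ (T n).filter (fun p => p.2.2.1 = p.2.2.2), C p
      + ∑ p ∈ (T n).filter (fun p => p.2.2.2 < p.2.2.1), C p :=
    trichotomy n C (fun p => p.2.2.1) (fun p => p.2.2.2)
  have sw_xyC : ∑ p ∈ (T n).filter (fun p => p.2.2.2 < p.2.2.1), C p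
      = ∑ p ∈ (T n).filter (fun p => p.2.2.1 < p.2.2.2), C p := by
    rw [swap_sum n C (fun p => p.2.2.2 < p.2.2.1)]
    refine Finset.sum_congr rfl (fun p _ => ?_)
    simp only [hC, sw]
    ring
  -- the engine applied to G
  have eng : ∑ p ∈ (T n).filter (fun p => p.2.1 < p.1), G p
      = ∑ p ∈ (T n).filter (fun p => p.2.2.1 < p.2.2.2),
          ((p.2.2.1 : ℤ) ^ 2 * ((p.2.2.2 : ℤ) - (p.2.2.1 : ℤ)) ^ 2 * (p.2.2.2 : ℤ) ^ 2) := by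
    rw [engine n G]
    refine Finset.sum_congr rfl (fun p hp => ?_)
    obtain ⟨hT, hxy⟩ := mem_filter.mp hp
    simp only [hG]
    rw [Nat.cast_sub hxy.le]
    ring
  -- pointwise: G - shifted G = 4 C on the region x < y
  have keydiff : ∑ p ∈ (T n).filter (fun p => p.2.2.1 < p.2.2.2),
        (G p - (p.2.2.1 : ℤ) ^ 2 * ((p.2.2.2 : ℤ) - (p.2.2.1 : ℤ)) ^ 2 * (p.2.2.2 : ℤ) ^ 2)
      = ∑ p ∈ (T n).filter (fun p => p.2.2.1 < p.2.2.2), 4 * C p := by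
    refine Finset.sum_congr rfl (fun p hp => ?_)
    simp only [hG, hC]
    ring
  rw [Finset.sum_sub_distrib, ← Finset.mul_sum] at keydiff
  -- combine: 4 * ∑_T C = Dab_G - Dxy_G + 4 * Dxy_C
  have key : 4 * ∑ p ∈ T n, C p
      = ∑ p ∈ (T n).filter (fun p => p.1 = p.2.1), G p
        - ∑ p ∈ (T n).filter (fun p => p.2.2.1 = p.2.2.2), G p
        + 4 * ∑ p ∈ (T n).filter (fun p => p.2.2.1 = p.2.2.2), C p := by
    have h8 : (8 : ℤ) * ∑ p ∈ (T n).filter (fun p => p.2.2.1 < p.2.2.2), C p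
        = ∑ p ∈ (T n).filter (fun p => p.1 = p.2.1), G p
          - ∑ p ∈ (T n).filter (fun p => p.2.2.1 = p.2.2.2), G p := by
      have e1 : ∑ p ∈ T n, G p
          = 2 * ∑ p ∈ (T n).filter (fun p => p.2.2.1 < p.2.2.2),
              ((p.2.2.1 : ℤ) ^ 2 * ((p.2.2.2 : ℤ) - (p.2.2.1 : ℤ)) ^ 2 * (p.2.2.2 : ℤ) ^ 2)
            + ∑ p ∈ (T n).filter (fun p => p.1 = p.2.1), G p := by
        rw [t_ab, sw_ab, ← eng]
        ring
      have e2 : ∑ p ∈ T n, G p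
          = 2 * ∑ p ∈ (T n).filter (fun p => p.2.2.1 < p.2.2.2), G p
            + ∑ p ∈ (T n).filter (fun p => p.2.2.1 = p.2.2.2), G p := by
        rw [t_xyG, sw_xyG]
        ring
      -- subtract and use keydiff
      have := keydiff
      linarith [e1, e2, this]
    have e3 : ∑ p ∈ T n, C p
        = 2 * ∑ p ∈ (T n).filter (fun p => p.2.2.1 < p.2.2.2), C p
          + ∑ p ∈ (T n).filter (fun p => p.2.2.1 = p.2.2.2), C p := by
      rw [t_xyC, sw_xyC]
      ring
    linarith [h8, e3]
  -- evaluate the diagonals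
  rw [diag_ab n hn G, diag_xy n hn G, diag_xy n hn C] at key
  -- simplify the diagonal sums
  have dab : ∑ d ∈ n.divisors, ∑ j ∈ Ico 1 (n / d), G (d, d, j, n / d - j)
      = ∑ d ∈ n.divisors, ((n / d : ℕ) : ℤ) ^ 2
          * ∑ j ∈ Ico 1 (n / d), ((j : ℤ) ^ 2 * (((n / d : ℕ) : ℤ) - (j : ℤ)) ^ 2) := by
    refine Finset.sum_congr rfl (fun d hd => ?_)
    rw [Finset.mul_sum]
    refine Finset.sum_congr rfl (fun j hj => ?_)
    obtain ⟨hj1, hj2⟩ := mem_Ico.mp hj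
    simp only [hG]
    rw [Nat.cast_sub hj2.le]
    ring
  have dxyG : ∑ d ∈ n.divisors, ∑ j ∈ Ico 1 (n / d), G (j, n / d - j, d, d)
      = ∑ d ∈ n.divisors, ∑ j ∈ Ico 1 (n / d), 4 * (d : ℤ) ^ 6 := by
    refine Finset.sum_congr rfl (fun d hd => Finset.sum_congr rfl (fun j hj => ?_))
    simp only [hG]
    ring
  have dxyC : ∑ d ∈ n.divisors, ∑ j ∈ Ico 1 (n / d), C (j, n / d - j, d, d)
      = ∑ d ∈ n.divisors, ∑ j ∈ Ico 1 (n / d), (d : ℤ) ^ 6 := by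
    refine Finset.sum_congr rfl (fun d hd => Finset.sum_congr rfl (fun j hj => ?_))
    simp only [hC]
    ring
  rw [dab, dxyG, dxyC] at key
  -- the two x=y diagonal contributions cancel
  have cancel : ∑ d ∈ n.divisors, ∑ j ∈ Ico 1 (n / d), 4 * (d : ℤ) ^ 6
      = 4 * ∑ d ∈ n.divisors, ∑ j ∈ Ico 1 (n / d), (d : ℤ) ^ 6 := by
    rw [Finset.mul_sum]
    exact Finset.sum_congr rfl (fun d _ => by rw [Finset.mul_sum])
  have key' : 4 * ∑ p ∈ T n, C p
      = ∑ d ∈ n.divisors, ((n / d : ℕ) : ℤ) ^ 2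
          * ∑ j ∈ Ico 1 (n / d), ((j : ℤ) ^ 2 * (((n / d : ℕ) : ℤ) - (j : ℤ)) ^ 2) := by
    rw [key, cancel]
    ring
  have key2 : 120 * ∑ p ∈ T n, C p
      = ∑ d ∈ n.divisors, (((n / d : ℕ) : ℤ) ^ 7 - ((n / d : ℕ) : ℤ) ^ 3) := by
    have h30 : (120 : ℤ) * ∑ p ∈ T n, C p = 30 * (4 * ∑ p ∈ T n, C p) := by ring
    rw [h30, key', Finset.mul_sum]
    refine Finset.sum_congr rfl (fun d hd => ?_)
    linear_combination ((n / d : ℕ) : ℤ) ^ 2 * faul (n / d)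
  have key3 : 120 * ∑ p ∈ T n, C p
      = ∑ d ∈ n.divisors, ((d : ℤ) ^ 7 - (d : ℤ) ^ 3) := by
    rw [key2]
    exact Nat.sum_div_divisors n (fun d => (d : ℤ) ^ 7 - (d : ℤ) ^ 3)
  -- convert the convolution sum
  have hconv := conv n
  have final : (∑ d ∈ n.divisors, (d : ℤ) ^ 7)
      = (∑ d ∈ n.divisors, (d : ℤ) ^ 3)
        + 120 * ∑ i ∈ Finset.Ico 1 n,
            (∑ d ∈ i.divisors, (d : ℤ) ^ 3) * (∑ d ∈ (n - i).divisors, (d : ℤ) ^ 3) := by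
    have hsub : ∑ d ∈ n.divisors, ((d : ℤ) ^ 7 - (d : ℤ) ^ 3)
        = (∑ d ∈ n.divisors, (d : ℤ) ^ 7) - ∑ d ∈ n.divisors, (d : ℤ) ^ 3 :=
      Finset.sum_sub_distrib _ _
    rw [← hconv]
    have : ∑ p ∈ T n, ((p.2.2.1 : ℤ) ^ 3 * (p.2.2.2 : ℤ) ^ 3) = ∑ p ∈ T n, C p := rfl
    rw [this]
    linarith [key3, hsub]
  exact_mod_cast final
end

section
/- Let V, V' be nonzero linear subspaces of the formal power series ring ℂ[[x]], and let VV' denote the linear span of all products fg with f ∈ V, g ∈ V'. Then dim V + dim V' − 1 ≤ dim(VV'). -/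
set_option maxHeartbeats 1000000

open PowerSeries Pointwise

/-- The set of (finite) orders of nonzero elements of a subspace of `ℂ⟦X⟧`. -/
private def ordSet (W : Submodule ℂ (PowerSeries ℂ)) : Set ℕ :=
  {n | ∃ f ∈ W, f ≠ 0 ∧ f.order = (n : ℕ∞)}

/-- Elements with pairwise distinct orders are linearly independent; hence any finset
inside `ordSet W` has cardinality at most `rank W`. -/
private lemma finset_card_le_rank (W : Submodule ℂ (PowerSeries ℂ)) (s : Finset ℕ)
    (hs : ↑s ⊆ ordSet W) : (s.card : Cardinal) ≤ Module.rank ℂ W := by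
  -- choose representatives
  have hrep : ∀ i ∈ s, ∃ f, f ∈ W ∧ f ≠ 0 ∧ f.order = (i : ℕ∞) := fun i hi => by
    obtain ⟨f, hfW, hf0, hford⟩ := hs hi
    exact ⟨f, hfW, hf0, hford⟩
  choose f hfW hf0 hford using hrep
  -- the family in W
  set v : {i // i ∈ s} → W := fun i => ⟨f i i.2, hfW i i.2⟩ with hv
  have hli : LinearIndependent ℂ v := by
    have hli' : LinearIndependent ℂ (fun i : {i // i ∈ s} => f i i.2) := by
      rw [linearIndependent_iff']
      intro t g hsum
      by_contra hne
      push_neg at hne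
      obtain ⟨i₀, hi₀t, hgi₀⟩ := hne
      -- take the element of minimal order among nonzero coefficients
      set T := t.filter (fun i => g i ≠ 0) with hT
      have hTne : T.Nonempty := ⟨i₀, Finset.mem_filter.2 ⟨hi₀t, hgi₀⟩⟩
      obtain ⟨j, hjT, hjmin⟩ := T.exists_min_image (fun i => (i : ℕ)) hTne
      have hjt : j ∈ t := (Finset.mem_filter.1 hjT).1
      have hgj : g j ≠ 0 := (Finset.mem_filter.1 hjT).2
      -- coefficient at (j : ℕ) of the sum
      have hcoeff : (PowerSeries.coeff (j : ℕ)) (∑ i ∈ t, g i • f i i.2) = 0 := by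
        rw [hsum]; simp
      rw [map_sum] at hcoeff
      have hzero : ∀ i ∈ t, i ≠ j → g i * (PowerSeries.coeff (j : ℕ)) (f i i.2) = 0 := by
        intro i hi hij
        by_cases hgi : g i = 0
        · rw [hgi, zero_mul]
        · have hiT : i ∈ T := Finset.mem_filter.2 ⟨hi, hgi⟩
          have hji : (j : ℕ) ≤ (i : ℕ) := hjmin i hiT
          have hlt : (j : ℕ) < (i : ℕ) := lt_of_le_of_ne hji (by
            intro h; exact hij (Subtype.ext h.symm))
          have : (PowerSeries.coeff (j : ℕ)) (f i i.2) = 0 := by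
            apply PowerSeries.coeff_of_lt_order
            rw [hford i i.2]
            exact_mod_cast hlt
          rw [this, mul_zero]
      have hsum' : ∑ i ∈ t, (PowerSeries.coeff (j : ℕ)) (g i • f i i.2)
          = g j * (PowerSeries.coeff (j : ℕ)) (f j j.2) := by
        rw [Finset.sum_eq_single j]
        · simp [PowerSeries.coeff_smul, smul_eq_mul]
        · intro i hi hij
          rw [PowerSeries.coeff_smul, smul_eq_mul]
          exact hzero i hi hij
        · intro h; exact absurd hjt h
      rw [hsum'] at hcoeff
      have hcj : (PowerSeries.coeff (j : ℕ)) (f j j.2) ≠ 0 :=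
        (PowerSeries.order_eq_nat.1 (hford j j.2)).1
      exact (mul_ne_zero hgj hcj) hcoeff
    exact hli'.of_comp W.subtype
  have := hli.cardinal_le_rank
  simpa using this

/-- If the order set is contained in a finset `s`, then `rank W ≤ s.card`:
the coefficient map into `s → ℂ` is injective on `W`. -/
private lemma rank_le_finset_card (W : Submodule ℂ (PowerSeries ℂ)) (s : Finset ℕ)
    (hs : ordSet W ⊆ ↑s) : Module.rank ℂ W ≤ (s.card : Cardinal) := by
  classical
  let φ : W →ₗ[ℂ] ({i // i ∈ s} → ℂ) :=
    { toFun := fun w i => (PowerSeries.coeff (i : ℕ)) (w : PowerSeries ℂ)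
      map_add' := fun x y => by ext i; simp
      map_smul' := fun c x => by ext i; simp }
  have hinj : Function.Injective φ := by
    rw [injective_iff_map_eq_zero]
    intro w hw
    by_contra hw0
    have hw0' : (w : PowerSeries ℂ) ≠ 0 := fun h => hw0 (ZeroMemClass.coe_eq_zero.1 h)
    have hord : (w : PowerSeries ℂ).order < ⊤ := PowerSeries.order_finite_iff_ne_zero.2 hw0'
    obtain ⟨n, hn⟩ : ∃ n : ℕ, (w : PowerSeries ℂ).order = (n : ℕ∞) := by
      lift (w : PowerSeries ℂ).order to ℕ using hord.ne with n hn
      exact ⟨n, rfl⟩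
    have hnmem : n ∈ ordSet W := ⟨w, w.2, hw0', hn⟩
    have hns : n ∈ s := hs hnmem
    have hcn : (PowerSeries.coeff n) (w : PowerSeries ℂ) ≠ 0 :=
      (PowerSeries.order_eq_nat.1 hn).1
    have : φ w ⟨n, hns⟩ = 0 := by rw [hw]; rfl
    exact hcn this
  calc Module.rank ℂ W ≤ Module.rank ℂ ({i // i ∈ s} → ℂ) := φ.rank_le_of_injective hinj
    _ = (s.card : Cardinal) := by rw [rank_fun']; simp

/-- Multiplication by a fixed nonzero element embeds `V'` into `V * V'`. -/
private lemma rank_le_rank_mul_right (V V' : Submodule ℂ (PowerSeries ℂ))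
    {f : PowerSeries ℂ} (hfV : f ∈ V) (hf : f ≠ 0) :
    Module.rank ℂ V' ≤ Module.rank ℂ (V * V' : Submodule ℂ (PowerSeries ℂ)) := by
  let φ : V' →ₗ[ℂ] (V * V' : Submodule ℂ (PowerSeries ℂ)) :=
    { toFun := fun g => ⟨f * (g : PowerSeries ℂ), Submodule.mul_mem_mul hfV g.2⟩
      map_add' := fun x y => by ext; simp [mul_add]
      map_smul' := fun c x => by ext; simp [mul_smul_comm] }
  have hinj : Function.Injective φ := by
    intro x y hxy
    have : f * (x : PowerSeries ℂ) = f * (y : PowerSeries ℂ) := congrArg Subtype.val hxy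
    exact Subtype.ext (mul_left_cancel₀ hf this)
  exact φ.rank_le_of_injective hinj

/-- Multiplication by a fixed nonzero element of `V'` embeds `V` into `V * V'`. -/
private lemma rank_le_rank_mul_left (V V' : Submodule ℂ (PowerSeries ℂ))
    {g : PowerSeries ℂ} (hgV' : g ∈ V') (hg : g ≠ 0) :
    Module.rank ℂ V ≤ Module.rank ℂ (V * V' : Submodule ℂ (PowerSeries ℂ)) := by
  let φ : V →ₗ[ℂ] (V * V' : Submodule ℂ (PowerSeries ℂ)) :=
    { toFun := fun f => ⟨(f : PowerSeries ℂ) * g, Submodule.mul_mem_mul f.2 hgV'⟩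
      map_add' := fun x y => by ext; simp [add_mul]
      map_smul' := fun c x => by ext; simp [smul_mul_assoc] }
  have hinj : Function.Injective φ := by
    intro x y hxy
    have : (x : PowerSeries ℂ) * g = (y : PowerSeries ℂ) * g := congrArg Subtype.val hxy
    exact Subtype.ext (mul_right_cancel₀ hg this)
  exact φ.rank_le_of_injective hinj

private lemma ordSet_finite_of_rank_lt (W : Submodule ℂ (PowerSeries ℂ))
    (h : Module.rank ℂ W < Cardinal.aleph0) : (ordSet W).Finite := by
  by_contra hinf
  have hinf' : (ordSet W).Infinite := hinf
  obtain ⟨n, hn⟩ := Cardinal.lt_aleph0.1 h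
  obtain ⟨t, hts, htcard⟩ := hinf'.exists_subset_card_eq (n + 1)
  have := finset_card_le_rank W t hts
  rw [htcard, hn] at this
  exact absurd (by exact_mod_cast this : n + 1 ≤ n) (by omega)

/-- For nonzero subspaces V, V' of ℂ[[x]], dim V + dim V' ≤ dim (V·V') + 1. -/
theorem rank_add_rank_le_rank_mul_add_one
    (V V' : Submodule ℂ (PowerSeries ℂ)) (hV : V ≠ ⊥) (hV' : V' ≠ ⊥) :
    Module.rank ℂ V + Module.rank ℂ V' ≤
      Module.rank ℂ (V * V' : Submodule ℂ (PowerSeries ℂ)) + 1 := by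
  classical
  obtain ⟨f, hfV, hf0⟩ := (Submodule.ne_bot_iff V).1 hV
  obtain ⟨g, hgV', hg0⟩ := (Submodule.ne_bot_iff V').1 hV'
  have h1 : Module.rank ℂ V ≤ Module.rank ℂ (V * V' : Submodule ℂ (PowerSeries ℂ)) :=
    rank_le_rank_mul_left V V' hgV' hg0
  have h2 : Module.rank ℂ V' ≤ Module.rank ℂ (V * V' : Submodule ℂ (PowerSeries ℂ)) :=
    rank_le_rank_mul_right V V' hfV hf0
  by_cases hbig : Cardinal.aleph0 ≤ Module.rank ℂ (V * V' : Submodule ℂ (PowerSeries ℂ))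
  · calc Module.rank ℂ V + Module.rank ℂ V'
        ≤ Module.rank ℂ (V * V' : Submodule ℂ (PowerSeries ℂ))
          + Module.rank ℂ (V * V' : Submodule ℂ (PowerSeries ℂ)) := add_le_add h1 h2
      _ = Module.rank ℂ (V * V' : Submodule ℂ (PowerSeries ℂ)) := Cardinal.add_eq_self hbig
      _ ≤ Module.rank ℂ (V * V' : Submodule ℂ (PowerSeries ℂ)) + 1 := le_self_add
  · push_neg at hbig
    have hVfin : Module.rank ℂ V < Cardinal.aleph0 := lt_of_le_of_lt h1 hbig
    have hV'fin : Module.rank ℂ V' < Cardinal.aleph0 := lt_of_le_of_lt h2 hbig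
    obtain ⟨A, hA⟩ : ∃ A : Finset ℕ, ↑A = ordSet V :=
      ⟨(ordSet_finite_of_rank_lt V hVfin).toFinset,
        (ordSet_finite_of_rank_lt V hVfin).coe_toFinset⟩
    obtain ⟨B, hB⟩ : ∃ B : Finset ℕ, ↑B = ordSet V' :=
      ⟨(ordSet_finite_of_rank_lt V' hV'fin).toFinset,
        (ordSet_finite_of_rank_lt V' hV'fin).coe_toFinset⟩
    -- nonemptiness
    have hAne : A.Nonempty := by
      have hord : f.order < ⊤ := PowerSeries.order_finite_iff_ne_zero.2 hf0
      obtain ⟨n, hn⟩ : ∃ n : ℕ, f.order = (n : ℕ∞) := by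
        lift f.order to ℕ using hord.ne with n hn
        exact ⟨n, rfl⟩
      exact ⟨n, by rw [← Finset.mem_coe, hA]; exact ⟨f, hfV, hf0, hn⟩⟩
    have hBne : B.Nonempty := by
      have hord : g.order < ⊤ := PowerSeries.order_finite_iff_ne_zero.2 hg0
      obtain ⟨n, hn⟩ : ∃ n : ℕ, g.order = (n : ℕ∞) := by
        lift g.order to ℕ using hord.ne with n hn
        exact ⟨n, rfl⟩
      exact ⟨n, by rw [← Finset.mem_coe, hB]; exact ⟨g, hgV', hg0, hn⟩⟩
    -- rank bounds via order sets
    have hrA : Module.rank ℂ V ≤ (A.card : Cardinal) :=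
      rank_le_finset_card V A (by rw [hA])
    have hrB : Module.rank ℂ V' ≤ (B.card : Cardinal) :=
      rank_le_finset_card V' B (by rw [hB])
    -- sumset sits inside the order set of the product
    have hsub : ↑(A + B) ⊆ ordSet (V * V' : Submodule ℂ (PowerSeries ℂ)) := by
      intro n hn
      rw [Finset.coe_add] at hn
      obtain ⟨i, hi, j, hj, rfl⟩ := Set.mem_add.1 hn
      rw [hA] at hi
      rw [hB] at hj
      obtain ⟨u, huV, hu0, huord⟩ := hi
      obtain ⟨v, hvV', hv0, hvord⟩ := hj
      refine ⟨u * v, Submodule.mul_mem_mul huV hvV', mul_ne_zero hu0 hv0, ?_⟩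
      rw [PowerSeries.order_mul, huord, hvord]
      exact_mod_cast rfl
    have hprod : ((A + B).card : Cardinal)
        ≤ Module.rank ℂ (V * V' : Submodule ℂ (PowerSeries ℂ)) :=
      finset_card_le_rank _ (A + B) hsub
    -- Cauchy-Davenport in ℕ
    have hCD : A.card + B.card - 1 ≤ (A + B).card :=
      cauchy_davenport_add_of_linearOrder_isCancelAdd hAne hBne
    have hnat : A.card + B.card ≤ (A + B).card + 1 := by
      have : 1 ≤ A.card := Finset.card_pos.2 hAne
      omega
    calc Module.rank ℂ V + Module.rank ℂ V'
        ≤ (A.card : Cardinal) + (B.card : Cardinal) := add_le_add hrA hrB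
      _ = ((A.card + B.card : ℕ) : Cardinal) := by push_cast; ring
      _ ≤ (((A + B).card + 1 : ℕ) : Cardinal) := by exact_mod_cast hnat
      _ = ((A + B).card : Cardinal) + 1 := by push_cast; ring
      _ ≤ Module.rank ℂ (V * V' : Submodule ℂ (PowerSeries ℂ)) + 1 :=
          add_le_add_left hprod 1
end

section
/- Euler's pentagonal number theorem: as formal power series in q, ∏_{n≥1} (1 − qⁿ) = ∑_{n∈ℤ} (−1)ⁿ q^{(3n²−n)/2}. -/
open PowerSeries

open Finset

namespace Pent

def mx (P : Finset ℕ) : ℕ := P.sup id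
noncomputable def mn (P : Finset ℕ) : ℕ := sInf {x : ℕ | x ∈ P}
noncomputable def tt (P : Finset ℕ) : ℕ := sInf {j : ℕ | j ∈ P ∧ Icc j (mx P) ⊆ P}
noncomputable def sg (P : Finset ℕ) : ℕ := mx P + 1 - tt P

variable {P : Finset ℕ}

lemma le_mx (hp : P.Nonempty) {p : ℕ} (h : p ∈ P) : p ≤ mx P := Finset.le_sup (f := id) h

lemma mx_mem (hp : P.Nonempty) : mx P ∈ P := by
  obtain ⟨b, hb, he⟩ := Finset.exists_mem_eq_sup P hp id
  rw [mx, he]; exact hb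

lemma mn_mem (hp : P.Nonempty) : mn P ∈ P := by
  have h : {x : ℕ | x ∈ P}.Nonempty := ⟨hp.choose, hp.choose_spec⟩
  exact Nat.sInf_mem h

lemma mn_le {p : ℕ} (h : p ∈ P) : mn P ≤ p := Nat.sInf_le (show p ∈ {x : ℕ | x ∈ P} from h)

lemma tt_spec (hp : P.Nonempty) : tt P ∈ P ∧ Icc (tt P) (mx P) ⊆ P := by
  have hne : {j : ℕ | j ∈ P ∧ Icc j (mx P) ⊆ P}.Nonempty := by
    refine ⟨mx P, mx_mem hp, ?_⟩
    intro x hx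
    simp only [mem_Icc] at hx
    have : x = mx P := le_antisymm hx.2 hx.1
    rw [this]; exact mx_mem hp
  exact Nat.sInf_mem hne

lemma tt_mem (hp : P.Nonempty) : tt P ∈ P := (tt_spec hp).1
lemma icc_tt_subset (hp : P.Nonempty) : Icc (tt P) (mx P) ⊆ P := (tt_spec hp).2
lemma tt_le_mx (hp : P.Nonempty) : tt P ≤ mx P := le_mx hp (tt_mem hp)
lemma mn_le_tt (hp : P.Nonempty) : mn P ≤ tt P := mn_le (tt_mem hp)

lemma tt_pred_not_mem (hp : P.Nonempty) (hpos : ∀ p ∈ P, 1 ≤ p) : tt P - 1 ∉ P := by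
  intro hmem
  have ht1 : 1 ≤ tt P := hpos _ (tt_mem hp)
  have : Icc (tt P - 1) (mx P) ⊆ P := by
    intro x hx
    simp only [mem_Icc] at hx
    rcases eq_or_lt_of_le hx.1 with h | h
    · rw [← h]; exact hmem
    · exact icc_tt_subset hp (mem_Icc.mpr ⟨by omega, hx.2⟩)
  have : tt P ≤ tt P - 1 := Nat.sInf_le (Set.mem_setOf.mpr ⟨hmem, this⟩)
  omega

/-- characterization of tt -/
lemma tt_eq (hp : P.Nonempty) {a : ℕ} (ha : a ∈ P) (hsub : Icc a (mx P) ⊆ P)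
    (hnot : a - 1 ∉ P) (h1 : 1 ≤ a) : tt P = a := by
  have hle : tt P ≤ a := Nat.sInf_le (Set.mem_setOf.mpr ⟨ha, hsub⟩)
  rcases eq_or_lt_of_le hle with h | h
  · exact h
  · exfalso
    have haM : a ≤ mx P := le_mx hp ha
    have : a - 1 ∈ Icc (tt P) (mx P) := mem_Icc.mpr ⟨by omega, by omega⟩
    exact hnot (icc_tt_subset hp this)

lemma sg_le_card (hp : P.Nonempty) : sg P ≤ P.card := by
  have := Finset.card_le_card (icc_tt_subset hp)
  rwa [Nat.card_Icc] at this

/-- if card = sg then P is the staircase -/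
lemma eq_icc_of_card (hp : P.Nonempty) (h : P.card = sg P) : P = Icc (tt P) (mx P) := by
  symm
  apply Finset.eq_of_subset_of_card_le (icc_tt_subset hp)
  rw [Nat.card_Icc, h, sg]

lemma mx_eq {a : ℕ} (ha : a ∈ P) (h : ∀ b ∈ P, b ≤ a) : mx P = a :=
  le_antisymm (Finset.sup_le h) (le_mx ⟨a, ha⟩ ha)

lemma mn_eq {a : ℕ} (ha : a ∈ P) (h : ∀ b ∈ P, a ≤ b) : mn P = a :=
  le_antisymm (mn_le ha) (h _ (mn_mem ⟨a, ha⟩))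

lemma mn_Icc {a b : ℕ} (hab : a ≤ b) : mn (Icc a b) = a :=
  mn_eq (mem_Icc.mpr ⟨le_refl _, hab⟩) (fun x hx => (mem_Icc.mp hx).1)

lemma mx_Icc {a b : ℕ} (hab : a ≤ b) : mx (Icc a b) = b :=
  mx_eq (mem_Icc.mpr ⟨hab, le_refl _⟩) (fun x hx => (mem_Icc.mp hx).2)

/-- if min = tt then P is the staircase -/
lemma eq_icc_of_mn (hp : P.Nonempty) (h : mn P = tt P) : P = Icc (tt P) (mx P) := by
  apply Finset.Subset.antisymm
  · intro x hx
    exact mem_Icc.mpr ⟨h ▸ mn_le hx, le_mx hp hx⟩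
  · exact icc_tt_subset hp

end Pent

namespace Pent
open Finset

noncomputable def A (P : Finset ℕ) : Finset ℕ :=
  (P.erase (mn P)).image (fun x => if mx P - mn P + 1 ≤ x then x + 1 else x)

noncomputable def B (P : Finset ℕ) : Finset ℕ :=
  insert (sg P) (P.image fun x => if tt P ≤ x then x - 1 else x)

lemma A_spec {P : Finset ℕ} (hp : P.Nonempty) (hpos : ∀ p ∈ P, 1 ≤ p)
    (hs : mn P ≤ sg P) (hlt : mn P < P.card) :
    (A P).Nonempty ∧ (∀ p ∈ A P, 1 ≤ p) ∧ (A P).sum id = P.sum id ∧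
    (A P).card + 1 = P.card ∧ sg (A P) < mn (A P) ∧
    ¬(sg (A P) = (A P).card ∧ mn (A P) = sg (A P) + 1) ∧ B (A P) = P := by
  set s := mn P with hs_def
  set M := mx P with hM_def
  set t := tt P with ht_def
  have hsM : s ≤ M := le_mx hp (mn_mem hp)
  have htM : t ≤ M := tt_le_mx hp
  have hst : s ≤ t := mn_le_tt hp
  have hs1 : 1 ≤ s := hpos _ (mn_mem hp)
  have hsg : sg P = M + 1 - t := rfl
  have h2s : 2 * s ≤ M := by
    by_contra hc
    have hsub : P ⊆ Icc s M := fun x hx => mem_Icc.mpr ⟨mn_le hx, le_mx hp hx⟩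
    have := card_le_card hsub
    rw [Nat.card_Icc] at this
    omega
  set thr := M - s + 1 with hthr_def
  have hthr_t : t ≤ thr := by rw [hsg] at hs; omega
  have hs_thr : s < thr := by omega
  have htop : Icc thr M ⊆ P := by
    intro x hx
    simp only [mem_Icc] at hx
    exact icc_tt_subset hp (mem_Icc.mpr ⟨le_trans hthr_t hx.1, hx.2⟩)
  set f : ℕ → ℕ := fun x => if thr ≤ x then x + 1 else x with hf_def
  have hmono : StrictMono f := by
    intro x y hxy
    simp only [hf_def]
    split_ifs <;> omega
  have hA : A P = (P.erase s).image f := rfl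
  have hMne : M ∈ P.erase s := mem_erase.mpr ⟨by omega, mx_mem hp⟩
  have hQne : (A P).Nonempty := ⟨f M, mem_image_of_mem f hMne⟩
  have hmemQ : ∀ y ∈ (A P), ∃ x, x ∈ P ∧ x ≠ s ∧ f x = y := by
    intro y hy
    rw [hA, mem_image] at hy
    obtain ⟨x, hx, hfx⟩ := hy
    exact ⟨x, (mem_erase.mp hx).2, (mem_erase.mp hx).1, hfx⟩
  have hQgeS : ∀ y ∈ (A P), s + 1 ≤ y := by
    intro y hy
    obtain ⟨x, hxP, hxs, hfx⟩ := hmemQ y hy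
    have := mn_le hxP
    rw [← hfx]
    simp only [hf_def]
    split_ifs <;> omega
  have hQle : ∀ y ∈ (A P), y ≤ M + 1 := by
    intro y hy
    obtain ⟨x, hxP, hxs, hfx⟩ := hmemQ y hy
    have := le_mx hp hxP
    rw [← hfx]
    simp only [hf_def]
    split_ifs <;> omega
  have hfM : f M = M + 1 := by simp only [hf_def]; rw [if_pos (by omega)]
  have hM1Q : M + 1 ∈ (A P) := hfM ▸ mem_image_of_mem f hMne
  have hmxQ : mx (A P) = M + 1 := mx_eq hM1Q hQle
  have hIccQ : Icc (thr + 1) (M + 1) ⊆ (A P) := by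
    intro y hy
    simp only [mem_Icc] at hy
    have hy1 : y - 1 ∈ P := htop (mem_Icc.mpr ⟨by omega, by omega⟩)
    have : y - 1 ∈ P.erase s := mem_erase.mpr ⟨by omega, hy1⟩
    have hfy : f (y - 1) = y := by simp only [hf_def]; rw [if_pos (by omega)]; omega
    exact hfy ▸ mem_image_of_mem f this
  have hthrQ : thr ∉ (A P) := by
    intro hmem
    obtain ⟨x, hxP, hxs, hfx⟩ := hmemQ thr hmem
    simp only [hf_def] at hfx
    split_ifs at hfx <;> omega
  have httQ : tt (A P) = thr + 1 := by
    refine tt_eq hQne (hIccQ (mem_Icc.mpr ⟨le_refl _, by omega⟩)) ?_ (by simpa using hthrQ) (by omega)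
    rw [hmxQ]; exact hIccQ
  have hsgQ : sg (A P) = s := by rw [sg, httQ, hmxQ]; omega
  have hmnQ : s + 1 ≤ mn (A P) := hQgeS _ (mn_mem hQne)
  have hcardQ : (A P).card + 1 = P.card := by
    rw [hA, Finset.card_image_of_injOn (hmono.injective.injOn), Finset.card_erase_of_mem (mn_mem hp)]
    omega
  have hfilter : (P.erase s).filter (fun x => thr ≤ x) = Icc thr M := by
    ext x
    simp only [mem_filter, mem_erase, mem_Icc]
    constructor
    · rintro ⟨⟨hxs, hxP⟩, hx⟩
      exact ⟨hx, le_mx hp hxP⟩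
    · rintro ⟨h1, h2⟩
      exact ⟨⟨by omega, htop (mem_Icc.mpr ⟨h1, h2⟩)⟩, h1⟩
  have hsumQ : (A P).sum id = P.sum id := by
    rw [hA, Finset.sum_image (fun x hx y hy => hmono.injective.injOn hx hy)]
    simp only [id_eq]
    have h1 : ∀ x ∈ P.erase s, f x = x + (if thr ≤ x then 1 else 0) := by
      intro x _
      simp only [hf_def]
      split_ifs <;> omega
    rw [Finset.sum_congr rfl h1, Finset.sum_add_distrib, Finset.sum_boole, hfilter, Nat.card_Icc]
    have h2 := Finset.sum_erase_add P id (mn_mem hp)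
    simp only [id_eq, Nat.cast_id] at h2 ⊢
    rw [← hs_def] at h2
    omega
  have hexcl : ¬(sg (A P) = (A P).card ∧ mn (A P) = sg (A P) + 1) := by
    rintro ⟨h1, h2⟩
    have hicc := eq_icc_of_card hQne h1.symm
    have h3 : mn (A P) = tt (A P) := by
      conv_lhs => rw [hicc]
      exact mn_Icc (by rw [httQ, hmxQ]; omega)
    rw [httQ] at h3
    rw [hsgQ] at h2
    omega
  have hBA : B (A P) = P := by
    have hB : B (A P) = insert (sg (A P)) ((A P).image fun x => if tt (A P) ≤ x then x - 1 else x) := rfl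
    rw [hB, hsgQ, httQ, hA, Finset.image_image]
    have hcomp : ((fun x => if thr + 1 ≤ x then x - 1 else x) ∘ f) = id := by
      funext x
      simp only [Function.comp, hf_def, id_eq]
      split_ifs <;> omega
    rw [hcomp, Finset.image_id, Finset.insert_erase (mn_mem hp)]
  exact ⟨hQne, (fun p hp' => by have := hQgeS p hp'; omega), hsumQ, hcardQ,
    (by rw [hsgQ]; omega), hexcl, hBA⟩

lemma B_spec {P : Finset ℕ} (hp : P.Nonempty) (hpos : ∀ p ∈ P, 1 ≤ p)
    (hB1 : sg P < mn P) (hB2 : ¬(sg P = P.card ∧ mn P = sg P + 1)) :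
    (B P).Nonempty ∧ (∀ p ∈ B P, 1 ≤ p) ∧ (B P).sum id = P.sum id ∧
    (B P).card = P.card + 1 ∧ mn (B P) ≤ sg (B P) ∧ mn (B P) < (B P).card ∧
    A (B P) = P := by
  set s := mn P with hs_def
  set M := mx P with hM_def
  set t := tt P with ht_def
  have hsM : s ≤ M := le_mx hp (mn_mem hp)
  have htM : t ≤ M := tt_le_mx hp
  have hst : s ≤ t := mn_le_tt hp
  have hs1 : 1 ≤ s := hpos _ (mn_mem hp)
  have hsg : sg P = M + 1 - t := rfl
  have hcardIcc : (Icc t M).card = sg P := by rw [Nat.card_Icc, hsg]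
  have hlow : ∀ x ∈ P, x < t → x + 2 ≤ t := by
    intro x hx hxt
    have := tt_pred_not_mem hp hpos
    have hxne : x ≠ t - 1 := by rintro rfl; exact this hx
    omega
  have hσt : sg P + 2 ≤ t := by
    rcases eq_or_lt_of_le hst with h | h
    · have hicc := eq_icc_of_mn hp h
      have hcard : P.card = sg P := by
        have h2 : P.card = (Icc t M).card := by conv_lhs => rw [hicc]
        rw [h2, hcardIcc]
      have : mn P ≠ sg P + 1 := fun hc => hB2 ⟨hcard.symm, hc⟩
      rw [← hs_def, ← ht_def] at *
      omega
    · have := hlow s (mn_mem hp) h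
      omega
  set f2 : ℕ → ℕ := fun x => if t ≤ x then x - 1 else x with hf2_def
  have hinj : Set.InjOn f2 ↑P := by
    intro x hx y hy hxy
    have hx2 : x ∈ P := hx
    have hy2 : y ∈ P := hy
    have h1 : x < t → x + 2 ≤ t := hlow x hx2
    have h2 : y < t → y + 2 ≤ t := hlow y hy2
    simp only [hf2_def] at hxy
    split_ifs at hxy <;> omega
  have hσ1 : 1 ≤ sg P := by omega
  have hmemim : ∀ y ∈ P.image f2, sg P + 1 ≤ y := by
    intro y hy
    rw [mem_image] at hy
    obtain ⟨x, hxP, hfx⟩ := hy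
    have hxs : s ≤ x := mn_le hxP
    rw [← hfx]
    simp only [hf2_def]
    split_ifs <;> omega
  have hσ_notin : sg P ∉ P.image f2 := by
    intro hmem
    have := hmemim _ hmem
    omega
  have hBdef : B P = insert (sg P) (P.image f2) := rfl
  have hBne : (B P).Nonempty := ⟨sg P, hBdef ▸ mem_insert_self _ _⟩
  have hcardB : (B P).card = P.card + 1 := by
    rw [hBdef, card_insert_of_notMem hσ_notin, Finset.card_image_of_injOn hinj]
  have hmemB : ∀ y ∈ B P, sg P ≤ y := by
    intro y hy
    rw [hBdef, mem_insert] at hy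
    rcases hy with rfl | hy
    · exact le_refl _
    · exact le_of_lt (hmemim _ hy)
  have hmnB : mn (B P) = sg P := mn_eq (hBdef ▸ mem_insert_self _ _) hmemB
  have hBle : ∀ y ∈ B P, y ≤ M - 1 := by
    intro y hy
    rw [hBdef, mem_insert] at hy
    rcases hy with rfl | hy
    · omega
    · rw [mem_image] at hy
      obtain ⟨x, hxP, hfx⟩ := hy
      have hxM : x ≤ M := le_mx hp hxP
      have := hlow x hxP
      rw [← hfx]
      simp only [hf2_def]
      split_ifs <;> omega
  have hfM : f2 M = M - 1 := by simp only [hf2_def]; rw [if_pos htM]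
  have hM1B : M - 1 ∈ B P := by
    rw [hBdef]
    exact mem_insert_of_mem (hfM ▸ mem_image_of_mem f2 (mx_mem hp))
  have hmxB : mx (B P) = M - 1 := mx_eq hM1B hBle
  have hrun : Icc (t - 1) (M - 1) ⊆ B P := by
    intro y hy
    simp only [mem_Icc] at hy
    have hy1 : y + 1 ∈ P := icc_tt_subset hp (mem_Icc.mpr ⟨by omega, by omega⟩)
    have hfy : f2 (y + 1) = y := by simp only [hf2_def]; rw [if_pos (by omega)]; omega
    rw [hBdef]
    exact mem_insert_of_mem (hfy ▸ mem_image_of_mem f2 hy1)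
  have httB : tt (B P) ≤ t - 1 := by
    apply Nat.sInf_le
    refine Set.mem_setOf.mpr ⟨hrun (mem_Icc.mpr ⟨le_refl _, by omega⟩), ?_⟩
    rw [hmxB]
    exact hrun
  have hsgB : sg P ≤ sg (B P) := by
    have : sg (B P) = mx (B P) + 1 - tt (B P) := rfl
    rw [hmxB] at this
    omega
  have hfilter : P.filter (fun x => t ≤ x) = Icc t M := by
    ext x
    simp only [mem_filter, mem_Icc]
    constructor
    · rintro ⟨hxP, hx⟩
      exact ⟨hx, le_mx hp hxP⟩
    · rintro ⟨h1, h2⟩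
      exact ⟨icc_tt_subset hp (mem_Icc.mpr ⟨h1, h2⟩), h1⟩
  have hsumB : (B P).sum id = P.sum id := by
    have e1 : ∑ x ∈ P, (f2 x + if t ≤ x then 1 else 0) = ∑ x ∈ P, x := by
      refine Finset.sum_congr rfl ?_
      intro x hx
      have := hpos x hx
      simp only [hf2_def]
      split_ifs <;> omega
    rw [Finset.sum_add_distrib, Finset.sum_boole, hfilter, Nat.card_Icc] at e1
    rw [hBdef, Finset.sum_insert hσ_notin, Finset.sum_image (fun x hx y hy => hinj hx hy)]
    simp only [id_eq, Nat.cast_id] at e1 ⊢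
    rw [hsg] at *
    omega
  have hmnltB : mn (B P) < (B P).card := by
    have := sg_le_card hp
    rw [hmnB, hcardB]
    omega
  have hAB : A (B P) = P := by
    have hAdef : A (B P) = ((B P).erase (mn (B P))).image
        (fun x => if mx (B P) - mn (B P) + 1 ≤ x then x + 1 else x) := rfl
    have hthr' : mx (B P) - mn (B P) + 1 = t - 1 := by
      rw [hmxB, hmnB, hsg]
      omega
    have herase : (B P).erase (mn (B P)) = P.image f2 := by
      rw [hmnB, hBdef, Finset.erase_insert hσ_notin]
    rw [hAdef, hthr', herase, Finset.image_image]
    have : ∀ x ∈ P, ((fun x => if t - 1 ≤ x then x + 1 else x) ∘ f2) x = id x := by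
      intro x hx
      have h1 : x < t → x + 2 ≤ t := hlow x hx
      simp only [Function.comp, hf2_def, id_eq]
      split_ifs <;> omega
    rw [Finset.image_congr this, Finset.image_id]
  refine ⟨hBne, ?_, hsumB, hcardB, hmnB ▸ hsgB, hmnltB, hAB⟩
  intro p hp'
  have := hmemB p hp'
  omega


def IsPent (P : Finset ℕ) : Prop :=
  ∃ k : ℕ, 1 ≤ k ∧ (P = Icc k (2*k-1) ∨ P = Icc (k+1) (2*k))

lemma stair1 {k : ℕ} (hk : 1 ≤ k) :
    mn (Icc k (2*k-1)) = k ∧ mx (Icc k (2*k-1)) = 2*k-1 ∧ sg (Icc k (2*k-1)) = k ∧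
    (Icc k (2*k-1)).card = k := by
  have hle : k ≤ 2*k-1 := by omega
  have hne : (Icc k (2*k-1)).Nonempty := ⟨k, mem_Icc.mpr ⟨le_refl _, hle⟩⟩
  have hmn := mn_Icc hle
  have hmx := mx_Icc hle
  have htt : tt (Icc k (2*k-1)) = k := by
    refine tt_eq hne (mem_Icc.mpr ⟨le_refl _, hle⟩) ?_ ?_ hk
    · rw [hmx]
    · intro hc
      rw [mem_Icc] at hc
      omega
  refine ⟨hmn, hmx, ?_, ?_⟩
  · rw [sg, hmx, htt]; omega
  · rw [Nat.card_Icc]; omega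

lemma stair2 {k : ℕ} (hk : 1 ≤ k) :
    mn (Icc (k+1) (2*k)) = k+1 ∧ mx (Icc (k+1) (2*k)) = 2*k ∧ sg (Icc (k+1) (2*k)) = k ∧
    (Icc (k+1) (2*k)).card = k := by
  have hle : k + 1 ≤ 2*k := by omega
  have hne : (Icc (k+1) (2*k)).Nonempty := ⟨k+1, mem_Icc.mpr ⟨le_refl _, hle⟩⟩
  have hmn := mn_Icc hle
  have hmx := mx_Icc hle
  have htt : tt (Icc (k+1) (2*k)) = k+1 := by
    refine tt_eq hne (mem_Icc.mpr ⟨le_refl _, hle⟩) ?_ ?_ (by omega)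
    · rw [hmx]
    · intro hc
      rw [mem_Icc] at hc
      omega
  refine ⟨hmn, hmx, ?_, ?_⟩
  · rw [sg, hmx, htt]; omega
  · rw [Nat.card_Icc]; omega

/-- pentagonal staircases satisfy neither the A nor B condition -/
lemma pent_no_move {P : Finset ℕ} (h : IsPent P) :
    ¬(mn P ≤ sg P ∧ mn P < P.card) ∧
    ¬(sg P < mn P ∧ ¬(sg P = P.card ∧ mn P = sg P + 1)) := by
  obtain ⟨k, hk, h1 | h1⟩ := h
  · obtain ⟨hmn, _, hsg, hcard⟩ := stair1 hk
    rw [h1, hmn, hsg, hcard]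
    omega
  · obtain ⟨hmn, _, hsg, hcard⟩ := stair2 hk
    rw [h1, hmn, hsg, hcard]
    constructor
    · omega
    · rintro ⟨_, hc⟩
      exact hc ⟨rfl, rfl⟩

/-- trichotomy -/
lemma tricho {P : Finset ℕ} (hp : P.Nonempty) (hpos : ∀ p ∈ P, 1 ≤ p) :
    (mn P ≤ sg P ∧ mn P < P.card) ∨
    (sg P < mn P ∧ ¬(sg P = P.card ∧ mn P = sg P + 1)) ∨ IsPent P := by
  have hsgc := sg_le_card hp
  have htM : tt P ≤ mx P := tt_le_mx hp
  have hst : mn P ≤ tt P := mn_le_tt hp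
  have hs1 : 1 ≤ mn P := hpos _ (mn_mem hp)
  have hsg : sg P = mx P + 1 - tt P := rfl
  by_cases hA : mn P ≤ sg P
  · by_cases hlt : mn P < P.card
    · exact Or.inl ⟨hA, hlt⟩
    · right; right
      have hcard : P.card = sg P := by omega
      have hicc := eq_icc_of_card hp hcard
      have hmn : mn P = tt P := by
        have h2 : mn P = mn (Icc (tt P) (mx P)) := by conv_lhs => rw [hicc]
        rw [h2, mn_Icc htM]
      refine ⟨mn P, hs1, Or.inl ?_⟩
      have h2 : mx P = 2 * mn P - 1 := by omega
      conv_lhs => rw [hicc]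
      rw [← hmn, h2]
  · push_neg at hA
    by_cases hB : sg P = P.card ∧ mn P = sg P + 1
    · right; right
      obtain ⟨hcard, hmn⟩ := hB
      have hicc := eq_icc_of_card hp hcard.symm
      have hmn2 : mn P = tt P := by
        have h2 : mn P = mn (Icc (tt P) (mx P)) := by conv_lhs => rw [hicc]
        rw [h2, mn_Icc htM]
      refine ⟨sg P, by omega, Or.inr ?_⟩
      have h1 : tt P = sg P + 1 := by omega
      have h2 : mx P = 2 * sg P := by omega
      conv_lhs => rw [hicc]
      rw [h1, h2]
    · exact Or.inr (Or.inl ⟨hA, hB⟩)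

lemma part_le_sum {P : Finset ℕ} {p : ℕ} (h : p ∈ P) : p ≤ P.sum id :=
  Finset.single_le_sum (f := id) (fun i _ => Nat.zero_le i) h


noncomputable def g (P : Finset ℕ) : Finset ℕ := if mn P ≤ sg P then A P else B P

lemma step {P : Finset ℕ} (hne : P.Nonempty) (hpos : ∀ p ∈ P, 1 ≤ p) (hnp : ¬ IsPent P) :
    (g P).Nonempty ∧ (∀ p ∈ g P, 1 ≤ p) ∧ (g P).sum id = P.sum id ∧ ¬ IsPent (g P) ∧
    ((g P).card + 1 = P.card ∨ (g P).card = P.card + 1) ∧ g (g P) = P := by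
  rcases tricho hne hpos with hA | hB | hpent
  · obtain ⟨q1, q2, q3, q4, q5, q6, q7⟩ := A_spec hne hpos hA.1 hA.2
    have hif : g P = A P := if_pos hA.1
    rw [hif]
    have hif2 : g (A P) = B (A P) := if_neg (not_le.mpr q5)
    rw [hif2]
    exact ⟨q1, q2, q3, (fun hpent => (pent_no_move hpent).2 ⟨q5, q6⟩),
      Or.inl q4, q7⟩
  · obtain ⟨q1, q2, q3, q4, q5, q6, q7⟩ := B_spec hne hpos hB.1 hB.2
    have hif : g P = B P := if_neg (not_le.mpr hB.1)
    rw [hif]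
    have hif2 : g (B P) = A (B P) := if_pos q5
    rw [hif2]
    exact ⟨q1, q2, q3, (fun hpent => (pent_no_move hpent).1 ⟨q5, q6⟩),
      Or.inr q4, q7⟩
  · exact absurd hpent hnp

lemma negpow {a b : ℕ} (h : a + 1 = b ∨ a = b + 1) : (-1:ℤ)^a + (-1:ℤ)^b = 0 := by
  rcases h with h | h
  · rw [← h, pow_succ]; ring
  · rw [h, pow_succ]; ring

open scoped Classical in
lemma sum_nonpent_zero {m : ℕ} (hm : 1 ≤ m) :
    ∑ P ∈ ((Icc 1 m).powerset.filter (fun P => P.sum id = m)).filter (fun P => ¬ IsPent P),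
      (-1 : ℤ)^P.card = 0 := by
  set D' := ((Icc 1 m).powerset.filter (fun P => P.sum id = m)).filter (fun P => ¬ IsPent P)
    with hD'
  have hmem : ∀ P ∈ D', P.Nonempty ∧ (∀ p ∈ P, 1 ≤ p) ∧ P.sum id = m ∧ ¬ IsPent P := by
    intro P hP
    simp only [hD', mem_filter, mem_powerset] at hP
    obtain ⟨⟨hsub, hsum⟩, hnp⟩ := hP
    have hpos : ∀ p ∈ P, 1 ≤ p := fun p hp => (mem_Icc.mp (hsub hp)).1
    have hne : P.Nonempty := by
      rcases P.eq_empty_or_nonempty with rfl | h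
      · simp only [Finset.sum_empty] at hsum; omega
      · exact h
    exact ⟨hne, hpos, hsum, hnp⟩
  have hmem' : ∀ P, (∀ p ∈ P, 1 ≤ p) → P.sum id = m → ¬ IsPent P → P ∈ D' := by
    intro P h2 h3 h4
    simp only [hD', mem_filter, mem_powerset]
    refine ⟨⟨?_, h3⟩, h4⟩
    intro p hp
    exact mem_Icc.mpr ⟨h2 p hp, h3 ▸ part_le_sum hp⟩
  have gmem : ∀ P (hP : P ∈ D'), g P ∈ D' := by
    intro P hP
    obtain ⟨h1, h2, h3, h4⟩ := hmem P hP
    obtain ⟨s1, s2, s3, s4, s5, s6⟩ := step h1 h2 h4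
    exact hmem' _ s2 (s3.trans h3) s4
  apply Finset.sum_involution (fun P _ => g P)
  · intro P hP
    obtain ⟨h1, h2, h3, h4⟩ := hmem P hP
    obtain ⟨s1, s2, s3, s4, s5, s6⟩ := step h1 h2 h4
    exact negpow (by omega)
  · intro P hP _
    obtain ⟨h1, h2, h3, h4⟩ := hmem P hP
    obtain ⟨s1, s2, s3, s4, s5, s6⟩ := step h1 h2 h4
    intro hc
    rw [hc] at s5
    omega
  · exact gmem
  · intro P hP
    obtain ⟨h1, h2, h3, h4⟩ := hmem P hP
    obtain ⟨s1, s2, s3, s4, s5, s6⟩ := step h1 h2 h4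
    exact s6


lemma sum_Icc_two {a b : ℕ} (h : a ≤ b + 1) :
    (∑ i ∈ Icc a b, i) * 2 = (a + b) * (b + 1 - a) := by
  have h3 : ∑ i ∈ Ico 0 a, i + ∑ i ∈ Ico a (b+1), i = ∑ i ∈ Ico 0 (b+1), i :=
    Finset.sum_Ico_consecutive _ (Nat.zero_le a) h
  have e1 := Finset.sum_range_id_mul_two (b+1)
  have e2 := Finset.sum_range_id_mul_two a
  simp only [Nat.add_sub_cancel] at e1
  rw [Finset.range_eq_Ico] at e1 e2
  rw [← Finset.Ico_add_one_right_eq_Icc]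
  rcases Nat.eq_zero_or_pos a with rfl | ha
  · simp only [Nat.zero_add, Nat.sub_zero]
    have h0 : ∑ i ∈ Ico 0 0, i = 0 := by simp
    zify at e1 h3 h0 ⊢
    linear_combination e1
  · zify [h, ha] at e1 e2 h3 ⊢
    linear_combination e1 - e2 + 2 * h3

lemma neg_one_pow_eq (k : ℕ) : (-1:ℤ)^k = if Even (k:ℤ) then 1 else -1 := by
  by_cases h : Even k
  · rw [if_pos (by exact_mod_cast h), h.neg_one_pow]
  · rw [if_neg (by exact_mod_cast h), (Nat.not_even_iff_odd.mp h).neg_one_pow]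

open scoped Classical in
lemma fix_sum {m : ℕ} (hm : 1 ≤ m) :
    ∑ P ∈ ((Icc 1 m).powerset.filter (fun P => P.sum id = m)).filter (fun P => IsPent P),
      (-1 : ℤ)^P.card
    = ∑ n ∈ (Finset.Icc (-(m : ℤ) - 1) ((m : ℤ) + 1)).filter
        (fun n => 3 * n ^ 2 - n = 2 * (m : ℤ)), (if Even n then (1:ℤ) else -1) := by
  have hleft : ∀ P ∈ ((Icc 1 m).powerset.filter (fun P => P.sum id = m)).filter
      (fun P => IsPent P), ∃ k : ℕ, 1 ≤ k ∧
      ((P = Icc k (2*k-1) ∧ m * 2 = (3*k-1)*k) ∨ (P = Icc (k+1) (2*k) ∧ m * 2 = (3*k+1)*k)) := by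
    intro P hP
    simp only [mem_filter, mem_powerset] at hP
    obtain ⟨⟨hsub, hsum⟩, k, hk, hcase⟩ := hP
    refine ⟨k, hk, ?_⟩
    rcases hcase with h1 | h1
    · left
      refine ⟨h1, ?_⟩
      have hs := sum_Icc_two (a := k) (b := 2*k-1) (by omega)
      have e1 : k + (2*k-1) = 3*k-1 := by omega
      have e2 : 2*k-1+1-k = k := by omega
      rw [e1, e2] at hs
      have hss : ∑ i ∈ Icc k (2*k-1), i = m := by
        have := hsum
        rw [h1] at this
        simpa using this
      rw [hss] at hs
      exact hs
    · right
      refine ⟨h1, ?_⟩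
      have hs := sum_Icc_two (a := k+1) (b := 2*k) (by omega)
      have e1 : (k+1) + 2*k = 3*k+1 := by omega
      have e2 : 2*k+1-(k+1) = k := by omega
      rw [e1, e2] at hs
      have hss : ∑ i ∈ Icc (k+1) (2*k), i = m := by
        have := hsum
        rw [h1] at this
        simpa using this
      rw [hss] at hs
      exact hs
  refine Finset.sum_nbij'
    (i := fun P => if mn P = sg P then (P.card : ℤ) else -(P.card : ℤ))
    (j := fun n => if 0 < n then Icc n.natAbs (2*n.natAbs - 1) else Icc (n.natAbs + 1) (2*n.natAbs))
    ?_ ?_ ?_ ?_ ?_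
  -- i maps into the right set
  · intro P hP
    obtain ⟨k, hk, hcase⟩ := hleft P hP
    simp only [mem_filter, mem_Icc]
    rcases hcase with ⟨h1, h2⟩ | ⟨h1, h2⟩
    · obtain ⟨hmn, _, hsg, hcard⟩ := stair1 hk
      have hmul : 2 * k ≤ (3*k-1) * k := Nat.mul_le_mul_right k (by omega)
      have hkm : k ≤ m := by omega
      have hcast : (m:ℤ) * 2 = (3*(k:ℤ)-1)*(k:ℤ) := by
        have h2' : ((m*2 : ℕ) : ℤ) = (((3*k-1)*k : ℕ) : ℤ) := by exact_mod_cast h2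
        push_cast [Nat.cast_sub (show 1 ≤ 3*k by omega)] at h2'
        linarith
      rw [h1, hmn, hsg, hcard, if_pos rfl]
      exact ⟨⟨by omega, by omega⟩, by linear_combination -hcast⟩
    · obtain ⟨hmn, _, hsg, hcard⟩ := stair2 hk
      have hmul : 2 * k ≤ (3*k+1) * k := Nat.mul_le_mul_right k (by omega)
      have hkm : k ≤ m := by omega
      have hcast : (m:ℤ) * 2 = (3*(k:ℤ)+1)*(k:ℤ) := by exact_mod_cast h2
      rw [h1, hmn, hsg, hcard, if_neg (by omega)]
      exact ⟨⟨by omega, by omega⟩, by linear_combination -hcast⟩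
  -- j maps into the left set
  · intro n hn
    simp only [mem_filter, mem_Icc] at hn
    obtain ⟨⟨hlo, hhi⟩, heq⟩ := hn
    have hn0 : n ≠ 0 := by
      rintro rfl
      norm_num at heq
      omega
    rcases lt_or_gt_of_ne hn0 with hneg | hposn
    · set k := n.natAbs with hk_def
      have hk : 1 ≤ k := by omega
      have hkn : (k : ℤ) = -n := by omega
      have h2 : m * 2 = (3*k+1)*k := by
        have hcast : ((m*2 : ℕ) : ℤ) = (((3*k+1)*k : ℕ) : ℤ) := by
          push_cast
          rw [hkn]
          linear_combination -heq
        exact_mod_cast hcast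
      rw [if_neg (by omega)]
      have hs := sum_Icc_two (a := k+1) (b := 2*k) (by omega)
      have e1 : (k+1) + 2*k = 3*k+1 := by omega
      have e2 : 2*k+1-(k+1) = k := by omega
      rw [e1, e2] at hs
      have hs2 : (∑ i ∈ Icc (k+1) (2*k), i) * 2 = m * 2 := by rw [hs, h2]
      have hsum : (Icc (k+1) (2*k)).sum id = m := by
        simp only [id_eq]
        omega
      simp only [mem_filter, mem_powerset]
      refine ⟨⟨?_, hsum⟩, k, hk, Or.inr rfl⟩
      intro p hp
      have := part_le_sum hp
      rw [hsum] at this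
      rw [mem_Icc] at hp ⊢
      omega
    · set k := n.natAbs with hk_def
      have hk : 1 ≤ k := by omega
      have hkn : (k : ℤ) = n := by omega
      have h2 : m * 2 = (3*k-1)*k := by
        have hcast : ((m*2 : ℕ) : ℤ) = (((3*k-1)*k : ℕ) : ℤ) := by
          push_cast [Nat.cast_sub (show 1 ≤ 3*k by omega)]
          rw [hkn]
          linear_combination -heq
        exact_mod_cast hcast
      rw [if_pos (by omega)]
      have hs := sum_Icc_two (a := k) (b := 2*k-1) (by omega)
      have e1 : k + (2*k-1) = 3*k-1 := by omega
      have e2 : 2*k-1+1-k = k := by omega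
      rw [e1, e2] at hs
      have hs2 : (∑ i ∈ Icc k (2*k-1), i) * 2 = m * 2 := by rw [hs, h2]
      have hsum : (Icc k (2*k-1)).sum id = m := by
        simp only [id_eq]
        omega
      simp only [mem_filter, mem_powerset]
      refine ⟨⟨?_, hsum⟩, k, hk, Or.inl rfl⟩
      intro p hp
      have := part_le_sum hp
      rw [hsum] at this
      rw [mem_Icc] at hp ⊢
      omega
  -- left inverse
  · intro P hP
    obtain ⟨k, hk, hcase⟩ := hleft P hP
    rcases hcase with ⟨h1, _⟩ | ⟨h1, _⟩
    · obtain ⟨hmn, _, hsg, hcard⟩ := stair1 hk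
      rw [h1, hmn, hsg, hcard, if_pos rfl, if_pos (by exact_mod_cast hk), Int.natAbs_natCast]
    · obtain ⟨hmn, _, hsg, hcard⟩ := stair2 hk
      rw [h1, hmn, hsg, hcard, if_neg (by omega), if_neg (by omega)]
      simp
  -- right inverse
  · intro n hn
    simp only [mem_filter, mem_Icc] at hn
    obtain ⟨⟨hlo, hhi⟩, heq⟩ := hn
    have hn0 : n ≠ 0 := by
      rintro rfl
      norm_num at heq
      omega
    rcases lt_or_gt_of_ne hn0 with hneg | hposn
    · have hk : 1 ≤ n.natAbs := by omega
      rw [show (if 0 < n then Icc n.natAbs (2*n.natAbs - 1) else Icc (n.natAbs + 1) (2*n.natAbs))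
          = Icc (n.natAbs + 1) (2*n.natAbs) from if_neg (by omega)]
      obtain ⟨hmn, _, hsg, hcard⟩ := stair2 hk
      rw [hmn, hsg, hcard, if_neg (by omega)]
      omega
    · have hk : 1 ≤ n.natAbs := by omega
      rw [show (if 0 < n then Icc n.natAbs (2*n.natAbs - 1) else Icc (n.natAbs + 1) (2*n.natAbs))
          = Icc n.natAbs (2*n.natAbs - 1) from if_pos (by omega)]
      obtain ⟨hmn, _, hsg, hcard⟩ := stair1 hk
      rw [hmn, hsg, hcard, if_pos rfl]
      omega
  -- values agree
  · intro P hP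
    obtain ⟨k, hk, hcase⟩ := hleft P hP
    rcases hcase with ⟨h1, _⟩ | ⟨h1, _⟩
    · obtain ⟨hmn, _, hsg, hcard⟩ := stair1 hk
      rw [h1, hmn, hsg, hcard, if_pos rfl, neg_one_pow_eq]
    · obtain ⟨hmn, _, hsg, hcard⟩ := stair2 hk
      rw [h1, hmn, hsg, hcard,
        show (if (k+1:ℕ) = k then ((k:ℕ):ℤ) else -((k:ℕ):ℤ)) = -((k:ℕ):ℤ) from if_neg (by omega),
        neg_one_pow_eq]
      by_cases he : Even ((k:ℤ))
      · rw [if_pos he, if_pos (even_neg.mpr he)]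
      · rw [if_neg he, if_neg (fun hc => he (even_neg.mp hc))]

end Pent

open PowerSeries


/-- Euler's pentagonal number theorem, stated coefficientwise: the coefficient of
q^m in ∏_{n≥1}(1 − qⁿ) (truncated at the first m+1 factors, which determines the
coefficient) equals ∑_{n∈ℤ, (3n²−n)/2 = m} (−1)ⁿ. -/
theorem pentagonal_number_theorem (m : ℕ) :
    PowerSeries.coeff (R := ℤ) m
        (∏ n ∈ Finset.range (m + 1), (1 - (PowerSeries.X : PowerSeries ℤ) ^ (n + 1))) =
      ∑ n ∈ Finset.Icc (-(m : ℤ) - 1) ((m : ℤ) + 1),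
        if 3 * n ^ 2 - n = 2 * (m : ℤ) then (if Even n then 1 else -1) else 0 := by
  classical
  have step1 : PowerSeries.coeff (R := ℤ) m
      (∏ n ∈ Finset.range (m + 1), (1 - (PowerSeries.X : PowerSeries ℤ) ^ (n + 1))) =
      ∑ S ∈ (Finset.range (m+1)).powerset,
        if ∑ i ∈ S, (i+1) = m then ((-1:ℤ)^S.card) else 0 := by
    have h1 : ∀ n ∈ Finset.range (m+1),
        (1 - (PowerSeries.X : PowerSeries ℤ) ^ (n + 1)) = (-(X:PowerSeries ℤ)^(n+1)) + 1 := by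
      intro n _; ring
    rw [Finset.prod_congr rfl h1, Finset.prod_add, map_sum]
    refine Finset.sum_congr rfl ?_
    intro S hS
    rw [Finset.prod_const_one, mul_one]
    have h2 : ∏ i ∈ S, (-(X:PowerSeries ℤ)^(i+1)) = (-1)^S.card * X^(∑ i ∈ S, (i+1)) := by
      calc ∏ i ∈ S, (-(X:PowerSeries ℤ)^(i+1)) = ∏ i ∈ S, ((-1) * (X:PowerSeries ℤ)^(i+1)) := by
            refine Finset.prod_congr rfl ?_; intro i _; ring
      _ = (-1)^S.card * ∏ i ∈ S, (X:PowerSeries ℤ)^(i+1) := by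
            rw [Finset.prod_mul_distrib, Finset.prod_const]
      _ = (-1)^S.card * X^(∑ i ∈ S, (i+1)) := by rw [Finset.prod_pow_eq_pow_sum]
    have h3 : ((-1 : ℤ⟦X⟧))^S.card = C ((-1:ℤ)^S.card) := by rw [map_pow, map_neg, map_one]
    rw [h2, h3, coeff_C_mul, coeff_X_pow]
    by_cases h : ∑ i ∈ S, (i+1) = m
    · simp [h]
    · rw [if_neg (fun hh => h hh.symm), if_neg h, mul_zero]
  rcases Nat.eq_zero_or_pos m with rfl | hm
  · rw [step1]
    norm_num
    decide
  · rw [step1, ← Finset.sum_filter]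
    have step2 : ∑ S ∈ (Finset.range (m+1)).powerset.filter (fun S => ∑ i ∈ S, (i+1) = m),
        (-1:ℤ)^S.card
        = ∑ P ∈ (Finset.Icc 1 m).powerset.filter (fun P => P.sum id = m), (-1:ℤ)^P.card := by
      refine Finset.sum_nbij' (i := fun S => S.image (· + 1)) (j := fun P => P.image (· - 1))
        ?_ ?_ ?_ ?_ ?_
      · intro S hS
        simp only [Finset.mem_filter, Finset.mem_powerset] at hS ⊢
        obtain ⟨hsub, hsum⟩ := hS
        have hsum2 : (S.image (· + 1)).sum id = m := by
          rw [Finset.sum_image (fun a _ b _ h => by omega)]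
          simpa using hsum
        refine ⟨?_, hsum2⟩
        intro p hp
        rw [Finset.mem_image] at hp
        obtain ⟨i, hi, rfl⟩ := hp
        have := Pent.part_le_sum (P := S.image (· + 1))
          (Finset.mem_image_of_mem _ hi)
        rw [hsum2] at this
        rw [Finset.mem_Icc]
        omega
      · intro P hP
        simp only [Finset.mem_filter, Finset.mem_powerset] at hP ⊢
        obtain ⟨hsub, hsum⟩ := hP
        have hpos : ∀ p ∈ P, 1 ≤ p ∧ p ≤ m := by
          intro p hp
          have := hsub hp
          rw [Finset.mem_Icc] at this
          exact this
        constructor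
        · intro x hx
          rw [Finset.mem_image] at hx
          obtain ⟨p, hp, rfl⟩ := hx
          have := hpos p hp
          rw [Finset.mem_range]
          omega
        · rw [Finset.sum_image (fun a ha b hb h => by
            have := hpos a ha; have := hpos b hb; omega)]
          rw [← hsum]
          refine Finset.sum_congr rfl ?_
          intro p hp
          have := hpos p hp
          simp only [id_eq]
          omega
      · intro S hS
        rw [Finset.image_image]
        have : ((· - 1) ∘ (· + 1)) = (id : ℕ → ℕ) := by
          funext x; simp
        rw [this, Finset.image_id]
      · intro P hP
        simp only [Finset.mem_filter, Finset.mem_powerset] at hP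
        obtain ⟨hsub, hsum⟩ := hP
        rw [Finset.image_image]
        have : ∀ p ∈ P, ((· + 1) ∘ (· - 1)) p = id p := by
          intro p hp
          have := hsub hp
          rw [Finset.mem_Icc] at this
          simp only [Function.comp, id_eq]
          omega
        rw [Finset.image_congr this, Finset.image_id]
      · intro S hS
        simp only [Finset.mem_filter, Finset.mem_powerset] at hS
        rw [Finset.card_image_of_injOn (fun a _ b _ h => by omega)]
    rw [step2]
    have step3 := (Finset.sum_filter_add_sum_filter_not
      ((Finset.Icc 1 m).powerset.filter (fun P => P.sum id = m)) (fun P => Pent.IsPent P)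
      (fun P => (-1:ℤ)^P.card)).symm
    rw [step3, Pent.sum_nonpent_zero hm, add_zero, Pent.fix_sum hm, Finset.sum_filter]
end

section
/- Jacobi's triple product identity: for complex numbers x, y with |x| < 1 and y ≠ 0, ∏_{n≥1} (1 − x^{2n})(1 + x^{2n−1}y)(1 + x^{2n−1}y^{−1}) = ∑_{n∈ℤ} x^{n²} yⁿ. -/
open Finset Filter Topology

noncomputable section
namespace JTP

/-- q-Pochhammer-type product. -/
def Q (q : ℂ) (m : ℕ) : ℂ := ∏ j ∈ Finset.range m, (1 - q ^ (j + 1))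

lemma Q_zero (q : ℂ) : Q q 0 = 1 := by simp [Q]

lemma Q_succ (q : ℂ) (m : ℕ) : Q q (m + 1) = Q q m * (1 - q ^ (m + 1)) := by
  simp [Q, Finset.prod_range_succ]

lemma one_sub_pow_ne {q : ℂ} (hq : ‖q‖ < 1) {j : ℕ} (hj : j ≠ 0) : (1 : ℂ) - q ^ j ≠ 0 := by
  intro h
  have h1 : q ^ j = 1 := by linear_combination -h
  have : ‖q ^ j‖ < 1 := by
    rw [norm_pow]
    exact pow_lt_one₀ (norm_nonneg q) hq hj
  rw [h1] at this; simp at this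

lemma Q_ne_zero {q : ℂ} (hq : ‖q‖ < 1) (m : ℕ) : Q q m ≠ 0 := by
  refine Finset.prod_ne_zero_iff.2 fun j _ => one_sub_pow_ne hq (Nat.succ_ne_zero j)

/-- Gaussian binomial with parameter q, as a complex number. -/
def g (q : ℂ) (m k : ℕ) : ℂ := if k ≤ m then Q q m / (Q q k * Q q (m - k)) else 0

lemma g_eq_zero {q : ℂ} {m k : ℕ} (h : m < k) : g q m k = 0 := by
  simp [g, Nat.not_le.2 h]

lemma g_zero {q : ℂ} (hq : ‖q‖ < 1) (m : ℕ) : g q m 0 = 1 := by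
  simp [g, Q_zero, div_self (Q_ne_zero hq m)]

lemma g_self {q : ℂ} (hq : ‖q‖ < 1) (m : ℕ) : g q m m = 1 := by
  simp [g, Q_zero, div_self (Q_ne_zero hq m)]

lemma g_symm {q : ℂ} {m k : ℕ} (h : k ≤ m) : g q m k = g q m (m - k) := by
  rw [g, g, if_pos h, if_pos (Nat.sub_le m k), Nat.sub_sub_self h, mul_comm]

lemma gA {q : ℂ} (hq : ‖q‖ < 1) (m k : ℕ) :
    g q (m + 1) (k + 1) = g q m k + q ^ (k + 1) * g q m (k + 1) := by
  rcases lt_trichotomy k m with h | rfl | h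
  · -- main case : k + 1 ≤ m
    obtain ⟨e, rfl⟩ : ∃ e, m = k + 1 + e := ⟨m - (k + 1), by omega⟩
    rw [g, g, g, if_pos (by omega), if_pos (by omega), if_pos (by omega)]
    rw [show k + 1 + e + 1 - (k + 1) = e + 1 by omega,
        show k + 1 + e - k = e + 1 by omega,
        show k + 1 + e - (k + 1) = e by omega,
        show k + 1 + e + 1 = (k + 1 + e) + 1 by omega, Q_succ,
        show k + 1 = k + 1 by rfl, Q_succ q k, Q_succ q e]
    have h1 := Q_ne_zero hq (k + 1 + e)
    have h2 := Q_ne_zero hq k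
    have h3 := Q_ne_zero hq e
    have h4 : (1 : ℂ) - q ^ (k + 1) ≠ 0 := one_sub_pow_ne hq (by omega)
    have h5 : (1 : ℂ) - q ^ (e + 1) ≠ 0 := one_sub_pow_ne hq (by omega)
    field_simp
    ring
  · -- k = m
    rw [g, g, g, if_pos le_rfl, if_pos le_rfl, if_neg (by omega)]
    simp [Q_zero, div_self (Q_ne_zero hq (k+1)), div_self (Q_ne_zero hq k)]
  · rw [g_eq_zero (by omega), g_eq_zero (by omega), g_eq_zero (by omega)]; ring

lemma gB {q : ℂ} (hq : ‖q‖ < 1) (m k : ℕ) :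
    g q (m + 1) (k + 1) = q ^ (m - k) * g q m k + g q m (k + 1) := by
  rcases lt_trichotomy k m with h | rfl | h
  · obtain ⟨e, rfl⟩ : ∃ e, m = k + 1 + e := ⟨m - (k + 1), by omega⟩
    rw [g, g, g, if_pos (by omega), if_pos (by omega), if_pos (by omega)]
    rw [show k + 1 + e + 1 - (k + 1) = e + 1 by omega,
        show k + 1 + e - k = e + 1 by omega,
        show k + 1 + e - (k + 1) = e by omega,
        show k + 1 + e + 1 = (k + 1 + e) + 1 by omega, Q_succ,
        Q_succ q k, Q_succ q e]
    have h1 := Q_ne_zero hq (k + 1 + e)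
    have h2 := Q_ne_zero hq k
    have h3 := Q_ne_zero hq e
    have h4 : (1 : ℂ) - q ^ (k + 1) ≠ 0 := one_sub_pow_ne hq (by omega)
    have h5 : (1 : ℂ) - q ^ (e + 1) ≠ 0 := one_sub_pow_ne hq (by omega)
    field_simp
    ring
  · rw [g, g, g, if_pos le_rfl, if_pos le_rfl, if_neg (by omega)]
    simp [Q_zero, div_self (Q_ne_zero hq (k+1)), div_self (Q_ne_zero hq k)]
  · rw [g_eq_zero (by omega), g_eq_zero (by omega), g_eq_zero (by omega)]; ring

end JTP

namespace JTP

/-- coefficient in the finite Jacobi identity -/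
def cc (q : ℂ) (N : ℕ) (n : ℤ) : ℂ :=
  if -(N : ℤ) ≤ n then g q (2 * N) (N + n).toNat else 0

lemma cc_eq_zero {q : ℂ} {N : ℕ} {n : ℤ} (h : N < n.natAbs) : cc q N n = 0 := by
  rcases le_or_gt (-(N:ℤ)) n with h1 | h1
  · rw [cc, if_pos h1, g_eq_zero (by omega)]
  · rw [cc, if_neg (by omega)]

lemma cc_symm {q : ℂ} (hq : ‖q‖ < 1) (N : ℕ) (n : ℤ) : cc q N n = cc q N (-n) := by
  rcases le_or_gt n.natAbs N with h | h
  · rw [cc, cc, if_pos (by omega), if_pos (by omega)]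
    rw [g_symm (show (N + n).toNat ≤ 2 * N by omega)]
    congr 1 <;> omega
  · rw [cc_eq_zero h, cc_eq_zero (by omega)]

/-- full coefficient: Gaussian binomial times x^(n^2). -/
def gam (x : ℂ) (N : ℕ) (n : ℤ) : ℂ := cc (x ^ 2) N n * x ^ (n.natAbs ^ 2)

lemma gam_eq_zero {x : ℂ} {N : ℕ} {n : ℤ} (h : N < n.natAbs) : gam x N n = 0 := by
  rw [gam, cc_eq_zero h, zero_mul]

lemma gam_symm {x : ℂ} (hq : ‖x ^ 2‖ < 1) (N : ℕ) (n : ℤ) : gam x N n = gam x N (-n) := by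
  rw [gam, gam, cc_symm hq, Int.natAbs_neg]

lemma gam_rec {x : ℂ} (hx : ‖x‖ < 1) (N : ℕ) (n : ℤ) (hn : n.natAbs ≤ N + 1) :
    gam x (N + 1) n = (1 + (x ^ 2) ^ (2 * N + 1)) * gam x N n
      + x ^ (2 * N + 1) * (gam x N (n - 1) + gam x N (n + 1)) := by
  have hq : ‖x ^ 2‖ < 1 := by
    rw [norm_pow]; exact pow_lt_one₀ (norm_nonneg x) hx (by omega)
  -- reduce to the case 0 ≤ n by symmetry
  suffices H : ∀ n : ℤ, 0 ≤ n → n.natAbs ≤ N + 1 →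
      gam x (N + 1) n = (1 + (x ^ 2) ^ (2 * N + 1)) * gam x N n
        + x ^ (2 * N + 1) * (gam x N (n - 1) + gam x N (n + 1)) by
    rcases le_or_gt 0 n with h0 | h0
    · exact H n h0 hn
    · have := H (-n) (by omega) (by omega)
      rw [gam_symm hq (N+1) n, this,
        show -n - 1 = -(n + 1) by ring, show -n + 1 = -(n - 1) by ring,
        ← gam_symm hq N n, ← gam_symm hq N (n+1), ← gam_symm hq N (n-1)]
      ring
  intro n h0 hn
  obtain ⟨t, rfl⟩ : ∃ t : ℕ, n = (t : ℤ) := ⟨n.toNat, by omega⟩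
  have ht1 : t ≤ N + 1 := by omega
  rcases Nat.eq_zero_or_pos (N + t) with hk0 | hkpos
  · -- N = 0, t = 0
    have hN : N = 0 := by omega
    have hn0 : t = 0 := by omega
    subst hN hn0
    have hQ2 : Q (x^2) 2 = (1 - x^2) * (1 - (x^2)^2) := by
      rw [show (2:ℕ) = 1 + 1 from rfl, Q_succ, Q_succ, Q_zero]; ring
    have hQ1 : Q (x^2) 1 = 1 - x^2 := by
      rw [show (1:ℕ) = 0 + 1 from rfl, Q_succ, Q_zero]; ring
    have h1 : gam x 1 0 = g (x^2) 2 1 := by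
      rw [gam, cc, if_pos (by omega)]; simp
    have h2 : gam x 0 0 = 1 := by
      rw [gam, cc, if_pos (by omega)]; simp [g_zero hq]
    have h3 : gam x 0 ((0:ℤ) - 1) = 0 := gam_eq_zero (by simp)
    have h4 : gam x 0 ((0:ℤ) + 1) = 0 := gam_eq_zero (by simp)
    have hg : g (x^2) 2 1 = 1 + x^2 := by
      rw [g, if_pos (by omega), show (2:ℕ) - 1 = 1 by omega]
      rw [div_eq_iff (mul_ne_zero (Q_ne_zero hq 1) (Q_ne_zero hq 1))]
      rw [hQ2, hQ1]
      ring
    have h3' : gam x 0 (-1) = 0 := gam_eq_zero (by simp)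
    have h4' : gam x 0 1 = 0 := gam_eq_zero (by simp)
    norm_num [h1, h2, h3', h4', hg]
  · -- generic case
    obtain ⟨k0, hk⟩ : ∃ k0, N + t = k0 + 1 := ⟨N + t - 1, by omega⟩
    have e1 : cc (x^2) (N + 1) (t:ℤ) = g (x^2) (2 * N + 1 + 1) (k0 + 1 + 1) := by
      rw [cc, if_pos (by omega)]
      congr 1 <;> omega
    have e2 : cc (x^2) N (t:ℤ) = g (x^2) (2 * N) (k0 + 1) := by
      rw [cc, if_pos (by omega)]
      congr 1 <;> omega
    have e3 : cc (x^2) N ((t:ℤ) - 1) = g (x^2) (2 * N) k0 := by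
      rw [cc, if_pos (by omega)]
      congr 1 <;> omega
    have e4 : cc (x^2) N ((t:ℤ) + 1) = g (x^2) (2 * N) (k0 + 1 + 1) := by
      rw [cc, if_pos (by omega)]
      congr 1 <;> omega
    have hB := gB hq (2 * N + 1) (k0 + 1)
    have hA1 := gA hq (2 * N) k0
    have hA2 := gA hq (2 * N) (k0 + 1)
    have hmerge : (x^2) ^ (2 * N + 1 - (k0 + 1)) * (x^2) ^ (k0 + 1) = (x^2) ^ (2 * N + 1) := by
      rw [← pow_add]; congr 1; omega
    have hcc : cc (x^2) (N + 1) (t:ℤ) = (1 + (x^2) ^ (2 * N + 1)) * cc (x^2) N (t:ℤ)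
        + (x^2) ^ (2 * N + 1 - (k0 + 1)) * cc (x^2) N ((t:ℤ) - 1)
        + (x^2) ^ (k0 + 1 + 1) * cc (x^2) N ((t:ℤ) + 1) := by
      rw [e1, e2, e3, e4, hB, hA1, hA2]
      rw [mul_add]
      rw [show (x^2) ^ (2*N+1-(k0+1)) * ((x^2) ^ (k0+1) * g (x^2) (2*N) (k0+1))
           = (x^2) ^ (2*N+1) * g (x^2) (2*N) (k0+1) by rw [← mul_assoc, hmerge]]
      ring
    have pw1 : (x^2) ^ (2 * N + 1 - (k0 + 1)) * x ^ ((t:ℤ).natAbs ^ 2)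
        = x ^ (2 * N + 1) * x ^ (((t:ℤ) - 1).natAbs ^ 2) := by
      rw [← pow_mul, ← pow_add, ← pow_add]
      congr 1
      rcases Nat.eq_zero_or_pos t with ht0 | htpos
      · subst ht0
        have hna : ((0:ℤ)).natAbs = 0 := rfl
        have hna1 : (((0:ℕ):ℤ) - 1).natAbs = 1 := by omega
        rw [hna1]
        norm_num
        omega
      · obtain ⟨u, rfl⟩ : ∃ u, t = u + 1 := ⟨t - 1, by omega⟩
        have hna : (((u+1:ℕ):ℤ)).natAbs = u + 1 := by omega
        have hna1 : ((((u+1:ℕ)):ℤ) - 1).natAbs = u := by omega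
        rw [hna, hna1]
        have hs1 : (u+1)^2 = u^2 + 2*u + 1 := by ring
        rw [hs1]
        have hsub : 2 * N + 1 - (k0 + 1) = N - u := by omega
        rw [hsub]
        obtain ⟨d, rfl⟩ : ∃ d, N = u + d := ⟨N - u, by omega⟩
        rw [show u + d - u = d by omega]
        ring
    have pw2 : (x^2) ^ (k0 + 1 + 1) * x ^ ((t:ℤ).natAbs ^ 2)
        = x ^ (2 * N + 1) * x ^ (((t:ℤ) + 1).natAbs ^ 2) := by
      rw [← pow_mul, ← pow_add, ← pow_add]
      congr 1
      have hna : ((t:ℤ)).natAbs = t := by omega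
      have hna1 : (((t:ℤ)) + 1).natAbs = t + 1 := by omega
      rw [hna, hna1]
      have hs1 : (t+1)^2 = t^2 + 2*t + 1 := by ring
      rw [hs1]
      generalize t ^ 2 = s
      omega
    rw [gam, gam, gam, gam, hcc]
    linear_combination cc (x^2) N ((t:ℤ) - 1) * pw1 + cc (x^2) N ((t:ℤ) + 1) * pw2

end JTP

namespace JTP

def T (x y : ℂ) (N : ℕ) : ℂ := ∑ n ∈ Finset.Icc (-(N:ℤ)) (N:ℤ), gam x N n * y ^ n

lemma sum_ext {x y : ℂ} (N : ℕ) :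
    T x y N = ∑ n ∈ Finset.Icc (-((N:ℤ)+1)) ((N:ℤ)+1), gam x N n * y ^ n := by
  refine Finset.sum_subset (Finset.Icc_subset_Icc (by omega) (by omega)) ?_
  intro n hn hns
  simp only [Finset.mem_Icc] at hn hns
  rw [gam_eq_zero (by omega), zero_mul]

lemma sum_shift (a b : ℤ) (f : ℤ → ℂ) :
    ∑ n ∈ Finset.Icc a b, f n = ∑ n ∈ Finset.Icc (a + 1) (b + 1), f (n - 1) := by
  rw [← Finset.map_add_right_Icc a b 1, Finset.sum_map]
  simp [addRightEmbedding]

lemma T_succ {x y : ℂ} (hx : ‖x‖ < 1) (hy : y ≠ 0) (N : ℕ) :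
    T x y (N + 1) = T x y N * ((1 + x ^ (2 * N + 1) * y) * (1 + x ^ (2 * N + 1) * y⁻¹)) := by
  have hfac : (1 + x ^ (2 * N + 1) * y) * (1 + x ^ (2 * N + 1) * y⁻¹)
      = 1 + (x ^ 2) ^ (2 * N + 1) + x ^ (2 * N + 1) * y + x ^ (2 * N + 1) * y⁻¹ := by
    have h2 : x ^ (2 * N + 1) * y * (x ^ (2 * N + 1) * y⁻¹) = (x ^ 2) ^ (2 * N + 1) := by
      have hyy : y * y⁻¹ = 1 := mul_inv_cancel₀ hy
      calc x ^ (2*N+1) * y * (x ^ (2*N+1) * y⁻¹)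
          = x ^ (2*N+1) * x ^ (2*N+1) * (y * y⁻¹) := by ring
        _ = (x ^ 2) ^ (2 * N + 1) := by
            rw [hyy, mul_one, ← pow_add,
              show (2*N+1) + (2*N+1) = 2 * (2*N+1) by ring, pow_mul]
    calc (1 + x ^ (2 * N + 1) * y) * (1 + x ^ (2 * N + 1) * y⁻¹)
        = 1 + x ^ (2 * N + 1) * y * (x ^ (2 * N + 1) * y⁻¹)
          + x ^ (2 * N + 1) * y + x ^ (2 * N + 1) * y⁻¹ := by ring
      _ = _ := by rw [h2]
  rw [hfac]
  have hTN : T x y (N + 1)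
      = ∑ n ∈ Finset.Icc (-((N:ℤ)+1)) ((N:ℤ)+1),
          ((1 + (x ^ 2) ^ (2 * N + 1)) * gam x N n
            + x ^ (2 * N + 1) * (gam x N (n - 1) + gam x N (n + 1))) * y ^ n := by
    rw [T]
    rw [show (((N:ℕ)+1 : ℕ) : ℤ) = (N:ℤ) + 1 by push_cast; ring]
    refine Finset.sum_congr rfl ?_
    intro n hn
    simp only [Finset.mem_Icc] at hn
    rw [gam_rec hx N n (by omega)]
  rw [hTN]
  -- split the sum
  have split : ∀ n : ℤ, ((1 + (x ^ 2) ^ (2 * N + 1)) * gam x N n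
            + x ^ (2 * N + 1) * (gam x N (n - 1) + gam x N (n + 1))) * y ^ n
      = (1 + (x ^ 2) ^ (2 * N + 1)) * (gam x N n * y ^ n)
        + x ^ (2 * N + 1) * (gam x N (n - 1) * y ^ n)
        + x ^ (2 * N + 1) * (gam x N (n + 1) * y ^ n) := by
    intro n; ring
  simp only [split]
  rw [Finset.sum_add_distrib, Finset.sum_add_distrib, ← Finset.mul_sum, ← Finset.mul_sum,
    ← Finset.mul_sum]
  have S0 : ∑ n ∈ Finset.Icc (-((N:ℤ)+1)) ((N:ℤ)+1), gam x N n * y ^ n = T x y N :=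
    (sum_ext N).symm
  have Sm : ∑ n ∈ Finset.Icc (-((N:ℤ)+1)) ((N:ℤ)+1), gam x N (n - 1) * y ^ n
      = y * T x y N := by
    have h1 := sum_shift (-(N:ℤ)) ((N:ℤ)) (fun m => gam x N m * y ^ (m + 1))
    have h2 : ∑ n ∈ Finset.Icc (-(N:ℤ) + 1) ((N:ℤ) + 1), gam x N (n - 1) * y ^ (n - 1 + 1)
        = ∑ n ∈ Finset.Icc (-(N:ℤ) + 1) ((N:ℤ) + 1), gam x N (n - 1) * y ^ n :=
      Finset.sum_congr rfl fun n _ => by rw [show n - 1 + 1 = n by ring]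
    have h3 : ∑ n ∈ Finset.Icc (-(N:ℤ) + 1) ((N:ℤ) + 1), gam x N (n - 1) * y ^ n
        = ∑ n ∈ Finset.Icc (-((N:ℤ) + 1)) ((N:ℤ) + 1), gam x N (n - 1) * y ^ n := by
      refine Finset.sum_subset (Finset.Icc_subset_Icc (by omega) (by omega)) ?_
      intro n hn hns
      simp only [Finset.mem_Icc] at hn hns
      rw [gam_eq_zero (show (N:ℕ) < (n-1).natAbs by omega), zero_mul]
    rw [← h3, ← h2, ← h1, T, Finset.mul_sum]
    refine Finset.sum_congr rfl fun m _ => ?_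
    rw [zpow_add₀ hy m 1, zpow_one]
    ring
  have Sp : ∑ n ∈ Finset.Icc (-((N:ℤ)+1)) ((N:ℤ)+1), gam x N (n + 1) * y ^ n
      = y⁻¹ * T x y N := by
    have h1 := sum_shift (-((N:ℤ)+1)) ((N:ℤ)+1) (fun n => gam x N (n + 1) * y ^ n)
    rw [h1]
    have h2 : ∑ n ∈ Finset.Icc (-((N:ℤ)+1) + 1) (((N:ℤ)+1) + 1), gam x N (n - 1 + 1) * y ^ (n - 1)
        = ∑ n ∈ Finset.Icc (-(N:ℤ)) ((N:ℤ)+2), gam x N n * y ^ (n - 1) := by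
      rw [show -((N:ℤ)+1) + 1 = -(N:ℤ) by ring, show ((N:ℤ)+1) + 1 = (N:ℤ)+2 by ring]
      exact Finset.sum_congr rfl fun n _ => by rw [show n - 1 + 1 = n by ring]
    rw [h2]
    have h3 : ∑ n ∈ Finset.Icc (-(N:ℤ)) ((N:ℤ)+2), gam x N n * y ^ (n - 1)
        = ∑ n ∈ Finset.Icc (-(N:ℤ)) ((N:ℤ)), gam x N n * y ^ (n - 1) := by
      refine (Finset.sum_subset (Finset.Icc_subset_Icc (by omega) (by omega)) ?_).symm
      intro n hn hns
      simp only [Finset.mem_Icc] at hn hns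
      rw [gam_eq_zero (show (N:ℕ) < n.natAbs by omega), zero_mul]
    rw [h3, T, Finset.mul_sum]
    refine Finset.sum_congr rfl fun m _ => ?_
    rw [zpow_sub₀ hy m 1]
    rw [div_eq_mul_inv, zpow_one]
    ring
  rw [S0, Sm, Sp]
  ring

lemma gam_zero_zero {x : ℂ} (hx : ‖x‖ < 1) : gam x 0 0 = 1 := by
  have hq : ‖x ^ 2‖ < 1 := by
    rw [norm_pow]; exact pow_lt_one₀ (norm_nonneg x) hx (by omega)
  rw [gam, cc, if_pos (by omega)]
  simp [g_zero hq]

lemma prod_eq_T {x y : ℂ} (hx : ‖x‖ < 1) (hy : y ≠ 0) (N : ℕ) :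
    ∏ j ∈ Finset.range N, ((1 + x ^ (2 * j + 1) * y) * (1 + x ^ (2 * j + 1) * y⁻¹))
      = T x y N := by
  induction N with
  | zero => simp [T, gam_zero_zero hx]
  | succ N ih => rw [Finset.prod_range_succ, ih, T_succ hx hy]

end JTP

namespace JTP

/-- partial geometric sums are bounded -/
lemma geom_partial_le {r : ℝ} (h0 : 0 ≤ r) (h1 : r < 1) (m : ℕ) :
    ∑ j ∈ Finset.range m, r ^ (j + 1) ≤ 1 / (1 - r) := by
  have hsum : Summable (fun j : ℕ => r ^ (j + 1)) := by
    simpa [pow_succ, mul_comm] using (summable_geometric_of_lt_one h0 h1).mul_left r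
  calc ∑ j ∈ Finset.range m, r ^ (j + 1) ≤ ∑' j : ℕ, r ^ (j + 1) :=
        Summable.sum_le_tsum _ (fun j _ => pow_nonneg h0 _) hsum
    _ = r * ∑' j : ℕ, r ^ j := by
        rw [← tsum_mul_left]
        exact tsum_congr fun j => by rw [pow_succ, mul_comm]
    _ = r * (1 - r)⁻¹ := by rw [tsum_geometric_of_lt_one h0 h1]
    _ ≤ 1 * (1 - r)⁻¹ := by
        have : (0:ℝ) ≤ (1 - r)⁻¹ := inv_nonneg.2 (by linarith)
        exact mul_le_mul_of_nonneg_right h1.le this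
    _ = 1 / (1 - r) := by rw [one_mul, one_div]

lemma Q_norm_le {q : ℂ} (hq : ‖q‖ < 1) (m : ℕ) :
    ‖Q q m‖ ≤ Real.exp (1 / (1 - ‖q‖)) := by
  set r := ‖q‖ with hr
  have h0 : 0 ≤ r := norm_nonneg q
  calc ‖Q q m‖ = ∏ j ∈ Finset.range m, ‖1 - q ^ (j + 1)‖ := by rw [Q, norm_prod]
    _ ≤ ∏ j ∈ Finset.range m, (1 + r ^ (j + 1)) := by
        refine Finset.prod_le_prod (fun j _ => norm_nonneg _) (fun j _ => ?_)
        calc ‖1 - q ^ (j+1)‖ ≤ ‖(1:ℂ)‖ + ‖q ^ (j+1)‖ := norm_sub_le _ _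
          _ = 1 + r ^ (j+1) := by rw [norm_one, norm_pow]
    _ ≤ ∏ j ∈ Finset.range m, Real.exp (r ^ (j + 1)) := by
        refine Finset.prod_le_prod (fun j _ => by positivity) (fun j _ => ?_)
        have := Real.add_one_le_exp (r ^ (j+1))
        linarith
    _ = Real.exp (∑ j ∈ Finset.range m, r ^ (j + 1)) := by rw [Real.exp_sum]
    _ ≤ Real.exp (1 / (1 - r)) := Real.exp_le_exp.2 (geom_partial_le h0 hq m)

lemma Q_norm_ge {q : ℂ} (hq : ‖q‖ < 1) (m : ℕ) :
    Real.exp (-(1 / (1 - ‖q‖) ^ 2)) ≤ ‖Q q m‖ := by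
  set r := ‖q‖ with hr
  have h0 : 0 ≤ r := norm_nonneg q
  have h1r : (0:ℝ) < 1 - r := by linarith
  have key : ∀ j : ℕ, Real.exp (-(r ^ (j+1) / (1 - r))) ≤ 1 - r ^ (j+1) := by
    intro j
    have ht0 : 0 ≤ r ^ (j+1) := pow_nonneg h0 _
    have ht1 : r ^ (j+1) ≤ r := by
      calc r ^ (j+1) ≤ r ^ 1 := pow_le_pow_of_le_one h0 hq.le (by omega)
        _ = r := pow_one r
    have htlt : r ^ (j+1) < 1 := by linarith
    have hpos : (0:ℝ) < 1 - r ^ (j+1) := by linarith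
    rw [show (1:ℝ) - r ^ (j+1) = Real.exp (Real.log (1 - r ^ (j+1))) from
      (Real.exp_log hpos).symm]
    apply Real.exp_le_exp.2
    have hlog : Real.log (1 - r ^ (j+1))⁻¹ ≤ (1 - r ^ (j+1))⁻¹ - 1 :=
      Real.log_le_sub_one_of_pos (by positivity)
    rw [Real.log_inv] at hlog
    have heq : (1 - r ^ (j+1))⁻¹ - 1 = r ^ (j+1) / (1 - r ^ (j+1)) := by
      field_simp
      ring
    rw [heq] at hlog
    have hfrac : r ^ (j+1) / (1 - r ^ (j+1)) ≤ r ^ (j+1) / (1 - r) := by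
      apply div_le_div_of_nonneg_left ht0 h1r
      linarith
    linarith
  calc Real.exp (-(1 / (1 - r) ^ 2))
      ≤ Real.exp (-(∑ j ∈ Finset.range m, r ^ (j+1) / (1 - r))) := by
        apply Real.exp_le_exp.2
        rw [neg_le_neg_iff, ← Finset.sum_div, div_le_iff₀ h1r]
        calc ∑ j ∈ Finset.range m, r ^ (j+1) ≤ 1 / (1-r) := geom_partial_le h0 hq m
          _ = 1 / (1-r)^2 * (1-r) := by
              rw [sq]
              field_simp
    _ = ∏ j ∈ Finset.range m, Real.exp (-(r ^ (j+1) / (1 - r))) := by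
        rw [← Real.exp_sum, Finset.sum_neg_distrib]
    _ ≤ ∏ j ∈ Finset.range m, (1 - r ^ (j+1)) :=
        Finset.prod_le_prod (fun j _ => (Real.exp_pos _).le) (fun j _ => key j)
    _ ≤ ∏ j ∈ Finset.range m, ‖1 - q ^ (j+1)‖ := by
        refine Finset.prod_le_prod (fun j _ => ?_) (fun j _ => ?_)
        · have : r ^ (j+1) ≤ r := by
            calc r ^ (j+1) ≤ r ^ 1 := pow_le_pow_of_le_one h0 hq.le (by omega)
              _ = r := pow_one r
          linarith
        · calc (1:ℝ) - r ^ (j+1) = ‖(1:ℂ)‖ - ‖q ^ (j+1)‖ := by rw [norm_one, norm_pow]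
            _ ≤ ‖1 - q ^ (j+1)‖ := norm_sub_norm_le _ _
    _ = ‖Q q m‖ := by rw [Q, norm_prod]

end JTP

namespace JTP

open Complex

lemma hasProd_of_summable_sub_one {f : ℕ → ℂ} (hf : Summable (fun n => f n - 1))
    (h0 : ∀ n, f n ≠ 0) :
    HasProd f (Complex.exp (∑' n, Complex.log (f n))) := by
  have hs : Summable (fun n => Complex.log (f n)) := by
    have hten : Tendsto (fun n => f n - 1) atTop (𝓝 0) := hf.tendsto_atTop_zero
    have hev : ∀ᶠ n in atTop, ‖Complex.log (f n)‖ ≤ (3/2) * ‖f n - 1‖ := by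
      filter_upwards [hten.eventually (Metric.ball_mem_nhds 0 (by norm_num : (0:ℝ) < 1/2))]
        with n hn
      have hsmall : ‖f n - 1‖ ≤ 1/2 := by
        simpa [dist_eq_norm] using hn.le
      have := Complex.norm_log_one_add_half_le_self (z := f n - 1) hsmall
      simpa using this
    refine (hf.norm.mul_left (3/2)).of_norm_bounded_eventually ?_
    rw [Nat.cofinite_eq_atTop]
    filter_upwards [hev] with n hn
    simpa using hn
  have hp : HasProd (fun n => Complex.exp (Complex.log (f n)))
      (Complex.exp (∑' n, Complex.log (f n))) := hs.hasSum.cexp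
  have hfg : (fun n => Complex.exp (Complex.log (f n))) = f :=
    funext fun n => Complex.exp_log (h0 n)
  rwa [hfg] at hp

/-- the Euler factor limit -/
lemma Q_tendsto {q : ℂ} (hq : ‖q‖ < 1) :
    Tendsto (fun m => Q q m) atTop
      (𝓝 (Complex.exp (∑' n : ℕ, Complex.log (1 - q ^ (n+1))))) := by
  have hsum : Summable (fun n : ℕ => (1 - q ^ (n+1)) - 1) := by
    have : Summable (fun n : ℕ => ‖q‖ ^ (n+1)) := by
      simpa [pow_succ, mul_comm] using
        (summable_geometric_of_lt_one (norm_nonneg q) hq).mul_left ‖q‖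
    refine Summable.of_norm_bounded this (fun n => ?_)
    simp [norm_pow]
  have hp := hasProd_of_summable_sub_one hsum (fun n => one_sub_pow_ne hq (Nat.succ_ne_zero n))
  have := hp.tendsto_prod_nat
  simpa [Q] using this

end JTP

namespace JTP

lemma y_bound (y : ℂ) (n : ℤ) : ‖y ^ n‖ ≤ (max 1 (max ‖y‖ ‖y⁻¹‖)) ^ n.natAbs := by
  set s := max 1 (max ‖y‖ ‖y⁻¹‖) with hs
  have hy1 : ‖y‖ ≤ s := le_trans (le_max_left _ _) (le_max_right _ _)
  have hy2 : ‖y⁻¹‖ ≤ s := le_trans (le_max_right _ _) (le_max_right _ _)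
  rcases Int.natAbs_eq n with h | h
  · rw [h, zpow_natCast, norm_pow]
    exact pow_le_pow_left₀ (norm_nonneg y) hy1 _
  · rw [h, zpow_neg, zpow_natCast, ← inv_pow, norm_pow,
      show ((-(n.natAbs:ℤ)).natAbs) = n.natAbs by omega]
    exact pow_le_pow_left₀ (norm_nonneg _) hy2 _

lemma t_bound {r s : ℝ} (hr0 : 0 ≤ r) (hr1 : r < 1) (hs : 1 ≤ s) (K j : ℕ) :
    r ^ (j ^ 2) * s ^ j ≤ s ^ K * (r ^ K * s) ^ (j - K) := by
  have hs0 : (0:ℝ) < s := lt_of_lt_of_le one_pos hs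
  rcases le_or_gt j K with hj | hj
  · have h1 : r ^ (j ^ 2) ≤ 1 := pow_le_one₀ hr0 hr1.le
    have h2 : s ^ j ≤ s ^ K := pow_le_pow_right₀ hs hj
    have h3 : j - K = 0 := by omega
    rw [h3, pow_zero, mul_one]
    calc r ^ (j^2) * s ^ j ≤ 1 * s ^ j := by
          exact mul_le_mul_of_nonneg_right h1 (by positivity)
      _ = s ^ j := one_mul _
      _ ≤ s ^ K := h2
  · have hKj : K * (j - K) ≤ j ^ 2 := by
      calc K * (j - K) ≤ j * j := Nat.mul_le_mul (by omega) (by omega)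
        _ = j ^ 2 := (sq j).symm
    have h1 : r ^ (j ^ 2) ≤ r ^ (K * (j - K)) := pow_le_pow_of_le_one hr0 hr1.le hKj
    calc r ^ (j^2) * s ^ j ≤ r ^ (K * (j - K)) * s ^ j :=
          mul_le_mul_of_nonneg_right h1 (by positivity)
      _ = s ^ K * (r ^ K * s) ^ (j - K) := by
          have hsj : s ^ j = s ^ (j - K) * s ^ K := by
            rw [← pow_add]; congr 1; omega
          rw [mul_pow, hsj, ← pow_mul, pow_mul]
          ring
end JTP

namespace JTP

def fN (x y : ℂ) (N : ℕ) (n : ℤ) : ℂ :=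
  if n.natAbs ≤ N then Q (x ^ 2) N * gam x N n * y ^ n else 0

lemma tsum_fN (x y : ℂ) (N : ℕ) : ∑' n : ℤ, fN x y N n = Q (x ^ 2) N * T x y N := by
  rw [tsum_eq_sum (s := Finset.Icc (-(N:ℤ)) (N:ℤ)) (fun n hn => ?_)]
  · rw [T, Finset.mul_sum]
    refine Finset.sum_congr rfl fun n hn => ?_
    simp only [Finset.mem_Icc] at hn
    rw [fN, if_pos (by omega)]
    ring
  · simp only [Finset.mem_Icc, not_and_or, not_le] at hn
    rw [fN, if_neg (by omega)]

lemma bound_summable {ρ : ℝ} (h0 : 0 ≤ ρ) (h1 : ρ < 1) (K : ℕ) (C : ℝ) :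
    Summable (fun n : ℤ => C * ρ ^ (n.natAbs - K)) := by
  apply Summable.mul_left
  have hN : Summable (fun m : ℕ => ρ ^ (m - K)) := by
    rw [← summable_nat_add_iff K]
    exact (summable_geometric_of_lt_one h0 h1).congr fun m => by congr 1 <;> omega
  refine Summable.of_nat_of_neg (hN.congr fun m => ?_) (hN.congr fun m => ?_) <;>
    (congr 1 <;> omega)

lemma main_tendsto {x y : ℂ} (hx : ‖x‖ < 1) (hy : y ≠ 0) :
    Tendsto (fun N => Q (x ^ 2) N * T x y N) atTop
      (𝓝 (∑' n : ℤ, x ^ (n ^ 2) * y ^ n)) := by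
  have hq : ‖x ^ 2‖ < 1 := by
    rw [norm_pow]; exact pow_lt_one₀ (norm_nonneg x) hx (by omega)
  have hr0 : (0:ℝ) ≤ ‖x‖ := norm_nonneg x
  set s : ℝ := max 1 (max ‖y‖ ‖y⁻¹‖) with hsdef
  have hs1 : (1:ℝ) ≤ s := le_max_left _ _
  have hs0 : (0:ℝ) < s := lt_of_lt_of_le one_pos hs1
  obtain ⟨K, hKlt⟩ : ∃ K : ℕ, ‖x‖ ^ K * s < 1 := by
    obtain ⟨K, hK⟩ := exists_pow_lt_of_lt_one (show (0:ℝ) < 1/s by positivity) hx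
    exact ⟨K, (lt_div_iff₀ hs0).1 (by simpa [one_div] using hK)⟩
  have hρ0 : (0:ℝ) ≤ ‖x‖ ^ K * s := by positivity
  set A : ℝ := Real.exp (1 / (1 - ‖x ^ 2‖)) with hAdef
  set B : ℝ := Real.exp (-(1 / (1 - ‖x ^ 2‖) ^ 2)) with hBdef
  have hB0 : (0:ℝ) < B := Real.exp_pos _
  have hA0 : (0:ℝ) < A := Real.exp_pos _
  have hA' : ∀ m, ‖Q (x ^ 2) m‖ ≤ A := Q_norm_le hq
  have hB' : ∀ m, B ≤ ‖Q (x ^ 2) m‖ := Q_norm_ge hq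
  -- pointwise convergence
  have hconv : ∀ n : ℤ, Tendsto (fun N => fN x y N n) atTop (𝓝 (x ^ (n ^ 2) * y ^ n)) := by
    intro n
    set L := Complex.exp (∑' m : ℕ, Complex.log (1 - (x ^ 2) ^ (m + 1))) with hLdef
    have hL : Tendsto (fun m => Q (x ^ 2) m) atTop (𝓝 L) := Q_tendsto hq
    have hL0 : L ≠ 0 := Complex.exp_ne_zero _
    have h2N : Tendsto (fun N : ℕ => 2 * N) atTop atTop :=
      tendsto_atTop.2 fun b => eventually_atTop.2 ⟨b, fun N hN => by omega⟩
    have hplusnat : Tendsto (fun N : ℕ => ((N : ℤ) + n).toNat) atTop atTop :=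
      tendsto_atTop.2 fun b => eventually_atTop.2 ⟨b + n.natAbs, fun N hN => by omega⟩
    have hminnat : Tendsto (fun N : ℕ => ((N : ℤ) - n).toNat) atTop atTop :=
      tendsto_atTop.2 fun b => eventually_atTop.2 ⟨b + n.natAbs, fun N hN => by omega⟩
    have tQ2 : Tendsto (fun N : ℕ => Q (x ^ 2) (2 * N)) atTop (𝓝 L) := hL.comp h2N
    have tQp : Tendsto (fun N : ℕ => Q (x ^ 2) ((N : ℤ) + n).toNat) atTop (𝓝 L) :=
      hL.comp hplusnat
    have tQm : Tendsto (fun N : ℕ => Q (x ^ 2) ((N : ℤ) - n).toNat) atTop (𝓝 L) :=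
      hL.comp hminnat
    have tmain : Tendsto (fun N : ℕ => Q (x ^ 2) N *
        (Q (x ^ 2) (2 * N) / (Q (x ^ 2) ((N : ℤ) + n).toNat * Q (x ^ 2) ((N : ℤ) - n).toNat)))
        atTop (𝓝 (L * (L / (L * L)))) :=
      hL.mul (tQ2.div (tQp.mul tQm) (mul_ne_zero hL0 hL0))
    have hLone : L * (L / (L * L)) = 1 := by field_simp
    have hxp : x ^ (n ^ 2) = x ^ ((n.natAbs ^ 2 : ℕ)) := by
      rw [← zpow_natCast]
      congr 1
      push_cast
      exact (sq_abs n).symm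
    have tfin := tmain.mul_const (x ^ ((n.natAbs ^ 2 : ℕ)) * y ^ n)
    rw [hLone, one_mul] at tfin
    have hev : (fun N : ℕ => Q (x ^ 2) N *
        (Q (x ^ 2) (2 * N) / (Q (x ^ 2) ((N : ℤ) + n).toNat * Q (x ^ 2) ((N : ℤ) - n).toNat)) *
          (x ^ ((n.natAbs ^ 2 : ℕ)) * y ^ n)) =ᶠ[atTop] (fun N => fN x y N n) := by
      refine eventually_atTop.2 ⟨n.natAbs, fun N hN => ?_⟩
      simp only
      rw [fN, if_pos hN, gam, cc, if_pos (by omega), g, if_pos (by omega),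
        show 2 * N - ((N:ℤ) + n).toNat = ((N:ℤ) - n).toNat by omega]
      ring
    rw [hxp]
    exact tfin.congr' hev
  -- uniform bound
  have hbound : ∀ (N : ℕ) (n : ℤ),
      ‖fN x y N n‖ ≤ A * A / (B * B) * s ^ K * (‖x‖ ^ K * s) ^ (n.natAbs - K) := by
    intro N n
    rcases le_or_gt n.natAbs N with h | h
    · rw [fN, if_pos h, gam, cc, if_pos (by omega), g, if_pos (by omega),
        show 2 * N - ((N:ℤ) + n).toNat = ((N:ℤ) - n).toNat by omega]
      rw [show Q (x^2) N * (Q (x^2) (2*N) / (Q (x^2) ((N:ℤ)+n).toNat * Q (x^2) ((N:ℤ)-n).toNat)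
            * x ^ (n.natAbs ^ 2)) * y ^ n
          = Q (x^2) N * (Q (x^2) (2*N) / (Q (x^2) ((N:ℤ)+n).toNat * Q (x^2) ((N:ℤ)-n).toNat))
            * x ^ (n.natAbs ^ 2) * y ^ n by ring]
      rw [norm_mul, norm_mul, norm_mul, norm_div, norm_mul, norm_pow]
      have h1 : ‖Q (x^2) (2*N)‖ / (‖Q (x^2) ((N:ℤ)+n).toNat‖ * ‖Q (x^2) ((N:ℤ)-n).toNat‖)
          ≤ A / (B * B) := by
        apply div_le_div₀ (le_of_lt hA0) (hA' _) (by positivity)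
        exact mul_le_mul (hB' _) (hB' _) hB0.le ((hB0.trans_le (hB' _)).le.trans (le_refl _))
      calc ‖Q (x^2) N‖ * (‖Q (x^2) (2*N)‖ / (‖Q (x^2) ((N:ℤ)+n).toNat‖ *
              ‖Q (x^2) ((N:ℤ)-n).toNat‖)) * ‖x‖ ^ (n.natAbs ^ 2) * ‖y ^ n‖
          ≤ A * (A / (B * B)) * ‖x‖ ^ (n.natAbs ^ 2) * s ^ n.natAbs := by
            have hy1 := y_bound y n
            have hd0 : (0:ℝ) ≤ A / (B * B) := by positivity
            refine mul_le_mul (mul_le_mul (mul_le_mul (hA' N) h1 (by positivity)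
              hA0.le) le_rfl (by positivity) (by positivity)) hy1 (norm_nonneg _) ?_
            positivity
        _ = A * A / (B * B) * (‖x‖ ^ (n.natAbs ^ 2) * s ^ n.natAbs) := by ring
        _ ≤ A * A / (B * B) * (s ^ K * (‖x‖ ^ K * s) ^ (n.natAbs - K)) := by
            exact mul_le_mul_of_nonneg_left (t_bound hr0 hx hs1 K n.natAbs) (by positivity)
        _ = A * A / (B * B) * s ^ K * (‖x‖ ^ K * s) ^ (n.natAbs - K) := by ring
    · rw [fN, if_neg (by omega)]
      simp only [norm_zero]
      positivity
  have hsummable : Summable (fun n : ℤ => A * A / (B * B) * s ^ K * (‖x‖ ^ K * s) ^ (n.natAbs - K)) :=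
    bound_summable hρ0 hKlt K _
  have htan := tendsto_tsum_of_dominated_convergence hsummable hconv
    (Eventually.of_forall fun N => hbound N)
  exact Filter.Tendsto.congr (fun N => tsum_fN x y N) htan

end JTP

end

/-- Jacobi's triple product identity: for |x| < 1 and y ≠ 0,
∏_{n≥1}(1−x^{2n})(1+x^{2n−1}y)(1+x^{2n−1}y⁻¹) = ∑_{n∈ℤ} x^{n²} yⁿ. -/
theorem jacobi_triple_product (x y : ℂ) (hx : ‖x‖ < 1) (hy : y ≠ 0) :
    ∏' n : ℕ,
        ((1 - x ^ (2 * (n + 1))) * (1 + x ^ (2 * (n + 1) - 1) * y) *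
          (1 + x ^ (2 * (n + 1) - 1) * y⁻¹)) =
      ∑' n : ℤ, x ^ (n ^ 2) * y ^ n := by
  open JTP in
  have hx' : ‖x‖ < 1 := by exact hx
  set F : ℕ → ℂ := fun n => (1 - x ^ (2 * (n + 1))) * (1 + x ^ (2 * (n + 1) - 1) * y) *
      (1 + x ^ (2 * (n + 1) - 1) * y⁻¹) with hF
  have hparts : ∀ N : ℕ, ∏ j ∈ Finset.range N, F j = Q (x ^ 2) N * T x y N := by
    intro N
    have step1 : ∏ j ∈ Finset.range N, F j
        = (∏ j ∈ Finset.range N, (1 - (x ^ 2) ^ (j + 1))) *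
          ∏ j ∈ Finset.range N, ((1 + x ^ (2 * j + 1) * y) * (1 + x ^ (2 * j + 1) * y⁻¹)) := by
      rw [← Finset.prod_mul_distrib]
      refine Finset.prod_congr rfl fun j _ => ?_
      rw [hF]
      simp only
      rw [show 2 * (j + 1) - 1 = 2 * j + 1 by omega, ← pow_mul]
      ring
    rw [step1, prod_eq_T hx' hy]
    rfl
  have hlim : Tendsto (fun N => ∏ j ∈ Finset.range N, F j) atTop
      (𝓝 (∑' n : ℤ, x ^ (n ^ 2) * y ^ n)) :=
    Filter.Tendsto.congr (fun N => (hparts N).symm) (main_tendsto hx' hy)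
  by_cases hzero : ∀ n, F n ≠ 0
  · -- no vanishing factor
    have hgeo : ∀ (c : ℂ) (l k : ℕ), 1 ≤ l → Summable (fun n : ℕ => c * x ^ (l * n + k)) := by
      intro c l k hl
      have base : Summable (fun n : ℕ => ‖c‖ * ‖x‖ ^ n) :=
        (summable_geometric_of_lt_one (norm_nonneg x) hx').mul_left _
      refine Summable.of_norm_bounded base fun n => ?_
      rw [norm_mul, norm_pow]
      refine mul_le_mul_of_nonneg_left ?_ (norm_nonneg c)
      refine pow_le_pow_of_le_one (norm_nonneg x) hx'.le ?_
      calc n = 1 * n := (one_mul n).symm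
        _ ≤ l * n := Nat.mul_le_mul_right n hl
        _ ≤ l * n + k := Nat.le_add_right _ _
    have hsub : Summable (fun n : ℕ => F n - 1) := by
      have h1 := hgeo y 2 1 (by omega)
      have h2 := hgeo y⁻¹ 2 1 (by omega)
      have h3 := hgeo (-1 : ℂ) 2 2 (by omega)
      have h4 := hgeo (1 : ℂ) 4 2 (by omega)
      have h5 := hgeo (-y) 4 3 (by omega)
      have h6 := hgeo (-y⁻¹) 4 3 (by omega)
      have h7 := hgeo (-1 : ℂ) 6 4 (by omega)
      refine ((((((h1.add h2).add h3).add h4).add h5).add h6).add h7).congr fun n => ?_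
      simp only [hF]
      rw [show 2 * (n + 1) - 1 = 2 * n + 1 by omega, show 2 * (n + 1) = 2 * n + 2 by omega]
      field_simp
      ring
    have hp := hasProd_of_summable_sub_one hsub hzero
    have hSeq : Complex.exp (∑' n, Complex.log (F n)) = ∑' n : ℤ, x ^ (n ^ 2) * y ^ n :=
      tendsto_nhds_unique hp.tendsto_prod_nat hlim
    exact hp.tprod_eq.trans hSeq
  · push_neg at hzero
    obtain ⟨k, hk⟩ := hzero
    have hp0 : HasProd F 0 := by
      have hev : (fun s : Finset ℕ => ∏ i ∈ s, F i) =ᶠ[atTop] (fun _ => 0) := by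
        filter_upwards [eventually_ge_atTop ({k} : Finset ℕ)] with t ht
        exact Finset.prod_eq_zero (ht (Finset.mem_singleton_self k)) hk
      exact Tendsto.congr' hev.symm tendsto_const_nhds
    have hS0 : (∑' n : ℤ, x ^ (n ^ 2) * y ^ n) = 0 := by
      have hev : (fun N => ∏ j ∈ Finset.range N, F j) =ᶠ[atTop] (fun _ => 0) := by
        filter_upwards [eventually_ge_atTop (k + 1)] with N hN
        exact Finset.prod_eq_zero (Finset.mem_range.2 (by omega)) hk
      exact tendsto_nhds_unique hlim (Tendsto.congr' hev.symm tendsto_const_nhds)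
    rw [hp0.tprod_eq, hS0]
end

section
/- As formal power series in q^{1/8}: setting η♯ = q^{1/8} ∏_{n≥1}(1−q^{2n})²/(1−qⁿ), one has η♯ = ∑_{n≥0} q^{(2n+1)²/8}. -/
open PowerSeries
open Finset
def tri (j : ℤ) : ℕ := (j * (j + 1)).toNat / 2

lemma tri_nonneg (j : ℤ) : 0 ≤ j * (j + 1) := by
  rcases le_or_gt 0 j with h | h
  · positivity
  · have h2 : 0 ≤ (-j) * (-(j + 1)) := mul_nonneg (by omega) (by omega)
    nlinarith

lemma tri_two (j : ℤ) : 2 * (tri j : ℤ) = j * (j + 1) := by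
  have h0 := tri_nonneg j
  obtain ⟨c, hc⟩ := Int.even_mul_succ_self j
  have hc' : j * (j + 1) = 2 * c := by omega
  have hcn : 0 ≤ c := by omega
  unfold tri
  rw [hc']
  have : ((2 * c).toNat : ℤ) = 2 * c := Int.toNat_of_nonneg (by omega)
  omega

lemma tri_succ (j : ℤ) : (tri (j + 1) : ℤ) = tri j + (j + 1) := by
  have a := tri_two j
  have b := tri_two (j + 1)
  have c : (j + 1) * (j + 1 + 1) = j * (j + 1) + 2 * (j + 1) := by ring
  linarith

lemma tri_neg (j : ℤ) : tri (-j - 1) = tri j := by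
  have a := tri_two (-j - 1)
  have b := tri_two j
  have c : (-j - 1) * (-j - 1 + 1) = j * (j + 1) := by ring
  have : (tri (-j - 1) : ℤ) = (tri j : ℤ) := by linarith
  exact_mod_cast this

/-- Exponent function for the JTP sum. -/
def triE (n i : ℕ) : ℕ := tri ((i : ℤ) - (n : ℤ))

lemma triE_shift (n i : ℕ) : triE (n + 1) (i + 1) = triE n i := by
  unfold triE; congr 1; push_cast; ring

lemma triE_EL2 (n i : ℕ) : (i + 1) + triE n i = n + triE n (i + 1) := by
  unfold triE
  have h := tri_succ ((i : ℤ) - n)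
  rw [show ((i + 1 : ℕ) : ℤ) - (n : ℤ) = ((i : ℤ) - n) + 1 by push_cast; ring]
  omega

lemma triE_EL3' (n i : ℕ) (hi : i ≤ 2 * n) :
    (2 * n - i) + triE n (i + 1) = (n + 1) + triE n i := by
  unfold triE
  have h := tri_succ ((i : ℤ) - n)
  rw [show ((i + 1 : ℕ) : ℤ) - (n : ℤ) = ((i : ℤ) - n) + 1 by push_cast; ring]
  omega

lemma triE_EL4 (n : ℕ) : triE (n + 1) 0 = n + triE n 0 := by
  unfold triE
  rw [show (((0:ℕ) : ℤ)) - ((n + 1 : ℕ) : ℤ) = (-(n : ℤ) - 1) by push_cast; ring,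
    show (((0:ℕ) : ℤ)) - ((n : ℕ) : ℤ) = (-(n : ℤ) - 1) + 1 by push_cast; ring]
  have h := tri_succ (-(n : ℤ) - 1)
  omega

lemma triE_diag (n : ℕ) : triE n n = 0 := by
  unfold triE
  rw [show ((n : ℕ) : ℤ) - (n : ℤ) = 0 by ring]
  rfl

/-- Gaussian binomial, via Pascal rule `gb (m+1) (k+1) = gb m (k+1) + t^(m-k) * gb m k`. -/
def gb {A : Type*} [CommRing A] (t : A) : ℕ → ℕ → A
  | 0, 0 => 1
  | 0, _ + 1 => 0
  | _ + 1, 0 => 1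
  | m + 1, k + 1 => gb t m (k + 1) + t ^ (m - k) * gb t m k

variable {A : Type*} [CommRing A] (t : A)

@[simp] lemma gb_zero_right : ∀ m, gb t m 0 = 1
  | 0 => rfl
  | _ + 1 => rfl

lemma gb_succ_succ (m k : ℕ) :
    gb t (m + 1) (k + 1) = gb t m (k + 1) + t ^ (m - k) * gb t m k := rfl

lemma gb_eq_zero : ∀ m k, m < k → gb t m k = 0
  | 0, _ + 1, _ => rfl
  | m + 1, k + 1, h => by
    rw [gb_succ_succ, gb_eq_zero m (k + 1) (by omega), gb_eq_zero m k (by omega)]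
    ring

@[simp] lemma gb_diag : ∀ m, gb t m m = 1
  | 0 => rfl
  | m + 1 => by
    rw [gb_succ_succ, gb_eq_zero t m (m + 1) (by omega), gb_diag m]
    simp

/-- The second Pascal rule. -/
lemma gb_pascalB : ∀ m k, gb t (m + 1) (k + 1) = t ^ (k + 1) * gb t m (k + 1) + gb t m k
  | 0, 0 => by
    show gb t 0 1 + t ^ 0 * gb t 0 0 = t ^ 1 * gb t 0 1 + gb t 0 0
    show (0 : A) + t ^ 0 * 1 = t ^ 1 * 0 + 1
    ring
  | 0, k + 1 => by
    rw [gb_succ_succ, gb_eq_zero t 0 (k + 2) (by omega), gb_eq_zero t 0 (k + 1) (by omega)]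
    ring
  | m + 1, 0 => by
    conv_lhs => rw [gb_succ_succ t (m + 1) 0, gb_pascalB m 0]
    conv_rhs => rw [gb_succ_succ t m 0]
    simp
    ring
  | m + 1, j + 1 => by
    rcases le_or_gt (j + 1) m with hj | hj
    · have e1 : t ^ (m - j) * t ^ (j + 1) = t ^ (j + 1 + 1) * t ^ (m - (j + 1)) := by
        rw [← pow_add, ← pow_add]; congr 1; omega
      conv_lhs => rw [gb_succ_succ t (m + 1) (j + 1), gb_pascalB m (j + 1), gb_pascalB m j]
      conv_rhs => rw [gb_succ_succ t m (j + 1), gb_succ_succ t m j]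
      have h2 : m + 1 - (j + 1) = m - j := by omega
      rw [h2]
      linear_combination gb t m (j + 1) * e1
    · rcases eq_or_lt_of_le (by omega : m ≤ j) with hj' | hj'
      · subst hj'
        rw [gb_eq_zero t (m + 1) (m + 2) (by omega)]
        simp
      · rw [gb_eq_zero t (m + 1 + 1) (j + 2) (by omega),
          gb_eq_zero t (m + 1) (j + 2) (by omega),
          gb_eq_zero t (m + 1) (j + 1) (by omega)]
        ring
lemma jtp_step (n : ℕ) :
    ∑ i ∈ range ((2 * n + 1 + 1) + 1), gb t ((2 * n + 1) + 1) i * t ^ triE (n + 1) i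
    = (∑ i ∈ range (2 * n + 1), gb t (2 * n) i * t ^ triE n i)
      * ((1 + t ^ (n + 1)) * (1 + t ^ n)) := by
  have hzero1 : gb t (2 * n) (2 * n + 1) = 0 := gb_eq_zero t _ _ (by omega)
  have hzero2 : gb t (2 * n) (2 * n + 1 + 1) = 0 := gb_eq_zero t _ _ (by omega)
  have hW : ∑ i ∈ range (2 * n + 1 + 1), gb t (2 * n) (i + 1) * t ^ triE n (i + 1)
      = (∑ i ∈ range (2 * n + 1), gb t (2 * n) i * t ^ triE n i) - t ^ triE n 0 := by
    have h3 : ∑ i ∈ range ((2 * n + 1 + 1) + 1), gb t (2 * n) i * t ^ triE n i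
        = ∑ i ∈ range (2 * n + 1 + 1), gb t (2 * n) (i + 1) * t ^ triE n (i + 1)
          + gb t (2 * n) 0 * t ^ triE n 0 := Finset.sum_range_succ' _ _
    rw [Finset.sum_range_succ, Finset.sum_range_succ, hzero1, hzero2] at h3
    rw [gb_zero_right] at h3
    linear_combination -h3
  have hW' : ∑ i ∈ range (2 * n + 1), gb t (2 * n) (i + 1) * t ^ triE n (i + 1)
      = (∑ i ∈ range (2 * n + 1), gb t (2 * n) i * t ^ triE n i) - t ^ triE n 0 := by
    rw [← hW]
    conv_rhs => rw [Finset.sum_range_succ]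
    rw [hzero2]
    ring
  have hterm : ∀ i, gb t ((2 * n + 1) + 1) (i + 1) * t ^ triE (n + 1) (i + 1)
      = t ^ n * (gb t (2 * n) (i + 1) * t ^ triE n (i + 1))
        + gb t (2 * n) i * t ^ triE n i
        + t ^ (2 * n + 1 - i) * gb t (2 * n + 1) i * t ^ triE (n + 1) (i + 1) := by
    intro i
    rw [gb_succ_succ t (2 * n + 1) i, gb_pascalB t (2 * n) i, triE_shift]
    have e2 : t ^ (i + 1) * t ^ triE n i = t ^ n * t ^ triE n (i + 1) := by
      rw [← pow_add, ← pow_add, triE_EL2]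
    linear_combination e2 * gb t (2 * n) (i + 1)
  have hterm3 : ∀ i ∈ range (2 * n + 1),
      t ^ (2 * n + 1 - (i + 1)) * gb t (2 * n + 1) (i + 1) * t ^ triE (n + 1) (i + 1 + 1)
      = t ^ (2 * n + 1) * (gb t (2 * n) (i + 1) * t ^ triE n (i + 1))
        + t ^ (n + 1) * (gb t (2 * n) i * t ^ triE n i) := by
    intro i hi
    have hi' : i ≤ 2 * n := by
      have := mem_range.mp hi
      omega
    rw [gb_pascalB t (2 * n) i, triE_shift n (i + 1),
      show 2 * n + 1 - (i + 1) = 2 * n - i by omega]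
    have e3 : t ^ (2 * n - i) * t ^ triE n (i + 1) = t ^ (n + 1) * t ^ triE n i := by
      rw [← pow_add, ← pow_add, triE_EL3' n i hi']
    have e4 : t ^ (2 * n - i) * t ^ (i + 1) = t ^ (2 * n + 1) := by
      rw [← pow_add]; congr 1; omega
    linear_combination gb t (2 * n) (i + 1) * t ^ triE n (i + 1) * e4 + gb t (2 * n) i * e3
  rw [Finset.sum_range_succ']
  rw [Finset.sum_congr rfl (fun i _ => hterm i)]
  rw [Finset.sum_add_distrib, Finset.sum_add_distrib]
  rw [← Finset.mul_sum]
  rw [Finset.sum_range_succ' (fun i => t ^ (2 * n + 1 - i) * gb t (2 * n + 1) i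
        * t ^ triE (n + 1) (i + 1)) (2 * n + 1)]
  rw [Finset.sum_congr rfl hterm3]
  rw [Finset.sum_add_distrib, ← Finset.mul_sum, ← Finset.mul_sum]
  rw [hW]
  rw [Finset.sum_range_succ (fun x => gb t (2 * n) x * t ^ triE n x) (2 * n + 1), hzero1]
  rw [hW']
  rw [gb_zero_right, gb_zero_right]
  have e5 : t ^ triE (n + 1) 0 = t ^ n * t ^ triE n 0 := by
    rw [← pow_add, triE_EL4]
  have e6 : triE (n + 1) (0 + 1) = triE n 0 := triE_shift n 0
  rw [e6, e5, Nat.sub_zero]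
  ring

lemma jtp {A : Type*} [CommRing A] (t : A) (n : ℕ) :
    ∏ k ∈ range n, ((1 + t ^ (k + 1)) * (1 + t ^ k))
    = ∑ i ∈ range (2 * n + 1), gb t (2 * n) i * t ^ triE n i := by
  induction n with
  | zero => simp [gb_zero_right, triE_diag]
  | succ n ih =>
    rw [Finset.prod_range_succ, ih, show 2 * (n + 1) = 2 * n + 1 + 1 by ring]
    exact (jtp_step t n).symm

section Ring
variable {A : Type*} [CommRing A] (t : A)

def ff (t : A) (n : ℕ) : A := ∏ k ∈ range n, (1 - t ^ (k + 1))

lemma ff_succ (n : ℕ) : ff t (n + 1) = ff t n * (1 - t ^ (n + 1)) :=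
  Finset.prod_range_succ _ _

lemma gb_adj (M k : ℕ) : gb t M (k + 1) - gb t M k
    = t ^ (k + 1) * gb t M (k + 1) - t ^ (M - k) * gb t M k := by
  have hA := gb_succ_succ t M k
  have hB := gb_pascalB t M k
  linear_combination hB - hA

lemma ff_mul_gb : ∀ m, ∀ a ≤ m, ff t a * ff t (m - a) * gb t m a = ff t m := by
  intro m
  induction m with
  | zero =>
    intro a ha
    interval_cases a
    simp [ff, gb_zero_right]
  | succ m ih =>
    intro a ha
    match a with
    | 0 => simp [ff, gb_zero_right]
    | b + 1 =>
      rcases eq_or_lt_of_le ha with hbm | hbm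
      · rw [show m + 1 - (b + 1) = 0 by omega, show b + 1 = m + 1 by omega, gb_diag]
        simp [ff]
      · have hb : b + 1 ≤ m := by omega
        have ih1 := ih (b + 1) hb
        have ih2 := ih b (by omega)
        have h1 : ff t (m - b) = ff t (m - (b + 1)) * (1 - t ^ (m - b)) := by
          rw [show m - b = (m - (b + 1)) + 1 by omega]
          rw [ff_succ]
        have h2 : ff t (b + 1) = ff t b * (1 - t ^ (b + 1)) := ff_succ t b
        have h3 : ff t (m + 1) = ff t m * (1 - t ^ (m + 1)) := ff_succ t m
        have h4 : t ^ (m - b) * t ^ (b + 1) = t ^ (m + 1) := by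
          rw [← pow_add]; congr 1; omega
        rw [show m + 1 - (b + 1) = m - b by omega, gb_succ_succ, h3]
        rw [h1] at ih2 ⊢
        rw [h2] at ih1 ⊢
        linear_combination (1 - t ^ (m - b)) * ih1 + t ^ (m - b) * (1 - t ^ (b + 1)) * ih2
          - ff t m * h4

end Ring

noncomputable section PS

abbrev R := PowerSeries ℂ
def tX : R := (PowerSeries.X : R) ^ 8

lemma tX_pow (e : ℕ) : tX ^ e = (PowerSeries.X : R) ^ (8 * e) := by
  rw [tX, ← pow_mul]

lemma md_tX {D e : ℕ} (h : D ≤ 8 * e) : (PowerSeries.X : R) ^ D ∣ tX ^ e := by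
  rw [tX_pow]
  exact pow_dvd_pow _ h

lemma md_mul {D : ℕ} {a b c d : R} (h1 : (X : R) ^ D ∣ a - b) (h2 : (X : R) ^ D ∣ c - d) :
    (X : R) ^ D ∣ a * c - b * d := by
  have : a * c - b * d = a * (c - d) + (a - b) * d := by ring
  rw [this]
  exact dvd_add (Dvd.dvd.mul_left h2 a) (h1.mul_right d)

lemma md_prod_one {D : ℕ} {s : Finset ℕ} {f : ℕ → R}
    (h : ∀ i ∈ s, (X : R) ^ D ∣ f i - 1) : (X : R) ^ D ∣ (∏ i ∈ s, f i) - 1 := by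
  classical
  induction s using Finset.induction_on with
  | empty => simp
  | @insert a s' hx ih =>
    rw [Finset.prod_insert hx]
    have h1 := h a (mem_insert_self a s')
    have h2 := ih fun i hi => h i (mem_insert_of_mem hi)
    have he : f a * ∏ i ∈ s', f i - 1
        = (f a - 1) * (∏ i ∈ s', f i) + ((∏ i ∈ s', f i) - 1) := by ring
    rw [he]
    exact dvd_add (h1.mul_right _) h2

lemma gb_stab_up (n D : ℕ) (hD : D + D ≤ n) :
    ∀ d ≤ D, (X : R) ^ D ∣ gb tX (2 * n) (n + d) - gb tX (2 * n) n := by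
  intro d
  induction d with
  | zero => simp
  | succ d ih =>
    intro hd
    have step : (X : R) ^ D ∣ gb tX (2 * n) (n + d + 1) - gb tX (2 * n) (n + d) := by
      rw [gb_adj tX (2 * n) (n + d)]
      apply dvd_sub
      · exact (md_tX (by omega)).mul_right _
      · exact (md_tX (by omega : D ≤ 8 * (2 * n - (n + d)))).mul_right _
    have comb := dvd_add step (ih (by omega))
    have he : (gb tX (2 * n) (n + d + 1) - gb tX (2 * n) (n + d))
        + (gb tX (2 * n) (n + d) - gb tX (2 * n) n)
        = gb tX (2 * n) (n + (d + 1)) - gb tX (2 * n) n := by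
      rw [show n + (d + 1) = n + d + 1 by omega]; ring
    rwa [he] at comb

lemma gb_stab_down (n D : ℕ) (hD : D + D ≤ n) :
    ∀ d ≤ D, (X : R) ^ D ∣ gb tX (2 * n) (n - d) - gb tX (2 * n) n := by
  intro d
  induction d with
  | zero => simp
  | succ d ih =>
    intro hd
    have hnd : n - d = (n - (d + 1)) + 1 := by omega
    have step : (X : R) ^ D ∣ gb tX (2 * n) (n - (d + 1)) - gb tX (2 * n) (n - d) := by
      have h := gb_adj tX (2 * n) (n - (d + 1))
      rw [← hnd] at h
      have he2 : gb tX (2 * n) (n - (d + 1)) - gb tX (2 * n) (n - d)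
          = tX ^ (2 * n - (n - (d + 1))) * gb tX (2 * n) (n - (d + 1))
            - tX ^ (n - d) * gb tX (2 * n) (n - d) := by
        linear_combination -h
      rw [he2]
      apply dvd_sub
      · exact (md_tX (by omega : D ≤ 8 * (2 * n - (n - (d + 1))))).mul_right _
      · exact (md_tX (by omega : D ≤ 8 * (n - d))).mul_right _
    have comb := dvd_add step (ih (by omega))
    have he : (gb tX (2 * n) (n - (d + 1)) - gb tX (2 * n) (n - d))
        + (gb tX (2 * n) (n - d) - gb tX (2 * n) n)
        = gb tX (2 * n) (n - (d + 1)) - gb tX (2 * n) n := by ring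
    rwa [he] at comb

lemma gb_stab (n D i : ℕ) (hD : D + D ≤ n) (h1 : n ≤ i + D) (h2 : i ≤ n + D) :
    (X : R) ^ D ∣ gb tX (2 * n) i - gb tX (2 * n) n := by
  rcases le_or_gt n i with h | h
  · have := gb_stab_up n D hD (i - n) (by omega)
    rwa [show n + (i - n) = i by omega] at this
  · have := gb_stab_down n D hD (n - i) (by omega)
    rwa [show n - (n - i) = i by omega] at this

lemma tri_ge_self (k : ℕ) : k ≤ tri (k : ℤ) := by
  have h2 := tri_two (k : ℤ)
  have p1 := tri_nonneg ((k : ℤ) - 1)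
  have r1 : ((k : ℤ) - 1) * ((k : ℤ) - 1 + 1) = (k : ℤ) * ((k : ℤ) + 1) - 2 * (k : ℤ) := by ring
  have hle : ((k : ℕ) : ℤ) ≤ (tri (k : ℤ) : ℤ) := by linarith
  exact_mod_cast hle

lemma tri_bound (i n D : ℕ) (hD : 8 * triE n i < D) : n ≤ i + D ∧ i ≤ n + D := by
  have hD' : 8 * tri ((i : ℤ) - (n : ℤ)) < D := by simpa [triE] using hD
  set j : ℤ := (i : ℤ) - (n : ℤ) with hj
  have h2 := tri_two j
  have p1 := tri_nonneg (j - 1)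
  have p2 := tri_nonneg (j + 1)
  have r1 : (j - 1) * (j - 1 + 1) = j * (j + 1) - 2 * j := by ring
  have r2 : (j + 1) * (j + 1 + 1) = j * (j + 1) + 2 * j + 2 := by ring
  have hup : j ≤ (tri j : ℤ) := by linarith
  have hdn : -j ≤ (tri j : ℤ) + 1 := by linarith
  constructor <;> omega

lemma sum_stab (n D : ℕ) (hD : D + D ≤ n) :
    (X : R) ^ D ∣ (∑ i ∈ range (2 * n + 1), gb tX (2 * n) i * tX ^ triE n i)
      - gb tX (2 * n) n * ∑ i ∈ range (2 * n + 1), tX ^ triE n i := by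
  rw [Finset.mul_sum, ← Finset.sum_sub_distrib]
  apply Finset.dvd_sum
  intro i hi
  have he : gb tX (2 * n) i * tX ^ triE n i - gb tX (2 * n) n * tX ^ triE n i
      = (gb tX (2 * n) i - gb tX (2 * n) n) * tX ^ triE n i := by ring
  rw [he]
  rcases le_or_gt D (8 * triE n i) with hc | hc
  · exact (md_tX hc).mul_left _
  · obtain ⟨hb1, hb2⟩ := tri_bound i n D hc
    exact (gb_stab n D i hD hb1 hb2).mul_right _

lemma ff_gb_md (n D : ℕ) (hD : D ≤ 8 * (n + 1)) :
    (X : R) ^ D ∣ ff tX n * gb tX (2 * n) n - 1 := by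
  have hsplit : ff tX (2 * n) = ff tX n * ∏ k ∈ range n, (1 - tX ^ (n + k + 1)) := by
    rw [ff, show 2 * n = n + n by ring, Finset.prod_range_add]
    rfl
  have hmain := ff_mul_gb tX (2 * n) n (by omega)
  rw [show 2 * n - n = n by omega] at hmain
  have hcc : constantCoeff (R := ℂ) (ff tX n) = 1 := by
    rw [ff, map_prod]
    apply Finset.prod_eq_one
    intro k _
    rw [map_sub, map_one, tX_pow, map_pow, constantCoeff_X]
    norm_num
  have hff0 : ff tX n ≠ 0 := by
    intro h0
    rw [h0] at hcc
    simp at hcc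
  have hcan : ff tX n * (ff tX n * gb tX (2 * n) n)
      = ff tX n * ∏ k ∈ range n, (1 - tX ^ (n + k + 1)) := by
    rw [← hsplit, ← hmain]; ring
  have hkey := mul_left_cancel₀ hff0 hcan
  rw [hkey]
  apply md_prod_one
  intro k _
  have he : (1 : R) - tX ^ (n + k + 1) - 1 = -(tX ^ (n + k + 1)) := by ring
  rw [he, dvd_neg]
  exact md_tX (by omega)

lemma psi_md (n D : ℕ) (hD : D ≤ 8 * n) :
    (X : R) ^ D ∣ (∑ i ∈ range (2 * n + 1), tX ^ triE n i)
      - 2 * ∑ j ∈ range n, tX ^ tri (j : ℤ) := by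
  have hsplit : ∑ i ∈ range (2 * n + 1), tX ^ triE n i
      = ((∑ i ∈ range n, tX ^ triE n i) + ∑ i ∈ range n, tX ^ tri (i : ℤ))
        + tX ^ triE n (2 * n) := by
    rw [Finset.sum_range_succ]
    congr 1
    rw [show 2 * n = n + n by ring, Finset.sum_range_add]
    congr 1
    apply Finset.sum_congr rfl
    intro i _
    congr 1
    unfold triE
    congr 1
    push_cast
    ring
  have hrefl : ∑ i ∈ range n, tX ^ triE n i = ∑ i ∈ range n, tX ^ tri (i : ℤ) := by
    rw [← Finset.sum_range_reflect]
    apply Finset.sum_congr rfl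
    intro i hi
    have hin : i < n := mem_range.mp hi
    congr 1
    unfold triE
    rw [show ((n - 1 - i : ℕ) : ℤ) - (n : ℤ) = -(i : ℤ) - 1 by omega]
    exact tri_neg (i : ℤ)
  have hdiag : triE n (2 * n) = tri (n : ℤ) := by
    unfold triE
    congr 1
    push_cast
    ring
  rw [hsplit, hrefl, hdiag]
  have he : ((∑ i ∈ range n, tX ^ tri (i : ℤ)) + ∑ i ∈ range n, tX ^ tri (i : ℤ))
        + tX ^ tri (n : ℤ) - 2 * ∑ j ∈ range n, tX ^ tri (j : ℤ) = tX ^ tri (n : ℤ) := by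
    ring
  rw [he]
  refine md_tX (le_trans hD ?_)
  have := tri_ge_self n
  omega

lemma alg1 (n : ℕ) :
    ff tX n * (∏ k ∈ range n, ((1 + tX ^ (k + 1)) * (1 + tX ^ k))) * (1 + tX ^ n)
    = 2 * ∏ k ∈ range n, ((1 - tX ^ (2 * (k + 1))) * (1 + tX ^ (k + 1))) := by
  rw [ff, ← Finset.prod_mul_distrib]
  have h1 : ∀ k ∈ range n, (1 - tX ^ (k + 1)) * ((1 + tX ^ (k + 1)) * (1 + tX ^ k))
      = (1 - tX ^ (2 * (k + 1))) * (1 + tX ^ k) := by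
    intro k _
    ring
  rw [Finset.prod_congr rfl h1, Finset.prod_mul_distrib, Finset.prod_mul_distrib]
  have h2 : (∏ k ∈ range n, (1 + tX ^ k)) * (1 + tX ^ n)
      = 2 * ∏ k ∈ range n, (1 + tX ^ (k + 1)) := by
    have ha := Finset.prod_range_succ (fun k => (1 : R) + tX ^ k) n
    have hb := Finset.prod_range_succ' (fun k => (1 : R) + tX ^ k) n
    rw [ha] at hb
    rw [hb]
    norm_num
    ring
  linear_combination (∏ k ∈ range n, (1 - tX ^ (2 * (k + 1)))) * h2

lemma md_refl {D : ℕ} {a : R} : (X : R) ^ D ∣ a - a := by simp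

lemma core (D : ℕ) (hD : 0 < D) :
    (X : R) ^ D ∣
      2 * (∏ k ∈ range (D + 1), ((1 - tX ^ (2 * (k + 1))) * (1 + tX ^ (k + 1))))
      - 2 * ∑ j ∈ range (2 * D + 2), tX ^ tri (j : ℤ) := by
  set n := 2 * D + 2 with hn
  set SG := ∑ i ∈ range (2 * n + 1), gb tX (2 * n) i * tX ^ triE n i with hSG
  set ST := ∑ i ∈ range (2 * n + 1), tX ^ triE n i with hST
  set PSI := ∑ j ∈ range n, tX ^ tri (j : ℤ) with hPSI
  have h1 : (2 : R) * (∏ k ∈ range n, ((1 - tX ^ (2 * (k + 1))) * (1 + tX ^ (k + 1))))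
      = ff tX n * SG * (1 + tX ^ n) := by
    rw [hSG, ← jtp tX n, alg1 n]
  have hA : (X : R) ^ D ∣ SG - gb tX (2 * n) n * ST := sum_stab n D (by omega)
  have hB : (X : R) ^ D ∣ ST - 2 * PSI := psi_md n D (by omega)
  have hC : (X : R) ^ D ∣ ff tX n * gb tX (2 * n) n - 1 := ff_gb_md n D (by omega)
  have hD1 : (X : R) ^ D ∣ (1 + tX ^ n) - 1 := by
    have he : (1 : R) + tX ^ n - 1 = tX ^ n := by ring
    rw [he]; exact md_tX (by omega)
  have hfin : (X : R) ^ D ∣ ff tX n * SG * (1 + tX ^ n) - 2 * PSI := by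
    have step1 := md_mul (md_mul (md_refl (a := ff tX n)) hA) (md_refl (a := (1 + tX ^ n)))
    have step2 := md_mul (md_mul hC hB) hD1
    have comb := dvd_add step1 step2
    have he : (ff tX n * SG * (1 + tX ^ n)
          - ff tX n * (gb tX (2 * n) n * ST) * (1 + tX ^ n))
        + ((ff tX n * gb tX (2 * n) n) * ST * (1 + tX ^ n) - 1 * (2 * PSI) * 1)
        = ff tX n * SG * (1 + tX ^ n) - 2 * PSI := by ring
    rwa [he] at comb
  have hPsplit : (∏ k ∈ range n, ((1 - tX ^ (2 * (k + 1))) * (1 + tX ^ (k + 1))))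
      = (∏ k ∈ range (D + 1), ((1 - tX ^ (2 * (k + 1))) * (1 + tX ^ (k + 1))))
        * ∏ k ∈ range (D + 1),
            ((1 - tX ^ (2 * ((D + 1 + k) + 1))) * (1 + tX ^ ((D + 1 + k) + 1))) := by
    rw [show n = (D + 1) + (D + 1) by omega, Finset.prod_range_add]
  have hrest : (X : R) ^ D ∣
      (∏ k ∈ range (D + 1),
        ((1 - tX ^ (2 * ((D + 1 + k) + 1))) * (1 + tX ^ ((D + 1 + k) + 1)))) - 1 := by
    apply md_prod_one
    intro k _
    have hx : (X : R) ^ D ∣ (1 - tX ^ (2 * ((D + 1 + k) + 1))) * (1 + tX ^ ((D + 1 + k) + 1))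
        - 1 * 1 := by
      apply md_mul
      · have he : (1 : R) - tX ^ (2 * ((D + 1 + k) + 1)) - 1
            = -(tX ^ (2 * ((D + 1 + k) + 1))) := by ring
        rw [he, dvd_neg]
        exact md_tX (by omega)
      · have he : (1 : R) + tX ^ ((D + 1 + k) + 1) - 1 = tX ^ ((D + 1 + k) + 1) := by ring
        rw [he]
        exact md_tX (by omega)
    rwa [mul_one] at hx
  have hPmd : (X : R) ^ D ∣
      (∏ k ∈ range n, ((1 - tX ^ (2 * (k + 1))) * (1 + tX ^ (k + 1))))
      - ∏ k ∈ range (D + 1), ((1 - tX ^ (2 * (k + 1))) * (1 + tX ^ (k + 1))) := by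
    rw [hPsplit]
    have := (hrest.mul_left
      (∏ k ∈ range (D + 1), ((1 - tX ^ (2 * (k + 1))) * (1 + tX ^ (k + 1)))))
    have he : (∏ k ∈ range (D + 1), ((1 - tX ^ (2 * (k + 1))) * (1 + tX ^ (k + 1))))
        * ((∏ k ∈ range (D + 1),
            ((1 - tX ^ (2 * ((D + 1 + k) + 1))) * (1 + tX ^ ((D + 1 + k) + 1)))) - 1)
        = (∏ k ∈ range (D + 1), ((1 - tX ^ (2 * (k + 1))) * (1 + tX ^ (k + 1))))
            * (∏ k ∈ range (D + 1),
              ((1 - tX ^ (2 * ((D + 1 + k) + 1))) * (1 + tX ^ ((D + 1 + k) + 1))))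
          - ∏ k ∈ range (D + 1), ((1 - tX ^ (2 * (k + 1))) * (1 + tX ^ (k + 1))) := by
      ring
    rwa [he] at this
  have hfin2 : (X : R) ^ D ∣
      2 * (∏ k ∈ range n, ((1 - tX ^ (2 * (k + 1))) * (1 + tX ^ (k + 1)))) - 2 * PSI := by
    rw [h1]; exact hfin
  have comb := dvd_sub hfin2 (hPmd.mul_left 2)
  have he : (2 * (∏ k ∈ range n, ((1 - tX ^ (2 * (k + 1))) * (1 + tX ^ (k + 1)))) - 2 * PSI)
      - 2 * ((∏ k ∈ range n, ((1 - tX ^ (2 * (k + 1))) * (1 + tX ^ (k + 1))))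
          - ∏ k ∈ range (D + 1), ((1 - tX ^ (2 * (k + 1))) * (1 + tX ^ (k + 1))))
      = 2 * (∏ k ∈ range (D + 1), ((1 - tX ^ (2 * (k + 1))) * (1 + tX ^ (k + 1)))) - 2 * PSI := by
    ring
  rwa [he] at comb

end PS

/-- With t = q^{1/8}: η♯ = t·∏_{n≥1}(1−t^{16n})²/(1−t^{8n}) = ∑_{n≥0} t^{(2n+1)²},
stated coefficientwise (the product truncated at m+1 factors determines the
coefficient of t^m). -/
theorem etaSharp_series (m : ℕ) :
    PowerSeries.coeff (R := ℂ) m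
        ((PowerSeries.X : PowerSeries ℂ) *
          ∏ n ∈ Finset.range (m + 1),
            ((1 - (PowerSeries.X : PowerSeries ℂ) ^ (16 * (n + 1))) ^ 2 *
              (1 - (PowerSeries.X : PowerSeries ℂ) ^ (8 * (n + 1)))⁻¹)) =
      ∑ n ∈ Finset.range (m + 1), if (2 * n + 1) ^ 2 = m then 1 else 0 := by
  cases m with
  | zero =>
    rw [PowerSeries.coeff_zero_eq_constantCoeff, map_mul, PowerSeries.constantCoeff_X, zero_mul]
    norm_num
  | succ m' =>
    have hfac : ∀ k ∈ range (m' + 1 + 1),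
        (1 - (PowerSeries.X : PowerSeries ℂ) ^ (16 * (k + 1))) ^ 2 *
          (1 - (PowerSeries.X : PowerSeries ℂ) ^ (8 * (k + 1)))⁻¹
        = (1 - tX ^ (2 * (k + 1))) * (1 + tX ^ (k + 1)) := by
      intro k _
      have e1 : tX ^ (2 * (k + 1)) = (X : R) ^ (16 * (k + 1)) := by
        rw [tX_pow]; congr 1; ring
      have e2 : tX ^ (k + 1) = (X : R) ^ (8 * (k + 1)) := by rw [tX_pow]
      rw [← e1, ← e2]
      have hu : (1 - tX ^ (k + 1)) * (1 - tX ^ (k + 1))⁻¹ = 1 := by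
        apply PowerSeries.mul_inv_cancel
        rw [map_sub, map_one, tX_pow, map_pow, PowerSeries.constantCoeff_X]
        norm_num
      have hf : (1 : R) - tX ^ (2 * (k + 1)) = (1 - tX ^ (k + 1)) * (1 + tX ^ (k + 1)) := by
        ring
      calc (1 - tX ^ (2 * (k + 1))) ^ 2 * (1 - tX ^ (k + 1))⁻¹
          = (1 - tX ^ (2 * (k + 1))) * (1 + tX ^ (k + 1))
            * ((1 - tX ^ (k + 1)) * (1 - tX ^ (k + 1))⁻¹) := by
            rw [pow_two]
            nth_rewrite 2 [hf]
            ring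
        _ = (1 - tX ^ (2 * (k + 1))) * (1 + tX ^ (k + 1)) := by rw [hu, mul_one]
    rw [PowerSeries.coeff_succ_X_mul, Finset.prod_congr rfl hfac]
    have hcore := core (m' + 1) (by omega)
    have hco := PowerSeries.X_pow_dvd_iff.mp hcore m' (by omega)
    rw [map_sub, sub_eq_zero] at hco
    have h2P : ∀ a : R, PowerSeries.coeff (R := ℂ) m' (2 * a) = 2 * PowerSeries.coeff (R := ℂ) m' a := by
      intro a
      rw [two_mul, map_add, two_mul]
    rw [h2P, h2P] at hco
    have hcc := mul_left_cancel₀ (two_ne_zero (α := ℂ)) hco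
    rw [hcc, map_sum]
    have hterm : ∀ j ∈ range (2 * (m' + 1) + 2),
        PowerSeries.coeff (R := ℂ) m' (tX ^ tri (j : ℤ))
        = if (2 * j + 1) ^ 2 = m' + 1 then 1 else 0 := by
      intro j _
      rw [tX_pow, PowerSeries.coeff_X_pow]
      have h2t : 2 * tri ((j : ℕ) : ℤ) = j * (j + 1) := by
        exact_mod_cast tri_two (j : ℤ)
      have hsq : (2 * j + 1) ^ 2 = 4 * (j * (j + 1)) + 1 := by ring
      rw [← h2t] at hsq
      apply if_congr _ rfl rfl
      rw [hsq]
      omega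
    rw [Finset.sum_congr rfl hterm]
    symm
    apply Finset.sum_subset
    · intro x hx
      rw [mem_range] at *
      omega
    · intro x _ hx2
      rw [mem_range, not_lt] at hx2
      have h1 : 2 * x + 1 ≤ (2 * x + 1) ^ 2 := Nat.le_self_pow (by norm_num) _
      have : (2 * x + 1) ^ 2 ≠ m' + 1 := by omega
      simp [this]
end

section
/- As formal power series: with η♭ = ∑_{n∈ℤ}(−1)ⁿ q^{n²/2}, η♮ = ∑_{n∈ℤ} q^{n²/2} (so η♮ = θ rescaled, i.e. θ^{⟨1/2⟩}), and η♯ = ∑_{n≥0} q^{(2n+1)²/8}, one has (η♮)⁴ − (η♭)⁴ = 16 (η♯)⁴. -/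
set_option maxHeartbeats 1000000

open PowerSeries

/-- η♮ = ∑_{n∈ℤ} q^{n²/2} as a series in t = q^{1/8} (so exponents 4n²). -/
noncomputable def etaNat : PowerSeries ℂ :=
  PowerSeries.mk fun m =>
    ∑ n ∈ Finset.Icc (-(m : ℤ)) (m : ℤ), if 4 * n ^ 2 = (m : ℤ) then 1 else 0

/-- η♭ = ∑_{n∈ℤ} (−1)ⁿ q^{n²/2} as a series in t = q^{1/8}. -/
noncomputable def etaFlat : PowerSeries ℂ :=
  PowerSeries.mk fun m =>
    ∑ n ∈ Finset.Icc (-(m : ℤ)) (m : ℤ),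
      if 4 * n ^ 2 = (m : ℤ) then (if Even n then 1 else -1) else 0

/-- η♯ = ∑_{n≥0} q^{(2n+1)²/8} as a series in t = q^{1/8}. -/
noncomputable def etaSharp : PowerSeries ℂ :=
  PowerSeries.mk fun m =>
    ∑ n ∈ Finset.range (m + 1), if (2 * n + 1) ^ 2 = m then 1 else 0

open Finset

lemma rep_mul {α β : Type} (f g : PowerSeries ℂ)
    (e : α → ℕ) (w : α → ℂ) (box : ℕ → Finset α)
    (e' : β → ℕ) (w' : β → ℂ) (box' : ℕ → Finset β)
    (hbox : ∀ m a, e a = m → a ∈ box m) (hmono : ∀ u v : ℕ, u ≤ v → box u ⊆ box v)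
    (hbox' : ∀ m b, e' b = m → b ∈ box' m) (hmono' : ∀ u v : ℕ, u ≤ v → box' u ⊆ box' v)
    (hf : ∀ m, coeff m f = ∑ a ∈ box m, if e a = m then w a else 0)
    (hg : ∀ m, coeff m g = ∑ b ∈ box' m, if e' b = m then w' b else 0)
    (m : ℕ) :
    coeff m (f * g) =
      ∑ p ∈ box m ×ˢ box' m, if e p.1 + e' p.2 = m then w p.1 * w' p.2 else 0 := by
  classical
  rw [coeff_mul]
  have hstep : ∀ p : ℕ × ℕ, p ∈ antidiagonal m →
      coeff p.1 f * coeff p.2 g =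
      ∑ q ∈ box m ×ˢ box' m,
        (if e q.1 = p.1 then w q.1 else 0) * (if e' q.2 = p.2 then w' q.2 else 0) := by
    intro p hp
    rw [Finset.HasAntidiagonal.mem_antidiagonal] at hp
    have h1 : coeff p.1 f = ∑ a ∈ box m, if e a = p.1 then w a else 0 := by
      rw [hf p.1]
      refine Finset.sum_subset (hmono p.1 m (by omega)) ?_
      intro a _ ha
      exact if_neg (fun h => ha (hbox p.1 a h))
    have h2 : coeff p.2 g = ∑ b ∈ box' m, if e' b = p.2 then w' b else 0 := by
      rw [hg p.2]
      refine Finset.sum_subset (hmono' p.2 m (by omega)) ?_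
      intro b _ hb
      exact if_neg (fun h => hb (hbox' p.2 b h))
    rw [h1, h2, Finset.sum_mul_sum]
    rw [Finset.sum_product]
  rw [Finset.sum_congr rfl hstep, Finset.sum_comm]
  refine Finset.sum_congr rfl ?_
  intro q _
  have key : ∀ p : ℕ × ℕ, (if e q.1 = p.1 then w q.1 else 0) * (if e' q.2 = p.2 then w' q.2 else 0)
      = if p = (e q.1, e' q.2) then w q.1 * w' q.2 else 0 := by
    intro p
    by_cases h1 : e q.1 = p.1 <;> by_cases h2 : e' q.2 = p.2
    · rw [if_pos h1, if_pos h2, if_pos (Prod.ext h1.symm h2.symm)]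
    · rw [if_pos h1, if_neg h2, mul_zero,
        if_neg (fun h => h2 (congrArg Prod.snd h).symm)]
    · rw [if_neg h1, if_pos h2, zero_mul,
        if_neg (fun h => h1 (congrArg Prod.fst h).symm)]
    · rw [if_neg h1, if_neg h2, mul_zero,
        if_neg (fun h => h1 (congrArg Prod.fst h).symm)]
  rw [Finset.sum_congr rfl (fun p _ => key p), Finset.sum_ite_eq' (antidiagonal m)]
  simp [Finset.HasAntidiagonal.mem_antidiagonal]


lemma rep_pow4 {α : Type} (f : PowerSeries ℂ)
    (e : α → ℕ) (w : α → ℂ) (box : ℕ → Finset α)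
    (hbox : ∀ m a, e a = m → a ∈ box m) (hmono : ∀ u v : ℕ, u ≤ v → box u ⊆ box v)
    (hf : ∀ m, PowerSeries.coeff m f = ∑ a ∈ box m, if e a = m then w a else 0)
    (m : ℕ) :
    PowerSeries.coeff m (f ^ 4) =
      ∑ q ∈ box m ×ˢ (box m ×ˢ (box m ×ˢ box m)),
        if e q.1 + (e q.2.1 + (e q.2.2.1 + e q.2.2.2)) = m then
          w q.1 * (w q.2.1 * (w q.2.2.1 * w q.2.2.2)) else 0 := by
  classical
  have hbox2 : ∀ (n : ℕ) (p : α × α), e p.1 + e p.2 = n → p ∈ box n ×ˢ box n := by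
    intro n p h
    rw [Finset.mem_product]
    exact ⟨hmono _ _ (by omega) (hbox _ _ rfl), hmono _ _ (by omega) (hbox _ _ rfl)⟩
  have hmono2 : ∀ u v : ℕ, u ≤ v → box u ×ˢ box u ⊆ box v ×ˢ box v := by
    intro u v huv
    exact Finset.product_subset_product (hmono u v huv) (hmono u v huv)
  have h2 : ∀ n, PowerSeries.coeff n (f * f) =
      ∑ p ∈ box n ×ˢ box n, if e p.1 + e p.2 = n then w p.1 * w p.2 else 0 :=
    rep_mul f f e w box e w box hbox hmono hbox hmono hf hf
  have hbox3 : ∀ (n : ℕ) (p : α × (α × α)), e p.1 + (e p.2.1 + e p.2.2) = n →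
      p ∈ box n ×ˢ (box n ×ˢ box n) := by
    intro n p h
    rw [Finset.mem_product]
    exact ⟨hmono _ _ (by omega) (hbox _ _ rfl), hmono2 _ _ (by omega) (hbox2 _ _ rfl)⟩
  have hmono3 : ∀ u v : ℕ, u ≤ v →
      box u ×ˢ (box u ×ˢ box u) ⊆ box v ×ˢ (box v ×ˢ box v) := by
    intro u v huv
    exact Finset.product_subset_product (hmono u v huv) (hmono2 u v huv)
  have h3 : ∀ n, PowerSeries.coeff n (f * (f * f)) =
      ∑ p ∈ box n ×ˢ (box n ×ˢ box n),
        if e p.1 + (e p.2.1 + e p.2.2) = n then w p.1 * (w p.2.1 * w p.2.2) else 0 :=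
    rep_mul f (f * f) e w box (fun p => e p.1 + e p.2) (fun p => w p.1 * w p.2)
      (fun n => box n ×ˢ box n) hbox hmono hbox2 hmono2 hf h2
  have h4 : ∀ n, PowerSeries.coeff n (f * (f * (f * f))) =
      ∑ q ∈ box n ×ˢ (box n ×ˢ (box n ×ˢ box n)),
        if e q.1 + (e q.2.1 + (e q.2.2.1 + e q.2.2.2)) = n then
          w q.1 * (w q.2.1 * (w q.2.2.1 * w q.2.2.2)) else 0 :=
    rep_mul f (f * (f * f)) e w box (fun p => e p.1 + (e p.2.1 + e p.2.2))
      (fun p => w p.1 * (w p.2.1 * w p.2.2))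
      (fun n => box n ×ˢ (box n ×ˢ box n)) hbox hmono hbox3 hmono3 hf h3
  have : f ^ 4 = f * (f * (f * f)) := by ring
  rw [this, h4]

def eZ : ℤ → ℕ := fun n => 4 * n.natAbs ^ 2
def eS : ℕ → ℕ := fun n => (2 * n + 1) ^ 2
noncomputable def wF : ℤ → ℂ := fun n => if Even n then 1 else -1
noncomputable def boxZ : ℕ → Finset ℤ := fun m => Finset.Icc (-(m : ℤ)) (m : ℤ)
def boxN : ℕ → Finset ℕ := fun m => Finset.range (m + 1)

lemma eZ_cond (n : ℤ) (m : ℕ) : (4 * n ^ 2 = (m : ℤ)) ↔ eZ n = m := by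
  unfold eZ
  rw [← Int.natAbs_sq n]
  constructor <;> intro h <;> exact_mod_cast h

lemma hboxZ : ∀ (m : ℕ) (n : ℤ), eZ n = m → n ∈ boxZ m := by
  intro m n h
  unfold eZ at h
  have : n.natAbs ≤ 4 * n.natAbs ^ 2 := by nlinarith [sq_nonneg n.natAbs]
  simp only [boxZ, Finset.mem_Icc]
  omega

lemma hmonoZ : ∀ u v : ℕ, u ≤ v → boxZ u ⊆ boxZ v := by
  intro u v h
  simp only [boxZ]
  apply Finset.Icc_subset_Icc <;> omega

lemma hboxN : ∀ (m : ℕ) (n : ℕ), eS n = m → n ∈ boxN m := by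
  intro m n h
  unfold eS at h
  simp only [boxN, Finset.mem_range]
  nlinarith

lemma hmonoN : ∀ u v : ℕ, u ≤ v → boxN u ⊆ boxN v := by
  intro u v h
  simp only [boxN]
  exact Finset.range_subset_range.2 (by omega)

lemma repNat : ∀ m, PowerSeries.coeff m etaNat =
    ∑ n ∈ boxZ m, if eZ n = m then (1 : ℂ) else 0 := by
  intro m
  rw [etaNat, PowerSeries.coeff_mk]
  exact Finset.sum_congr rfl fun n _ => if_congr (eZ_cond n m) rfl rfl

lemma repFlat : ∀ m, PowerSeries.coeff m etaFlat =
    ∑ n ∈ boxZ m, if eZ n = m then wF n else 0 := by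
  intro m
  rw [etaFlat, PowerSeries.coeff_mk]
  exact Finset.sum_congr rfl fun n _ => if_congr (eZ_cond n m) rfl rfl

lemma repSharp : ∀ m, PowerSeries.coeff m etaSharp =
    ∑ n ∈ boxN m, if eS n = m then (1 : ℂ) else 0 := by
  intro m
  rw [etaSharp, PowerSeries.coeff_mk]
  rfl

lemma natAbs_sq' (a : ℤ) : ((a.natAbs ^ 2 : ℕ) : ℤ) = a ^ 2 := by
  exact_mod_cast Int.natAbs_sq a

lemma natAbs_le_of_sq_le {z : ℤ} {m : ℕ} (h : z ^ 2 ≤ (m : ℤ)) : z.natAbs ≤ m := by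
  have h2 : ((z.natAbs ^ 2 : ℕ) : ℤ) = z ^ 2 := natAbs_sq' z
  have h3 : z.natAbs ^ 2 ≤ m := by exact_mod_cast h2.symm ▸ h
  nlinarith

lemma eZsum {a b c d : ℤ} {m : ℕ} :
    eZ a + (eZ b + (eZ c + eZ d)) = m ↔ 4 * (a ^ 2 + b ^ 2 + c ^ 2 + d ^ 2) = (m : ℤ) := by
  unfold eZ
  rw [← natAbs_sq' a, ← natAbs_sq' b, ← natAbs_sq' c, ← natAbs_sq' d]
  constructor <;> intro h
  · have h' : 4 * (a.natAbs ^ 2 + (b.natAbs ^ 2 + (c.natAbs ^ 2 + d.natAbs ^ 2))) = m := by omega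
    push_cast [← h']; ring
  · have h' : ((4 * (a.natAbs ^ 2 + (b.natAbs ^ 2 + (c.natAbs ^ 2 + d.natAbs ^ 2))) : ℕ) : ℤ) = (m : ℤ) := by
      push_cast at h ⊢; linarith
    have h'' : 4 * (a.natAbs ^ 2 + (b.natAbs ^ 2 + (c.natAbs ^ 2 + d.natAbs ^ 2))) = m := by
      exact_mod_cast h'
    omega

lemma eSsum {y1 y2 y3 y4 m : ℕ} :
    eS y1 + (eS y2 + (eS y3 + eS y4)) = m ↔
      (2 * (y1:ℤ) + 1) ^ 2 + (2 * y2 + 1) ^ 2 + (2 * y3 + 1) ^ 2 + (2 * y4 + 1) ^ 2 = (m : ℤ) := by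
  unfold eS
  constructor <;> intro h
  · push_cast [← h]; ring
  · have h' : (((2*y1+1) ^ 2 + ((2*y2+1) ^ 2 + ((2*y3+1) ^ 2 + (2*y4+1) ^ 2)) : ℕ) : ℤ) = (m : ℤ) := by
      push_cast at h ⊢; linarith
    exact_mod_cast h'


lemma hadamard (a b c d : ℤ) :
    (a+b+c+d)^2 + (a+b-c-d)^2 + (a-b+c-d)^2 + (a-b-c+d)^2 = 4*(a^2+b^2+c^2+d^2) := by ring

def sgn (b : Bool) (w : ℤ) : ℤ := if b then w else -w
def sb (z : ℤ) : Bool := decide (0 ≤ z)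
def pick (w r : ℤ) : ℤ := if (w + r) % 4 = 0 then w else -w

lemma sgn_or (b : Bool) (w : ℤ) : sgn b w = w ∨ sgn b w = -w := by
  cases b <;> simp [sgn]

lemma pick_or (w r : ℤ) : pick w r = w ∨ pick w r = -w := by
  unfold pick; split_ifs <;> simp

lemma sgn_sb (z : ℤ) : sgn (sb z) ((z.natAbs : ℤ)) = z := by
  unfold sgn sb
  by_cases h : 0 ≤ z
  · rw [if_pos (by simpa using h)]; omega
  · rw [if_neg (by simpa using h)]; omega

lemma sb_sgn (b : Bool) (w : ℤ) (hw : 0 < w) : sb (sgn b w) = b := by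
  cases b
  · show sb (-w) = false
    simp only [sb, decide_eq_false_iff_not]
    omega
  · show sb w = true
    simp only [sb, decide_eq_true_eq]
    omega

lemma pick_natAbs (z r : ℤ) (hz : z % 2 = 1) (h4 : (z + r) % 4 = 0) :
    pick ((z.natAbs : ℤ)) r = z := by
  unfold pick; split_ifs with h <;> omega

lemma pick_mod4 (w r : ℤ) (hw : w % 2 = 1) (hr : r % 2 = 1) : (pick w r + r) % 4 = 0 := by
  unfold pick; split_ifs with h <;> omega

def fwd (q : ℤ × (ℤ × (ℤ × ℤ))) : (ℕ × (ℕ × (ℕ × ℕ))) × (Bool × Bool × Bool) :=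
  ((((q.1+q.2.1+q.2.2.1+q.2.2.2).natAbs - 1)/2,
    (((q.1+q.2.1-q.2.2.1-q.2.2.2).natAbs - 1)/2,
     (((q.1-q.2.1+q.2.2.1-q.2.2.2).natAbs - 1)/2,
      ((q.1-q.2.1-q.2.2.1+q.2.2.2).natAbs - 1)/2))),
   (sb (q.1+q.2.1-q.2.2.1-q.2.2.2),
    sb (q.1-q.2.1+q.2.2.1-q.2.2.2),
    sb (q.1-q.2.1-q.2.2.1+q.2.2.2)))

def bwd (p : (ℕ × (ℕ × (ℕ × ℕ))) × (Bool × Bool × Bool)) : ℤ × (ℤ × (ℤ × ℤ)) :=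
  let z2 : ℤ := sgn p.2.1 (2*(p.1.2.1:ℤ)+1)
  let z3 : ℤ := sgn p.2.2.1 (2*(p.1.2.2.1:ℤ)+1)
  let z4 : ℤ := sgn p.2.2.2 (2*(p.1.2.2.2:ℤ)+1)
  let z1 : ℤ := pick (2*(p.1.1:ℤ)+1) (z2 + z3 + z4)
  ((z1+z2+z3+z4)/4, ((z1+z2-z3-z4)/4, ((z1-z2+z3-z4)/4, (z1-z2-z3+z4)/4)))

lemma mem_A_iff (m : ℕ) (q : ℤ × (ℤ × (ℤ × ℤ))) :
    (q ∈ (boxZ m ×ˢ (boxZ m ×ˢ (boxZ m ×ˢ boxZ m))).filter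
       (fun q => eZ q.1 + (eZ q.2.1 + (eZ q.2.2.1 + eZ q.2.2.2)) = m ∧
         ¬ Even (q.1 + q.2.1 + q.2.2.1 + q.2.2.2))) ↔
    (4*(q.1^2 + q.2.1^2 + q.2.2.1^2 + q.2.2.2^2) = (m:ℤ) ∧
      (q.1 + q.2.1 + q.2.2.1 + q.2.2.2) % 2 = 1) := by
  obtain ⟨a, b, c, d⟩ := q
  simp only [Finset.mem_filter, Finset.mem_product, boxZ, Finset.mem_Icc, Int.not_even_iff]
  constructor
  · rintro ⟨-, hE, hp⟩
    exact ⟨eZsum.1 hE, hp⟩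
  · rintro ⟨hE, hp⟩
    have hb1 : a.natAbs ≤ m := natAbs_le_of_sq_le
      (by linarith [sq_nonneg a, sq_nonneg b, sq_nonneg c, sq_nonneg d])
    have hb2 : b.natAbs ≤ m := natAbs_le_of_sq_le
      (by linarith [sq_nonneg a, sq_nonneg b, sq_nonneg c, sq_nonneg d])
    have hb3 : c.natAbs ≤ m := natAbs_le_of_sq_le
      (by linarith [sq_nonneg a, sq_nonneg b, sq_nonneg c, sq_nonneg d])
    have hb4 : d.natAbs ≤ m := natAbs_le_of_sq_le
      (by linarith [sq_nonneg a, sq_nonneg b, sq_nonneg c, sq_nonneg d])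
    exact ⟨⟨⟨by omega, by omega⟩, ⟨by omega, by omega⟩, ⟨by omega, by omega⟩,
      by omega, by omega⟩, eZsum.2 hE, hp⟩

lemma mem_S_iff (m : ℕ) (y : ℕ × (ℕ × (ℕ × ℕ))) :
    (y ∈ (boxN m ×ˢ (boxN m ×ˢ (boxN m ×ˢ boxN m))).filter
       (fun y => eS y.1 + (eS y.2.1 + (eS y.2.2.1 + eS y.2.2.2)) = m)) ↔
    (2*(y.1:ℤ)+1)^2 + (2*(y.2.1:ℤ)+1)^2 + (2*(y.2.2.1:ℤ)+1)^2 + (2*(y.2.2.2:ℤ)+1)^2 = (m:ℤ) := by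
  obtain ⟨y1, y2, y3, y4⟩ := y
  simp only [Finset.mem_filter, Finset.mem_product, boxN, Finset.mem_range]
  constructor
  · rintro ⟨-, hE⟩
    exact eSsum.1 hE
  · intro hE
    have hE' : eS y1 + (eS y2 + (eS y3 + eS y4)) = m := eSsum.2 hE
    have h1 : eS y1 ≤ m := by omega
    have h2 : eS y2 ≤ m := by omega
    have h3 : eS y3 ≤ m := by omega
    have h4 : eS y4 ≤ m := by omega
    unfold eS at h1 h2 h3 h4
    exact ⟨⟨by nlinarith, by nlinarith, by nlinarith, by nlinarith⟩, hE'⟩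

lemma fwd_S (m : ℕ) (a b c d : ℤ) (hE : 4*(a^2+b^2+c^2+d^2) = (m:ℤ))
    (hp : (a+b+c+d) % 2 = 1) :
    (2*((((a+b+c+d).natAbs - 1)/2 : ℕ) : ℤ)+1)^2 +
    (2*((((a+b-c-d).natAbs - 1)/2 : ℕ) : ℤ)+1)^2 +
    (2*((((a-b+c-d).natAbs - 1)/2 : ℕ) : ℤ)+1)^2 +
    (2*((((a-b-c+d).natAbs - 1)/2 : ℕ) : ℤ)+1)^2 = (m:ℤ) := by
  have ho1 : (a+b+c+d) % 2 = 1 := hp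
  have ho2 : (a+b-c-d) % 2 = 1 := by omega
  have ho3 : (a-b+c-d) % 2 = 1 := by omega
  have ho4 : (a-b-c+d) % 2 = 1 := by omega
  have e1 : 2*((((a+b+c+d).natAbs - 1)/2 : ℕ) : ℤ)+1 = ((a+b+c+d).natAbs : ℤ) := by omega
  have e2 : 2*((((a+b-c-d).natAbs - 1)/2 : ℕ) : ℤ)+1 = ((a+b-c-d).natAbs : ℤ) := by omega
  have e3 : 2*((((a-b+c-d).natAbs - 1)/2 : ℕ) : ℤ)+1 = ((a-b+c-d).natAbs : ℤ) := by omega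
  have e4 : 2*((((a-b-c+d).natAbs - 1)/2 : ℕ) : ℤ)+1 = ((a-b-c+d).natAbs : ℤ) := by omega
  rw [e1, e2, e3, e4, Int.natCast_natAbs, Int.natCast_natAbs, Int.natCast_natAbs,
    Int.natCast_natAbs, sq_abs, sq_abs, sq_abs, sq_abs, hadamard]
  linarith

lemma quad (m : ℕ) (z1 z2 z3 z4 : ℤ) (ho1 : z1 % 2 = 1) (ho2 : z2 % 2 = 1)
    (ho3 : z3 % 2 = 1) (ho4 : z4 % 2 = 1) (hmod : (z1+z2+z3+z4) % 4 = 0)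
    (hsq : z1^2+z2^2+z3^2+z4^2 = (m:ℤ)) :
    4*(((z1+z2+z3+z4)/4)^2 + ((z1+z2-z3-z4)/4)^2 + ((z1-z2+z3-z4)/4)^2 +
        ((z1-z2-z3+z4)/4)^2) = (m:ℤ) ∧
    ((z1+z2+z3+z4)/4 + (z1+z2-z3-z4)/4 + (z1-z2+z3-z4)/4 + (z1-z2-z3+z4)/4) % 2 = 1 := by
  have ha1 : 4*((z1+z2+z3+z4)/4) = z1+z2+z3+z4 := by omega
  have ha2 : 4*((z1+z2-z3-z4)/4) = z1+z2-z3-z4 := by omega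
  have ha3 : 4*((z1-z2+z3-z4)/4) = z1-z2+z3-z4 := by omega
  have ha4 : 4*((z1-z2-z3+z4)/4) = z1-z2-z3+z4 := by omega
  constructor
  · have H2 := hadamard z1 z2 z3 z4
    rw [← ha1, ← ha2, ← ha3, ← ha4] at H2
    nlinarith [H2]
  · omega

lemma bwd_fwd (a b c d : ℤ) (hp : (a+b+c+d) % 2 = 1) :
    bwd (fwd (a, b, c, d)) = (a, b, c, d) := by
  have ho2 : (a+b-c-d) % 2 = 1 := by omega
  have ho3 : (a-b+c-d) % 2 = 1 := by omega
  have ho4 : (a-b-c+d) % 2 = 1 := by omega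
  simp only [fwd, bwd]
  have e1 : 2*((((a+b+c+d).natAbs - 1)/2 : ℕ) : ℤ)+1 = ((a+b+c+d).natAbs : ℤ) := by omega
  have e2 : 2*((((a+b-c-d).natAbs - 1)/2 : ℕ) : ℤ)+1 = ((a+b-c-d).natAbs : ℤ) := by omega
  have e3 : 2*((((a-b+c-d).natAbs - 1)/2 : ℕ) : ℤ)+1 = ((a-b+c-d).natAbs : ℤ) := by omega
  have e4 : 2*((((a-b-c+d).natAbs - 1)/2 : ℕ) : ℤ)+1 = ((a-b-c+d).natAbs : ℤ) := by omega
  rw [e1, e2, e3, e4, sgn_sb, sgn_sb, sgn_sb,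
    pick_natAbs (a+b+c+d) ((a+b-c-d)+(a-b+c-d)+(a-b-c+d)) hp (by omega)]
  simp only [Prod.mk.injEq]
  refine ⟨by omega, by omega, by omega, by omega⟩

lemma fwd_bwd (y1 y2 y3 y4 : ℕ) (b1 b2 b3 : Bool) :
    fwd (bwd ((y1, (y2, (y3, y4))), (b1, (b2, b3)))) = ((y1, (y2, (y3, y4))), (b1, (b2, b3))) := by
  simp only [bwd]
  set z2 := sgn b1 (2*(y2:ℤ)+1) with hz2d
  set z3 := sgn b2 (2*(y3:ℤ)+1) with hz3d
  set z4 := sgn b3 (2*(y4:ℤ)+1) with hz4d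
  set z1 := pick (2*(y1:ℤ)+1) (z2+z3+z4) with hz1d
  have hz2 : z2 = (2*(y2:ℤ)+1) ∨ z2 = -(2*(y2:ℤ)+1) := by rw [hz2d]; exact sgn_or _ _
  have hz3 : z3 = (2*(y3:ℤ)+1) ∨ z3 = -(2*(y3:ℤ)+1) := by rw [hz3d]; exact sgn_or _ _
  have hz4 : z4 = (2*(y4:ℤ)+1) ∨ z4 = -(2*(y4:ℤ)+1) := by rw [hz4d]; exact sgn_or _ _
  have hz1 : z1 = (2*(y1:ℤ)+1) ∨ z1 = -(2*(y1:ℤ)+1) := by rw [hz1d]; exact pick_or _ _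
  have ho1 : z1 % 2 = 1 := by rcases hz1 with h|h <;> omega
  have ho2 : z2 % 2 = 1 := by rcases hz2 with h|h <;> omega
  have ho3 : z3 % 2 = 1 := by rcases hz3 with h|h <;> omega
  have ho4 : z4 % 2 = 1 := by rcases hz4 with h|h <;> omega
  have hmod : (z1+z2+z3+z4) % 4 = 0 := by
    have := pick_mod4 (2*(y1:ℤ)+1) (z2+z3+z4) (by omega) (by omega)
    rw [hz1d]
    omega
  have r1 : (z1+z2+z3+z4)/4 + (z1+z2-z3-z4)/4 + (z1-z2+z3-z4)/4 + (z1-z2-z3+z4)/4 = z1 := by omega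
  have r2 : (z1+z2+z3+z4)/4 + (z1+z2-z3-z4)/4 - (z1-z2+z3-z4)/4 - (z1-z2-z3+z4)/4 = z2 := by omega
  have r3 : (z1+z2+z3+z4)/4 - (z1+z2-z3-z4)/4 + (z1-z2+z3-z4)/4 - (z1-z2-z3+z4)/4 = z3 := by omega
  have r4 : (z1+z2+z3+z4)/4 - (z1+z2-z3-z4)/4 - (z1-z2+z3-z4)/4 + (z1-z2-z3+z4)/4 = z4 := by omega
  simp only [fwd]
  rw [r1, r2, r3, r4]
  simp only [Prod.mk.injEq]
  refine ⟨⟨?_, ?_, ?_, ?_⟩, ?_, ?_, ?_⟩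
  · rcases hz1 with h|h <;> omega
  · rcases hz2 with h|h <;> omega
  · rcases hz3 with h|h <;> omega
  · rcases hz4 with h|h <;> omega
  · rw [hz2d]; exact sb_sgn b1 _ (by omega)
  · rw [hz3d]; exact sb_sgn b2 _ (by omega)
  · rw [hz4d]; exact sb_sgn b3 _ (by omega)


lemma card_eq (m : ℕ) :
    ((boxZ m ×ˢ (boxZ m ×ˢ (boxZ m ×ˢ boxZ m))).filter
       (fun q => eZ q.1 + (eZ q.2.1 + (eZ q.2.2.1 + eZ q.2.2.2)) = m ∧
         ¬ Even (q.1 + q.2.1 + q.2.2.1 + q.2.2.2))).card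
    = 8 * ((boxN m ×ˢ (boxN m ×ˢ (boxN m ×ˢ boxN m))).filter
       (fun y => eS y.1 + (eS y.2.1 + (eS y.2.2.1 + eS y.2.2.2)) = m)).card := by
  classical
  have key : ((boxZ m ×ˢ (boxZ m ×ˢ (boxZ m ×ˢ boxZ m))).filter
       (fun q => eZ q.1 + (eZ q.2.1 + (eZ q.2.2.1 + eZ q.2.2.2)) = m ∧
         ¬ Even (q.1 + q.2.1 + q.2.2.1 + q.2.2.2))).card =
      (((boxN m ×ˢ (boxN m ×ˢ (boxN m ×ˢ boxN m))).filter
       (fun y => eS y.1 + (eS y.2.1 + (eS y.2.2.1 + eS y.2.2.2)) = m)) ×ˢ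
        (Finset.univ : Finset (Bool × Bool × Bool))).card := by
    apply Finset.card_bij' (fun q _ => fwd q) (fun p _ => bwd p)
    · rintro ⟨a, b, c, d⟩ hq
      rw [mem_A_iff] at hq
      rw [Finset.mem_product]
      refine ⟨?_, Finset.mem_univ _⟩
      rw [mem_S_iff]
      exact fwd_S m a b c d hq.1 hq.2
    · rintro ⟨⟨y1, y2, y3, y4⟩, ⟨b1, b2, b3⟩⟩ hp
      rw [Finset.mem_product] at hp
      obtain ⟨hp1, -⟩ := hp
      rw [mem_S_iff] at hp1
      simp only at hp1
      rw [mem_A_iff]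
      simp only [bwd]
      set z2 := sgn b1 (2*(y2:ℤ)+1) with hz2d
      set z3 := sgn b2 (2*(y3:ℤ)+1) with hz3d
      set z4 := sgn b3 (2*(y4:ℤ)+1) with hz4d
      set z1 := pick (2*(y1:ℤ)+1) (z2+z3+z4) with hz1d
      have hz2 : z2 = (2*(y2:ℤ)+1) ∨ z2 = -(2*(y2:ℤ)+1) := by rw [hz2d]; exact sgn_or _ _
      have hz3 : z3 = (2*(y3:ℤ)+1) ∨ z3 = -(2*(y3:ℤ)+1) := by rw [hz3d]; exact sgn_or _ _
      have hz4 : z4 = (2*(y4:ℤ)+1) ∨ z4 = -(2*(y4:ℤ)+1) := by rw [hz4d]; exact sgn_or _ _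
      have hz1 : z1 = (2*(y1:ℤ)+1) ∨ z1 = -(2*(y1:ℤ)+1) := by rw [hz1d]; exact pick_or _ _
      have ho1 : z1 % 2 = 1 := by rcases hz1 with h|h <;> omega
      have ho2 : z2 % 2 = 1 := by rcases hz2 with h|h <;> omega
      have ho3 : z3 % 2 = 1 := by rcases hz3 with h|h <;> omega
      have ho4 : z4 % 2 = 1 := by rcases hz4 with h|h <;> omega
      have hmod : (z1+z2+z3+z4) % 4 = 0 := by
        have := pick_mod4 (2*(y1:ℤ)+1) (z2+z3+z4) (by omega) (by omega)
        rw [hz1d]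
        omega
      have hsumsq : z1^2+z2^2+z3^2+z4^2 = (m:ℤ) := by
        have s1 : z1^2 = (2*(y1:ℤ)+1)^2 := by rcases hz1 with h|h <;> rw [h] <;> ring
        have s2 : z2^2 = (2*(y2:ℤ)+1)^2 := by rcases hz2 with h|h <;> rw [h] <;> ring
        have s3 : z3^2 = (2*(y3:ℤ)+1)^2 := by rcases hz3 with h|h <;> rw [h] <;> ring
        have s4 : z4^2 = (2*(y4:ℤ)+1)^2 := by rcases hz4 with h|h <;> rw [h] <;> ring
        rw [s1, s2, s3, s4]; linarith
      exact quad m z1 z2 z3 z4 ho1 ho2 ho3 ho4 hmod hsumsq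
    · rintro ⟨a, b, c, d⟩ hq
      rw [mem_A_iff] at hq
      exact bwd_fwd a b c d hq.2
    · rintro ⟨⟨y1, y2, y3, y4⟩, ⟨b1, b2, b3⟩⟩ _
      exact fwd_bwd y1 y2 y3 y4 b1 b2 b3
  rw [key, Finset.card_product]
  simp [mul_comm]

lemma wF_prod (a b c d : ℤ) :
    wF a * (wF b * (wF c * wF d)) = if Even (a + b + c + d) then (1:ℂ) else -1 := by
  unfold wF
  by_cases ha : Even a <;> by_cases hb : Even b <;> by_cases hc : Even c <;>
    by_cases hd : Even d <;>
    simp [ha, hb, hc, hd, parity_simps]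

/-- Jacobi's identity: (η♮)⁴ − (η♭)⁴ = 16 (η♯)⁴. -/
theorem etaNat_pow_four_sub_etaFlat_pow_four :
    etaNat ^ 4 - etaFlat ^ 4 = 16 * etaSharp ^ 4 := by
  classical
  ext m
  rw [map_sub, rep_pow4 etaNat eZ (fun _ => (1:ℂ)) boxZ hboxZ hmonoZ repNat m,
    rep_pow4 etaFlat eZ wF boxZ hboxZ hmonoZ repFlat m,
    ← map_ofNat (PowerSeries.C (R := ℂ)) 16, PowerSeries.coeff_C_mul,
    rep_pow4 etaSharp eS (fun _ => (1:ℂ)) boxN hboxN hmonoN repSharp m,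
    ← Finset.sum_sub_distrib]
  have hterm : ∀ q ∈ boxZ m ×ˢ (boxZ m ×ˢ (boxZ m ×ˢ boxZ m)),
      ((if eZ q.1 + (eZ q.2.1 + (eZ q.2.2.1 + eZ q.2.2.2)) = m then
          (1:ℂ) * (1 * (1 * 1)) else 0) -
       (if eZ q.1 + (eZ q.2.1 + (eZ q.2.2.1 + eZ q.2.2.2)) = m then
          wF q.1 * (wF q.2.1 * (wF q.2.2.1 * wF q.2.2.2)) else 0)) =
      (if eZ q.1 + (eZ q.2.1 + (eZ q.2.2.1 + eZ q.2.2.2)) = m ∧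
          ¬ Even (q.1 + q.2.1 + q.2.2.1 + q.2.2.2) then (2:ℂ) else 0) := by
    intro q _
    rw [wF_prod]
    by_cases hE : eZ q.1 + (eZ q.2.1 + (eZ q.2.2.1 + eZ q.2.2.2)) = m <;>
      by_cases hP : Even (q.1 + q.2.1 + q.2.2.1 + q.2.2.2) <;>
      simp [hE, hP] <;> norm_num
  rw [Finset.sum_congr rfl hterm]
  have h2 : ∀ y ∈ boxN m ×ˢ (boxN m ×ˢ (boxN m ×ˢ boxN m)),
      (if eS y.1 + (eS y.2.1 + (eS y.2.2.1 + eS y.2.2.2)) = m then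
        (1:ℂ) * (1 * (1 * 1)) else 0) =
      (if eS y.1 + (eS y.2.1 + (eS y.2.2.1 + eS y.2.2.2)) = m then (1:ℂ) else 0) := by
    intro y _
    norm_num
  rw [Finset.sum_congr rfl h2, ← Finset.sum_filter, ← Finset.sum_filter,
    Finset.sum_const, Finset.sum_const, card_eq m]
  push_cast
  ring
end
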